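/- arXiv:1110.0162 — 8 statements merged into one kernel-verified Lean document; each statement's English description precedes it below -/
import Mathlib

section
/- For every l ≥ 2, the graph Δ on vertex set [l] with edge set {{1,j} : j = 2,...,l} ∪ {{j,j+1} : j = 2,...,l−1} belongs to V_2(l) and has exactly 2l − 3 edges; hence the bound |F(Δ)| ≤ 2l − 3 for graphs in V_2(l) is attained. -/
/-- The facets of positive dimension of a simplicial complex `Δ ⊆ 2^{[l]}`:
maximal faces with at least two vertices. -/
def facets {l : ℕ} (Δ : Finset (Finset (Fin l))) : Finset (Finset (Fin l)) :=
  Δ.filter (fun F => 2 ≤ F.card ∧ ∀ G ∈ Δ, F ⊆ G → F = G)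

/-- Membership in `V₂(l)`: a simplicial complex on `[l]` containing all singletons,
whose positive-dimensional facets pairwise share at most one vertex, and such that
`2(|I|-1) > Σ_{F ∈ F(Δ|_I)} dim F` for all `I ⊆ [l]` with `|I| > 1`. -/
def memV2 (l : ℕ) (Δ : Finset (Finset (Fin l))) : Prop :=
  (∀ F ∈ Δ, ∀ F' ⊆ F, F' ∈ Δ) ∧ (∀ i : Fin l, ({i} : Finset (Fin l)) ∈ Δ) ∧
  (∀ F ∈ facets Δ, ∀ G ∈ facets Δ, F ≠ G → (F ∩ G).card ≤ 1) ∧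
  (∀ I : Finset (Fin l), 1 < I.card →
    ∑ F ∈ facets (Δ.image (· ∩ I)), (F.card - 1) < 2 * (I.card - 1))

/-- The graph on `[l]` (0-indexed) with edges `{0,j}` for `j = 1,…,l-1` and `{j,j+1}`
for `j = 1,…,l-2`, i.e. the complex consisting of these edges and all singletons. -/
def pathStarGraph (l : ℕ) : Finset (Finset (Fin l)) :=
  Finset.univ.filter (fun F : Finset (Fin l) =>
    F.card ≤ 1 ∨ ∃ i j : Fin l, F = {i, j} ∧
      (((i : ℕ) = 0 ∧ 1 ≤ (j : ℕ)) ∨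
        (1 ≤ (i : ℕ) ∧ (j : ℕ) = (i : ℕ) + 1 ∧ (j : ℕ) ≤ l - 1)))

/-!
All faces of `pathStarGraph l` have at most two vertices, so the facets of `Δ|_I` are the edges
inside `I` and the defining inequality of `V₂` says that `I` spans at most `2|I| - 3` edges.
Each vertex `v` is the top vertex of at most two edges, `{0, v}` and `{v - 1, v}`; adding the
vertices of `I` in increasing order, starting from its two smallest ones (which span at most one
edge), gives the bound.
-/

open Finset

section GraphComplex

variable {l : ℕ} {Δ : Finset (Finset (Fin l))}

theorem facets_eq_filter_card_eq_two (hΔ : ∀ F ∈ Δ, #F ≤ 2) :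
    facets Δ = Δ.filter (#· = 2) := by
  ext F
  simp only [facets, mem_filter]
  constructor
  · rintro ⟨hF, h2, -⟩
    exact ⟨hF, le_antisymm (hΔ F hF) h2⟩
  · rintro ⟨hF, h2⟩
    exact ⟨hF, h2.ge, fun G hG hFG => eq_of_subset_of_card_le hFG (h2 ▸ hΔ G hG)⟩

theorem facets_image_inter_eq (hΔ : ∀ F ∈ Δ, #F ≤ 2) (I : Finset (Fin l)) :
    facets (Δ.image (· ∩ I)) = (Δ.filter (#· = 2)).filter (· ⊆ I) := by
  have hΔI : ∀ F ∈ Δ.image (· ∩ I), #F ≤ 2 := by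
    simp only [mem_image, forall_exists_index, and_imp, forall_apply_eq_imp_iff₂]
    exact fun F hF => (card_le_card inter_subset_left).trans (hΔ F hF)
  rw [facets_eq_filter_card_eq_two hΔI]
  ext F
  simp only [mem_filter, mem_image]
  constructor
  · rintro ⟨⟨G, hG, rfl⟩, h2⟩
    have hGI : G ∩ I = G := eq_of_subset_of_card_le inter_subset_left (h2 ▸ hΔ G hG)
    rw [hGI] at h2 ⊢
    exact ⟨⟨hG, h2⟩, inter_eq_left.mp hGI⟩
  · rintro ⟨⟨hF, h2⟩, hFI⟩
    exact ⟨⟨F, hF, inter_eq_left.mpr hFI⟩, h2⟩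

theorem memV2_of_card_le_two (hsmall : ∀ F : Finset (Fin l), #F ≤ 1 → F ∈ Δ)
    (hΔ : ∀ F ∈ Δ, #F ≤ 2)
    (hsparse : ∀ I : Finset (Fin l), 1 < #I →
      #((Δ.filter (#· = 2)).filter (· ⊆ I)) < 2 * (#I - 1)) :
    memV2 l Δ := by
  refine ⟨fun F hF F' hF'F => ?_, fun i => hsmall _ (card_singleton i).le,
    fun F hF G hG hFG => ?_, fun I hI => ?_⟩
  · by_cases h : #F' ≤ 1
    · exact hsmall F' h
    · rwa [eq_of_subset_of_card_le hF'F (by have := hΔ F hF; omega)]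
  · rw [facets_eq_filter_card_eq_two hΔ, mem_filter] at hF hG
    by_contra! h
    have hFG' : F ∩ G = F := eq_of_subset_of_card_le inter_subset_left (by omega)
    exact hFG (eq_of_subset_of_card_le (inter_eq_left.mp hFG') (by omega))
  · have hdim : ∀ F ∈ (Δ.filter (#· = 2)).filter (· ⊆ I), #F - 1 = 1 := by
      intro F hF
      simp only [mem_filter] at hF
      omega
    rw [facets_image_inter_eq hΔ, sum_congr rfl hdim, sum_const, smul_eq_mul, mul_one]
    exact hsparse I hI

end GraphComplex

section Degeneracy

variable {α : Type*} [LinearOrder α]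

def edgesWithTop (E : Finset (Finset α)) (a : α) : Finset (Finset α) :=
  E.filter fun e => a ∈ e ∧ ∀ b ∈ e, b ≤ a

theorem card_filter_subset_add_three_le {E : Finset (Finset α)} (hE : ∀ e ∈ E, 2 ≤ #e)
    (htop : ∀ a, #(edgesWithTop E a) ≤ 2) {I : Finset α} (hI : 2 ≤ #I) :
    #(E.filter (· ⊆ I)) + 3 ≤ 2 * #I := by
  induction I using Finset.induction_on_max with
  | empty => simp at hI
  | insert a s hlt ih =>
    have ha : a ∉ s := fun h => lt_irrefl a (hlt a h)
    rw [card_insert_of_notMem ha] at hI ⊢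
    rcases (show #s = 1 ∨ 2 ≤ #s by omega) with hs | hs
    · have hone : E.filter (· ⊆ insert a s) ⊆ {insert a s} := by
        intro e he
        rw [mem_filter] at he
        rw [mem_singleton]
        exact eq_of_subset_of_card_le he.2 (by rw [card_insert_of_notMem ha]; have := hE e he.1; omega)
      have := card_le_card hone
      rw [card_singleton] at this
      omega
    · have hsplit : E.filter (· ⊆ insert a s) ⊆ E.filter (· ⊆ s) ∪ edgesWithTop E a := by
        intro e he
        rw [mem_filter] at he
        rw [mem_union, edgesWithTop, mem_filter, mem_filter]
        by_cases hae : a ∈ e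
        · refine Or.inr ⟨he.1, hae, fun b hb => ?_⟩
          rcases mem_insert.mp (he.2 hb) with rfl | hbs
          · exact le_rfl
          · exact (hlt b hbs).le
        · exact Or.inl ⟨he.1, (subset_insert_iff_of_notMem hae).mp he.2⟩
      have := (card_le_card hsplit).trans (card_union_le _ _)
      have := ih hs
      have := htop a
      omega

end Degeneracy

section PathStar

variable {l : ℕ}

def pathStarEdge (l : ℕ) : Fin (l - 1) ⊕ Fin (l - 2) → Finset (Fin l)
  | .inl ⟨k, hk⟩ => {⟨0, by omega⟩, ⟨k + 1, by omega⟩}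
  | .inr ⟨k, hk⟩ => {⟨k + 1, by omega⟩, ⟨k + 2, by omega⟩}

theorem mem_pathStarGraph {F : Finset (Fin l)} : F ∈ pathStarGraph l ↔
    #F ≤ 1 ∨ ∃ i j : Fin l, F = {i, j} ∧
      (((i : ℕ) = 0 ∧ 1 ≤ (j : ℕ)) ∨ (1 ≤ (i : ℕ) ∧ (j : ℕ) = (i : ℕ) + 1 ∧ (j : ℕ) ≤ l - 1)) := by
  simp [pathStarGraph]

theorem card_le_two_of_mem_pathStarGraph {F : Finset (Fin l)} (hF : F ∈ pathStarGraph l) :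
    #F ≤ 2 := by
  obtain h | ⟨i, j, rfl, -⟩ := mem_pathStarGraph.mp hF
  · omega
  · exact card_le_two

theorem pathStarEdge_injective (l : ℕ) : Function.Injective (pathStarEdge l) := by
  rintro (⟨k, hk⟩ | ⟨k, hk⟩) (⟨k', hk'⟩ | ⟨k', hk'⟩) h <;>
    simp only [pathStarEdge, Finset.ext_iff, mem_insert, mem_singleton, Fin.ext_iff] at h <;>
    have h0 := h ⟨0, by omega⟩ <;> have h1 := h ⟨k + 1, by omega⟩ <;>
    have h2 := h ⟨k' + 1, by omega⟩ <;>
    grind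

theorem filter_card_eq_two_pathStarGraph (l : ℕ) :
    (pathStarGraph l).filter (#· = 2) = univ.image (pathStarEdge l) := by
  ext F
  simp only [mem_filter, mem_image, mem_univ, true_and, mem_pathStarGraph]
  constructor
  · rintro ⟨h | ⟨i, j, rfl, ⟨hi, hj⟩ | ⟨hi, hj, hjl⟩⟩, h2⟩
    · omega
    · refine ⟨.inl ⟨j - 1, by omega⟩, ?_⟩
      simp only [pathStarEdge]
      congr 2 <;> grind
    · refine ⟨.inr ⟨i - 1, by omega⟩, ?_⟩
      simp only [pathStarEdge]
      congr 2 <;> grind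
  · rintro ⟨⟨k, hk⟩ | ⟨k, hk⟩, rfl⟩
    · exact ⟨Or.inr ⟨_, _, rfl, Or.inl ⟨rfl, by simp⟩⟩, card_pair (by simp [Fin.ext_iff])⟩
    · exact ⟨Or.inr ⟨_, _, rfl, Or.inr ⟨by simp, by simp, by simp; omega⟩⟩,
        card_pair (by simp [Fin.ext_iff])⟩

theorem card_edgesWithTop_pathStarEdge_le (a : Fin l) :
    #(edgesWithTop (univ.image (pathStarEdge l)) a) ≤ 2 := by
  set S := univ.filter fun b : Fin l => (b : ℕ) = 0 ∨ (b : ℕ) + 1 = a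
  have hsub : edgesWithTop (univ.image (pathStarEdge l)) a ⊆ S.image ({·, a}) := by
    intro e he
    simp only [edgesWithTop, mem_filter, mem_image, mem_univ, true_and] at he
    obtain ⟨⟨⟨k, hk⟩ | ⟨k, hk⟩, rfl⟩, hae, htop⟩ := he
    · obtain rfl : a = ⟨k + 1, by omega⟩ := by
        simp only [pathStarEdge, mem_insert, mem_singleton, forall_eq_or_imp, forall_eq] at hae htop
        grind
      exact mem_image.mpr ⟨⟨0, by omega⟩, by simp [S], rfl⟩
    · obtain rfl : a = ⟨k + 2, by omega⟩ := by
        simp only [pathStarEdge, mem_insert, mem_singleton, forall_eq_or_imp, forall_eq] at hae htop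
        grind
      exact mem_image.mpr ⟨⟨k + 1, by omega⟩, by simp [S], rfl⟩
  have hS : #S ≤ 2 := by
    calc #S ≤ #({0, (a : ℕ) - 1} : Finset ℕ) := by
          refine card_le_card_of_injOn Fin.val (fun b hb => ?_) Fin.val_injective.injOn
          simp only [S, coe_filter, mem_univ, true_and, Set.mem_ofPred_eq] at hb
          simp only [coe_insert, coe_singleton, Set.mem_insert_iff, Set.mem_singleton_iff]
          omega
      _ ≤ 2 := card_le_two
  exact (card_le_card hsub).trans (card_image_le.trans hS)

end PathStar

theorem stmt9_general (l : ℕ) :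
    memV2 l (pathStarGraph l) ∧
    ((pathStarGraph l).filter (fun F => F.card = 2)).card = 2 * l - 3 := by
  have hedges := filter_card_eq_two_pathStarGraph l
  refine ⟨memV2_of_card_le_two (fun F hF => mem_pathStarGraph.mpr (Or.inl hF))
    (fun F => card_le_two_of_mem_pathStarGraph) (fun I hI => ?_), ?_⟩
  · have := card_filter_subset_add_three_le (E := univ.image (pathStarEdge l))
      (fun e he => by rw [← hedges, mem_filter] at he; omega) card_edgesWithTop_pathStarEdge_le hI
    rw [hedges]
    omega
  · rw [hedges, card_image_of_injective _ (pathStarEdge_injective l), card_univ,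
      Fintype.card_sum, Fintype.card_fin, Fintype.card_fin]
    omega

/-- For `l ≥ 2`, the graph with edges `{1,j}` (`j = 2,…,l`) and `{j,j+1}`
(`j = 2,…,l-1`) belongs to `V₂(l)` and has exactly `2l - 3` edges, so the bound
`|F(Δ)| ≤ 2l - 3` for graphs in `V₂(l)` is attained. -/
theorem stmt9 (l : ℕ) (hl : 2 ≤ l) :
    memV2 l (pathStarGraph l) ∧
    ((pathStarGraph l).filter (fun F => F.card = 2)).card = 2 * l - 3 :=
  stmt9_general l
end

section
/- The maximum of |F(Δ)| over all Δ ∈ V_2(l) equals 2l − 3 (for l ≥ 2); moreover the maximum is attained by a graph, since replacing any facet {v_1,...,v_m} of a complex Δ ∈ V_2(l) by the path edges {v_i, v_{i+1}} (i = 1,...,m−1) yields a complex Δ' ∈ V_2(l) with |F(Δ)| ≤ |F(Δ')|. -/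
/-- The complex obtained from `Δ` by replacing the facet `F = {v_1,…,v_m}` by the path
edges `{v_i, v_{i+1}}` (`i = 1,…,m-1`): the down-closure of the remaining positive
facets and the path edges, together with all faces with at most one vertex. -/
def replaceByPath {l m : ℕ} (Δ : Finset (Finset (Fin l))) (F : Finset (Fin l))
    (v : Fin m → Fin l) : Finset (Finset (Fin l)) :=
  (((facets Δ).erase F ∪
      Finset.univ.filter (fun G : Finset (Fin l) =>
        ∃ i j : Fin m, (j : ℕ) = (i : ℕ) + 1 ∧ G = {v i, v j})).biUnion
    Finset.powerset) ∪
  Finset.univ.filter (fun G : Finset (Fin l) => G.card ≤ 1)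

namespace Stmt10
variable {l : ℕ}

lemma mem_facets' {Δ : Finset (Finset (Fin l))} {F : Finset (Fin l)} :
    F ∈ facets Δ ↔ F ∈ Δ ∧ 2 ≤ F.card ∧ ∀ G ∈ Δ, F ⊆ G → F = G := by
  simp [facets]

lemma card2_inter {α : Type*} [DecidableEq α] {A B : Finset α}
    (hA : A.card = 2) (hB : B.card = 2) (hne : A ≠ B) : (A ∩ B).card ≤ 1 := by
  by_contra h
  push_neg at h
  have h1 : A ∩ B = A := Finset.eq_of_subset_of_card_le Finset.inter_subset_left (by omega)
  have h2 : A ∩ B = B := Finset.eq_of_subset_of_card_le Finset.inter_subset_right (by omega)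
  exact hne (h1 ▸ h2)

def IsEdge {l : ℕ} (F : Finset (Fin l)) : Prop :=
  ∃ a b : Fin l, ((b : ℕ) = a + 1 ∨ (b : ℕ) = a + 2) ∧ F = {a, b}

instance : DecidablePred (IsEdge (l := l)) := fun _ => by unfold IsEdge; infer_instance

def ex (l : ℕ) : Finset (Finset (Fin l)) :=
  Finset.univ.filter (fun G => G.card ≤ 1 ∨ IsEdge G)

lemma edge_ne' {a b : Fin l} (hab : (b : ℕ) = a + 1 ∨ (b : ℕ) = a + 2) : a ≠ b := by
  intro h'; subst h'; omega

lemma edge_card {F : Finset (Fin l)} (h : IsEdge F) : F.card = 2 := by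
  obtain ⟨a, b, hab, rfl⟩ := h
  exact Finset.card_pair (edge_ne' hab)

def esum (G : Finset (Fin l)) : ℕ := ∑ x ∈ G, (x : ℕ)

lemma esum_edge {a b : Fin l} (hne : a ≠ b) : esum ({a, b} : Finset (Fin l)) = a + b := by
  rw [esum, Finset.sum_pair hne]

lemma esum_inj {F G : Finset (Fin l)} (hF : IsEdge F) (hG : IsEdge G)
    (h : esum F = esum G) : F = G := by
  obtain ⟨a, b, hab, rfl⟩ := hF
  obtain ⟨c, d, hcd, rfl⟩ := hG
  rw [esum_edge (edge_ne' hab), esum_edge (edge_ne' hcd)] at h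
  have h1 : a = c := Fin.ext (by omega)
  have h2 : b = d := Fin.ext (by omega)
  rw [h1, h2]

lemma facets_ex {F : Finset (Fin l)} : F ∈ facets (ex l) ↔ IsEdge F := by
  constructor
  · intro h
    obtain ⟨hmem, h2, _⟩ := mem_facets'.1 h
    rcases (Finset.mem_filter.1 hmem).2 with h1 | h1
    · omega
    · exact h1
  · intro h
    refine mem_facets'.2 ⟨Finset.mem_filter.2 ⟨Finset.mem_univ _, Or.inr h⟩, by rw [edge_card h], ?_⟩
    intro G hG hFG
    rcases (Finset.mem_filter.1 hG).2 with h1 | h1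
    · have := Finset.card_le_card hFG; rw [edge_card h] at this; omega
    · exact Finset.eq_of_subset_of_card_le hFG (by rw [edge_card h, edge_card h1])


lemma card_facets_ex (hl : 2 ≤ l) : (facets (ex l)).card = 2 * l - 3 := by
  have hinj : Set.InjOn esum ((facets (ex l) : Finset (Finset (Fin l))) : Set (Finset (Fin l))) := by
    intro F hF G hG h
    exact esum_inj (facets_ex.1 (Finset.mem_coe.1 hF)) (facets_ex.1 (Finset.mem_coe.1 hG)) h
  rw [← Finset.card_image_of_injOn hinj]
  have himg : (facets (ex l)).image esum = Finset.Icc 1 (2 * l - 3) := by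
    ext s
    simp only [Finset.mem_image, Finset.mem_Icc]
    constructor
    · rintro ⟨F, hF, rfl⟩
      obtain ⟨a, b, hab, rfl⟩ := facets_ex.1 hF
      rw [esum_edge (edge_ne' hab)]
      have := b.isLt
      omega
    · rintro ⟨h1, h2⟩
      rcases Nat.even_or_odd s with he | ho
      · obtain ⟨a, rfl⟩ := he
        have ha : a - 1 < l := by omega
        have hb : a + 1 < l := by omega
        refine ⟨{⟨a - 1, ha⟩, ⟨a + 1, hb⟩}, facets_ex.2 ⟨_, _, Or.inr (by simp; omega), rfl⟩, ?_⟩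
        rw [esum_edge (edge_ne' (b := (⟨a+1,hb⟩ : Fin l)) (Or.inr (by simp; omega)))]
        simp; omega
      · obtain ⟨a, rfl⟩ := ho
        have ha : a < l := by omega
        have hb : a + 1 < l := by omega
        refine ⟨{⟨a, ha⟩, ⟨a + 1, hb⟩}, facets_ex.2 ⟨_, _, Or.inl (by simp), rfl⟩, ?_⟩
        rw [esum_edge (edge_ne' (b := (⟨a+1,hb⟩ : Fin l)) (Or.inl (by simp)))]
        simp; omega
  rw [himg, Nat.card_Icc]
  omega


lemma facets_res_ex {I F : Finset (Fin l)} :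
    F ∈ facets ((ex l).image (· ∩ I)) ↔ IsEdge F ∧ F ⊆ I := by
  constructor
  · intro h
    obtain ⟨hmem, h2, _⟩ := mem_facets'.1 h
    obtain ⟨H, hH, rfl⟩ := Finset.mem_image.1 hmem
    rcases (Finset.mem_filter.1 hH).2 with h1 | h1
    · have := Finset.card_le_card (Finset.inter_subset_left (s₁ := H) (s₂ := I)); omega
    · have hHI : H ∩ I = H := Finset.eq_of_subset_of_card_le Finset.inter_subset_left
        (by rw [edge_card h1]; omega)
      rw [hHI]
      exact ⟨h1, by rw [← hHI]; exact Finset.inter_subset_right⟩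
  · rintro ⟨he, hsub⟩
    refine mem_facets'.2 ⟨Finset.mem_image.2 ⟨F, Finset.mem_filter.2 ⟨Finset.mem_univ _, Or.inr he⟩,
      Finset.inter_eq_left.2 hsub⟩, by rw [edge_card he], ?_⟩
    rintro G hG hFG
    obtain ⟨H, hH, rfl⟩ := Finset.mem_image.1 hG
    rcases (Finset.mem_filter.1 hH).2 with h1 | h1
    · have := Finset.card_le_card (hFG.trans (Finset.inter_subset_left (s₁ := H) (s₂ := I)))
      rw [edge_card he] at this; omega
    · have hFH : F = H := Finset.eq_of_subset_of_card_le
        (hFG.trans Finset.inter_subset_left) (by rw [edge_card he, edge_card h1])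
      exact subset_antisymm hFG (Finset.inter_subset_left.trans (le_of_eq hFH.symm))

lemma count_le (I : Finset (Fin l)) :
    (Finset.univ.filter fun F : Finset (Fin l) => IsEdge F ∧ F ⊆ I).card ≤ 2 * I.card - 3 := by
  induction I using Finset.strongInduction with
  | _ I ih =>
    rcases le_or_gt I.card 1 with h1 | h1
    · have : (Finset.univ.filter fun F : Finset (Fin l) => IsEdge F ∧ F ⊆ I) = ∅ := by
        rw [Finset.filter_eq_empty_iff]
        rintro F _ ⟨he, hsub⟩
        have := Finset.card_le_card hsub
        rw [edge_card he] at this; omega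
      rw [this]; simp
    rcases le_or_gt I.card 2 with h2 | h2
    · have hsub : (Finset.univ.filter fun F : Finset (Fin l) => IsEdge F ∧ F ⊆ I) ⊆ {I} := by
        rintro F hF
        rw [Finset.mem_filter] at hF
        rw [Finset.mem_singleton]
        exact Finset.eq_of_subset_of_card_le hF.2.2 (by rw [edge_card hF.2.1]; omega)
      have := Finset.card_le_card hsub
      simp at this; omega
    · have hne : I.Nonempty := Finset.card_pos.1 (by omega)
      set v := I.max' hne with hv
      have hvI : v ∈ I := I.max'_mem hne
      set A := Finset.univ.filter fun F : Finset (Fin l) => IsEdge F ∧ F ⊆ I with hA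
      set A' := Finset.univ.filter fun F : Finset (Fin l) => IsEdge F ∧ F ⊆ I.erase v with hA'
      set B := A.filter (v ∈ ·) with hB
      have hsplit : A ⊆ A' ∪ B := by
        intro F hF
        rw [Finset.mem_union]
        rw [hA, Finset.mem_filter] at hF
        by_cases hvF : v ∈ F
        · exact Or.inr (Finset.mem_filter.2 ⟨by rw [hA, Finset.mem_filter]; exact hF, hvF⟩)
        · refine Or.inl (Finset.mem_filter.2 ⟨Finset.mem_univ _, hF.2.1, ?_⟩)
          intro x hx
          exact Finset.mem_erase.2 ⟨fun h => hvF (h ▸ hx), hF.2.2 hx⟩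
      have hBcard : B.card ≤ 2 := by
        have hmap : ∀ F ∈ B, esum F ∈ ({2 * (v : ℕ) - 1, 2 * (v : ℕ) - 2} : Finset ℕ) := by
          intro F hF
          rw [hB, Finset.mem_filter, hA, Finset.mem_filter] at hF
          obtain ⟨⟨_, he, hsub⟩, hvF⟩ := hF
          obtain ⟨a, b, hab, rfl⟩ := he
          have hbv : b = v := by
            rcases Finset.mem_insert.1 hvF with h | h
            · exfalso
              have hbI : b ∈ I := hsub (by simp)
              have := I.le_max' b hbI
              rw [← hv, h] at this
              rw [Fin.le_def] at this
              omega
            · exact (Finset.mem_singleton.1 h).symm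
          rw [esum_edge (edge_ne' hab)]
          subst hbv
          simp only [Finset.mem_insert, Finset.mem_singleton]
          omega
        have hinj : Set.InjOn esum ((B : Finset (Finset (Fin l))) : Set (Finset (Fin l))) := by
          intro F hF G hG h
          rw [Finset.mem_coe, hB, Finset.mem_filter, hA, Finset.mem_filter] at hF hG
          exact esum_inj hF.1.2.1 hG.1.2.1 h
        calc B.card ≤ ({2 * (v : ℕ) - 1, 2 * (v : ℕ) - 2} : Finset ℕ).card :=
              Finset.card_le_card_of_injOn esum hmap hinj
          _ ≤ 2 := (Finset.card_insert_le _ _).trans (by simp)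
      have hIH := ih (I.erase v) (Finset.erase_ssubset hvI)
      rw [← hA'] at hIH
      have hcard : (I.erase v).card = I.card - 1 := Finset.card_erase_of_mem hvI
      have hc1 := Finset.card_le_card hsplit
      have hc2 := Finset.card_union_le A' B
      rw [hcard] at hIH
      omega

lemma memV2_ex (hl : 2 ≤ l) : memV2 l (ex l) := by
  refine ⟨?_, ?_, ?_, ?_⟩
  · rintro F hF F' hF'
    rw [ex, Finset.mem_filter] at hF ⊢
    refine ⟨Finset.mem_univ _, ?_⟩
    rcases hF.2 with h | h
    · exact Or.inl ((Finset.card_le_card hF').trans h)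
    · rcases le_or_gt F'.card 1 with h1 | h1
      · exact Or.inl h1
      · have : F' = F := Finset.eq_of_subset_of_card_le hF' (by rw [edge_card h]; omega)
        exact Or.inr (this ▸ h)
  · intro i
    rw [ex, Finset.mem_filter]
    exact ⟨Finset.mem_univ _, Or.inl (by simp)⟩
  · intro F hF G hG hne
    have he1 : IsEdge F := by
      rcases (Finset.mem_filter.1 ((mem_facets'.1 hF).1)).2 with h | h
      · have := (mem_facets'.1 hF).2.1; omega
      · exact h
    have he2 : IsEdge G := by
      rcases (Finset.mem_filter.1 ((mem_facets'.1 hG).1)).2 with h | h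
      · have := (mem_facets'.1 hG).2.1; omega
      · exact h
    exact card2_inter (edge_card he1) (edge_card he2) hne
  · intro I hI
    have hsum : ∑ F ∈ facets ((ex l).image (· ∩ I)), (F.card - 1)
        = (facets ((ex l).image (· ∩ I))).card := by
      rw [Finset.card_eq_sum_ones]
      refine Finset.sum_congr rfl fun F hF => by rw [edge_card (facets_res_ex.1 hF).1]
    have heq : facets ((ex l).image (· ∩ I))
        = Finset.univ.filter fun F : Finset (Fin l) => IsEdge F ∧ F ⊆ I := by
      ext F
      rw [facets_res_ex, Finset.mem_filter]
      simp
    have := count_le I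
    rw [hsum, heq]
    omega


variable {l : ℕ}

lemma exists_facet {Δ : Finset (Finset (Fin l))} {A : Finset (Fin l)}
    (hA : A ∈ Δ) (h2 : 2 ≤ A.card) : ∃ G ∈ facets Δ, A ⊆ G := by
  obtain ⟨G, hG, hmax⟩ := Finset.exists_max_image (Δ.filter (A ⊆ ·)) Finset.card
    ⟨A, by simp [hA]⟩
  simp only [Finset.mem_filter] at hG
  refine ⟨G, mem_facets'.2 ⟨hG.1, le_trans h2 (Finset.card_le_card hG.2), ?_⟩, hG.2⟩
  intro H hH hGH
  exact Finset.eq_of_subset_of_card_le hGH (hmax H (by simp [hH, hG.2.trans hGH]))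

lemma facet_res {Δ : Finset (Finset (Fin l))} {I H : Finset (Fin l)}
    (hH : H ∈ facets (Δ.image (· ∩ I))) : ∃ G ∈ facets Δ, H = G ∩ I := by
  obtain ⟨hmem, h2, hmax⟩ := mem_facets'.1 hH
  obtain ⟨G0, hG0, rfl⟩ := Finset.mem_image.1 hmem
  have h2' : 2 ≤ G0.card := le_trans h2 (Finset.card_le_card Finset.inter_subset_left)
  obtain ⟨G1, hG1, hsub⟩ := exists_facet hG0 h2'
  exact ⟨G1, hG1, hmax _ (Finset.mem_image.2 ⟨G1, (mem_facets'.1 hG1).1, rfl⟩)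
    (Finset.inter_subset_inter hsub subset_rfl)⟩

lemma replace_spec (hl : 2 ≤ l) {Δ : Finset (Finset (Fin l))} (hΔ : memV2 l Δ)
    {F : Finset (Fin l)} (hF : F ∈ facets Δ) {m : ℕ} {v : Fin m → Fin l}
    (hv : Function.Injective v) (hFv : F = Finset.univ.image v) :
    memV2 l (replaceByPath Δ F v) ∧ (facets Δ).card ≤ (facets (replaceByPath Δ F v)).card := by
  obtain ⟨hdc, hsing, hpair, hspars⟩ := hΔ
  set P := Finset.univ.filter (fun G : Finset (Fin l) =>
      ∃ i j : Fin m, (j : ℕ) = (i : ℕ) + 1 ∧ G = {v i, v j}) with hPdef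
  set Gen := (facets Δ).erase F ∪ P with hGendef
  have hrep : replaceByPath Δ F v =
      Gen.biUnion Finset.powerset ∪
        Finset.univ.filter (fun G : Finset (Fin l) => G.card ≤ 1) := rfl
  have hm : m = F.card := by
    rw [hFv, Finset.card_image_of_injective _ hv, Finset.card_univ, Fintype.card_fin]
  have hm2 : 2 ≤ m := hm ▸ (mem_facets'.1 hF).2.1
  have hviF : ∀ i : Fin m, v i ∈ F := fun i =>
    hFv ▸ Finset.mem_image_of_mem v (Finset.mem_univ i)
  have hPmem : ∀ e ∈ P, ∃ i j : Fin m, (j : ℕ) = (i : ℕ) + 1 ∧ e = {v i, v j} :=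
    fun e he => (Finset.mem_filter.1 he).2
  have hvne : ∀ i j : Fin m, (j : ℕ) = (i : ℕ) + 1 → v i ≠ v j := by
    intro i j hij h
    have : i = j := hv h
    subst this; omega
  have hPcard : ∀ e ∈ P, e.card = 2 := by
    intro e he
    obtain ⟨i, j, hij, rfl⟩ := hPmem e he
    exact Finset.card_pair (hvne i j hij)
  have hPsubF : ∀ e ∈ P, e ⊆ F := by
    intro e he
    obtain ⟨i, j, hij, rfl⟩ := hPmem e he
    exact Finset.insert_subset (hviF i) (Finset.singleton_subset_iff.2 (hviF j))
  have hGen2 : ∀ H ∈ Gen, 2 ≤ H.card := by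
    intro H hH
    rcases Finset.mem_union.1 hH with h | h
    · exact (mem_facets'.1 (Finset.mem_of_mem_erase h)).2.1
    · rw [hPcard H h]
  have hGenΔ : ∀ H ∈ Gen, H ∈ Δ := by
    intro H hH
    rcases Finset.mem_union.1 hH with h | h
    · exact (mem_facets'.1 (Finset.mem_of_mem_erase h)).1
    · exact hdc F (mem_facets'.1 hF).1 H (hPsubF H h)
  have hGenInter : ∀ H₁ ∈ Gen, ∀ H₂ ∈ Gen, H₁ ≠ H₂ → (H₁ ∩ H₂).card ≤ 1 := by
    intro H₁ h₁ H₂ h₂ hne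
    rcases Finset.mem_union.1 h₁ with ha | ha <;> rcases Finset.mem_union.1 h₂ with hb | hb
    · exact hpair H₁ (Finset.mem_of_mem_erase ha) H₂ (Finset.mem_of_mem_erase hb) hne
    · calc (H₁ ∩ H₂).card ≤ (H₁ ∩ F).card :=
            Finset.card_le_card (Finset.inter_subset_inter subset_rfl (hPsubF H₂ hb))
        _ ≤ 1 := hpair H₁ (Finset.mem_of_mem_erase ha) F hF (Finset.ne_of_mem_erase ha)
    · rw [Finset.inter_comm]
      calc (H₂ ∩ H₁).card ≤ (H₂ ∩ F).card :=
            Finset.card_le_card (Finset.inter_subset_inter subset_rfl (hPsubF H₁ ha))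
        _ ≤ 1 := hpair H₂ (Finset.mem_of_mem_erase hb) F hF (Finset.ne_of_mem_erase hb)
    · exact card2_inter (hPcard H₁ ha) (hPcard H₂ hb) hne
  have hGenMax : ∀ H₁ ∈ Gen, ∀ H₂ ∈ Gen, H₁ ⊆ H₂ → H₁ = H₂ := by
    intro H₁ h₁ H₂ h₂ hsub
    by_contra hne
    have := hGenInter H₁ h₁ H₂ h₂ hne
    rw [Finset.inter_eq_left.2 hsub] at this
    have := hGen2 H₁ h₁
    omega
  have hmemΔ' : ∀ G : Finset (Fin l),
      G ∈ replaceByPath Δ F v ↔ (∃ H ∈ Gen, G ⊆ H) ∨ G.card ≤ 1 := by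
    intro G
    rw [hrep, Finset.mem_union, Finset.mem_biUnion]
    simp only [Finset.mem_powerset, Finset.mem_filter, Finset.mem_univ, true_and]
  have hGenSub : ∀ H ∈ Gen, H ∈ replaceByPath Δ F v :=
    fun H hH => (hmemΔ' H).2 (Or.inl ⟨H, hH, subset_rfl⟩)
  have hfacets' : facets (replaceByPath Δ F v) = Gen := by
    ext G
    rw [mem_facets']
    constructor
    · rintro ⟨hGmem, hG2, hGmax⟩
      rcases (hmemΔ' G).1 hGmem with ⟨H, hH, hGH⟩ | h
      · rw [hGmax H (hGenSub H hH) hGH]; exact hH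
      · omega
    · intro hG
      refine ⟨hGenSub G hG, hGen2 G hG, ?_⟩
      intro H hH hGH
      rcases (hmemΔ' H).1 hH with ⟨H₂, hH₂, hHH₂⟩ | h
      · have hGH₂ : G = H₂ := hGenMax G hG H₂ hH₂ (hGH.trans hHH₂)
        exact subset_antisymm hGH (hHH₂.trans (le_of_eq hGH₂.symm))
      · have := Finset.card_le_card hGH
        have := hGen2 G hG
        omega
  have hΔ'subΔ : replaceByPath Δ F v ⊆ Δ := by
    intro G hG
    rcases (hmemΔ' G).1 hG with ⟨H, hH, hGH⟩ | h
    · exact hdc H (hGenΔ H hH) G hGH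
    · rcases Nat.le_one_iff_eq_zero_or_eq_one.1 h with h0 | h1
      · rw [Finset.card_eq_zero.1 h0]
        exact hdc _ (hsing ⟨0, by omega⟩) ∅ (Finset.empty_subset _)
      · obtain ⟨x, rfl⟩ := Finset.card_eq_one.1 h1
        exact hsing x
  constructor
  · refine ⟨?_, ?_, ?_, ?_⟩
    · intro G hG F' hF'
      rcases (hmemΔ' G).1 hG with ⟨H, hH, hGH⟩ | h
      · exact (hmemΔ' F').2 (Or.inl ⟨H, hH, hF'.trans hGH⟩)
      · exact (hmemΔ' F').2 (Or.inr ((Finset.card_le_card hF').trans h))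
    · intro i
      exact (hmemΔ' {i}).2 (Or.inr (by simp))
    · intro A hA B hB hne
      rw [hfacets'] at hA hB
      exact hGenInter A hA B hB hne
    · intro I hI
      set R := facets (Δ.image (· ∩ I)) with hRdef
      set R' := facets ((replaceByPath Δ F v).image (· ∩ I)) with hR'def
      have hmapsEx : ∀ H' ∈ R', ∃ Hh ∈ R, H' ⊆ Hh := by
        intro H' hH'
        have h1 : H' ∈ (replaceByPath Δ F v).image (· ∩ I) := (mem_facets'.1 hH').1
        have h2 : H' ∈ Δ.image (· ∩ I) :=
          Finset.image_subset_image hΔ'subΔ h1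
        exact exists_facet h2 (mem_facets'.1 hH').2.1
      classical
      set φ : Finset (Fin l) → Finset (Fin l) := fun H' =>
        if h : ∃ Hh ∈ R, H' ⊆ Hh then h.choose else ∅ with hφdef
      have hφ : ∀ H' ∈ R', φ H' ∈ R ∧ H' ⊆ φ H' := by
        intro H' hH'
        have h := hmapsEx H' hH'
        simp only [hφdef, dif_pos h]
        exact ⟨h.choose_spec.1, h.choose_spec.2⟩
      have hsplit := Finset.sum_fiberwise_of_maps_to
        (fun H' hH' => (hφ H' hH').1) (fun H' : Finset (Fin l) => H'.card - 1)
      have hfiber : ∀ Hh ∈ R,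
          ∑ H' ∈ R'.filter (fun H' => φ H' = Hh), (H'.card - 1) ≤ Hh.card - 1 := by
        intro Hh hHh
        set T := R'.filter (fun H' => φ H' = Hh) with hTdef
        have hTR' : ∀ H' ∈ T, H' ∈ R' ∧ H' ⊆ Hh := by
          intro H' hH'
          rw [hTdef, Finset.mem_filter] at hH'
          exact ⟨hH'.1, hH'.2 ▸ (hφ H' hH'.1).2⟩
        have hrepT : ∀ H' ∈ T, ∃ Hg ∈ Gen, H' = Hg ∩ I := by
          intro H' hH'
          obtain ⟨G, hG, heq⟩ := facet_res ((hTR' H' hH').1)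
          rw [hfacets'] at hG
          exact ⟨G, hG, heq⟩
        by_cases hcase : ∃ H' ∈ T, ∃ G ∈ (facets Δ).erase F, H' = G ∩ I
        · obtain ⟨H0, hH0, G, hG, hH0eq⟩ := hcase
          obtain ⟨Gh, hGh, hHheq⟩ := facet_res hHh
          have hH0sub : H0 ⊆ Hh := (hTR' H0 hH0).2
          have hcard2 : 2 ≤ H0.card := (mem_facets'.1 (hTR' H0 hH0).1).2.1
          have hGGh : G = Gh := by
            by_contra hne
            have h1 := hpair G (Finset.mem_of_mem_erase hG) Gh hGh hne
            have hsub : H0 ⊆ G ∩ Gh := by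
              intro x hx
              have hxG : x ∈ G := (Finset.mem_inter.1 (hH0eq ▸ hx)).1
              have hxHh : x ∈ Hh := hH0sub hx
              have hxGh : x ∈ Gh := (Finset.mem_inter.1 (hHheq ▸ hxHh)).1
              exact Finset.mem_inter.2 ⟨hxG, hxGh⟩
            have := Finset.card_le_card hsub
            omega
          have hH0Hh : H0 = Hh := by rw [hH0eq, hHheq, hGGh]
          have hTsub : T ⊆ {H0} := by
            intro H' hH'
            obtain ⟨hR'', hsubHh⟩ := hTR' H' hH'
            rw [Finset.mem_singleton]
            exact (mem_facets'.1 hR'').2.2 H0 (mem_facets'.1 (hTR' H0 hH0).1).1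
              (by rw [hH0Hh]; exact hsubHh)
          calc ∑ H' ∈ T, (H'.card - 1) ≤ ∑ H' ∈ ({H0} : Finset (Finset (Fin l))), (H'.card - 1) :=
                Finset.sum_le_sum_of_subset hTsub
            _ = H0.card - 1 := Finset.sum_singleton _ _
            _ = Hh.card - 1 := by rw [hH0Hh]
        · push_neg at hcase
          have hTedge : ∀ H' ∈ T, ∃ i j : Fin m, (j : ℕ) = (i : ℕ) + 1 ∧ H' = {v i, v j} := by
            intro H' hH'
            obtain ⟨Hg, hHg, hH'eq⟩ := hrepT H' hH'
            rcases Finset.mem_union.1 hHg with h | h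
            · exact absurd hH'eq (hcase H' hH' Hg h)
            · obtain ⟨i, j, hij, rfl⟩ := hPmem Hg h
              have h2 : 2 ≤ H'.card := (mem_facets'.1 (hTR' H' hH').1).2.1
              have hcc : ({v i, v j} : Finset (Fin l)).card ≤
                  (({v i, v j} : Finset (Fin l)) ∩ I).card := by
                rw [Finset.card_pair (hvne i j hij), ← hH'eq]; exact h2
              exact ⟨i, j, hij, by
                rw [hH'eq]
                exact (Finset.eq_of_subset_of_card_le Finset.inter_subset_left hcc).symm ▸ rfl⟩
          rcases T.eq_empty_or_nonempty with hTe | hTne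
          · rw [hTe]; simp
          · set ι : Finset (Fin l) → Fin m := fun H' =>
              if h : ∃ i j : Fin m, (j : ℕ) = (i : ℕ) + 1 ∧ H' = {v i, v j} then h.choose
              else ⟨0, by omega⟩ with hιdef
            have hι : ∀ H' ∈ T, ∃ j : Fin m, (j : ℕ) = (ι H' : ℕ) + 1 ∧ H' = {v (ι H'), v j} := by
              intro H' hH'
              have h := hTedge H' hH'
              simp only [hιdef, dif_pos h]
              exact h.choose_spec
            set W := T.biUnion id with hWdef
            have hWsub : W ⊆ Hh := by
              intro x hx
              obtain ⟨H', hH', hxH'⟩ := Finset.mem_biUnion.1 hx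
              exact (hTR' H' hH').2 hxH'
            obtain ⟨H0, hH0, hmax⟩ := Finset.exists_max_image T (fun H' => (ι H' : ℕ)) hTne
            obtain ⟨j0, hj0, hH0eq⟩ := hι H0 hH0
            have hfmem : ∀ H' ∈ T, v (ι H') ∈ W := by
              intro H' hH'
              obtain ⟨j, hj, hH'eq⟩ := hι H' hH'
              have hx : v (ι H') ∈ H' := by
                have hmi := Finset.mem_insert_self (v (ι H')) {v j}
                rwa [← hH'eq] at hmi
              exact Finset.mem_biUnion.2 ⟨H', hH', hx⟩
            have hinsert : insert (v j0) (T.image (fun H' => v (ι H'))) ⊆ W := by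
              rw [Finset.insert_subset_iff]
              have hx0 : v j0 ∈ H0 := by
                rw [hH0eq]
                exact Finset.mem_insert_of_mem (Finset.mem_singleton_self _)
              refine ⟨Finset.mem_biUnion.2 ⟨H0, hH0, hx0⟩, ?_⟩
              · intro x hx
                obtain ⟨H', hH', rfl⟩ := Finset.mem_image.1 hx
                exact hfmem H' hH'
            have hnotmem : v j0 ∉ T.image (fun H' => v (ι H')) := by
              intro hmem
              obtain ⟨H', hH', hEq⟩ := Finset.mem_image.1 hmem
              have h1 : ι H' = j0 := hv hEq
              have h2 : (ι H' : ℕ) = (j0 : ℕ) := by rw [h1]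
              have h3 := hmax H' hH'
              omega
            have hιinjOn : Set.InjOn (fun H' => v (ι H')) (T : Set (Finset (Fin l))) := by
              intro H1 h1 H2 h2 hEq
              have hEq' : ι H1 = ι H2 := hv hEq
              obtain ⟨j1, hj1, hH1⟩ := hι H1 (Finset.mem_coe.1 h1)
              obtain ⟨j2, hj2, hH2⟩ := hι H2 (Finset.mem_coe.1 h2)
              have hjj : j1 = j2 := Fin.ext (by rw [hj1, hj2, hEq'])
              rw [hH1, hH2, hEq', hjj]
            have hcardins : (insert (v j0) (T.image (fun H' => v (ι H')))).card = T.card + 1 := by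
              rw [Finset.card_insert_of_notMem hnotmem, Finset.card_image_of_injOn hιinjOn]
            have hcardW : T.card + 1 ≤ W.card := by
              rw [← hcardins]
              exact Finset.card_le_card hinsert
            have hsum : ∑ H' ∈ T, (H'.card - 1) = T.card := by
              rw [Finset.card_eq_sum_ones]
              refine Finset.sum_congr rfl fun H' hH' => ?_
              obtain ⟨i, j, hij, rfl⟩ := hTedge H' hH'
              rw [Finset.card_pair (hvne i j hij)]
            have hHhW := Finset.card_le_card hWsub
            omega
      calc ∑ F' ∈ R', (F'.card - 1)
          = ∑ Hh ∈ R, ∑ H' ∈ R'.filter (fun H' => φ H' = Hh), (H'.card - 1) := hsplit.symm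
        _ ≤ ∑ Hh ∈ R, (Hh.card - 1) := Finset.sum_le_sum hfiber
        _ < 2 * (I.card - 1) := hspars I hI
  · -- cardinality
    have hPdisj : Disjoint ((facets Δ).erase F) P := by
      rw [Finset.disjoint_right]
      intro e heP heE
      have heF := hPsubF e heP
      have := (mem_facets'.1 (Finset.mem_of_mem_erase heE)).2.2 F (mem_facets'.1 hF).1 heF
      exact Finset.ne_of_mem_erase heE this
    have hPne : 1 ≤ P.card := by
      refine Finset.card_pos.2 ⟨{v ⟨0, by omega⟩, v ⟨1, by omega⟩}, ?_⟩
      rw [hPdef, Finset.mem_filter]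
      exact ⟨Finset.mem_univ _, ⟨0, by omega⟩, ⟨1, by omega⟩, by simp, rfl⟩
    have hfc : 1 ≤ (facets Δ).card := Finset.card_pos.2 ⟨F, hF⟩
    rw [hfacets', hGendef, Finset.card_union_of_disjoint hPdisj, Finset.card_erase_of_mem hF]
    omega


lemma upper (hl : 2 ≤ l) {Δ : Finset (Finset (Fin l))} (h : memV2 l Δ) :
    (facets Δ).card ≤ 2 * l - 3 := by
  obtain ⟨-, -, -, h4⟩ := h
  have hcardu : (Finset.univ : Finset (Fin l)).card = l := by simp
  have hI := h4 Finset.univ (by rw [hcardu]; omega)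
  have himg : Δ.image (· ∩ Finset.univ) = Δ := by
    have hid : (fun G : Finset (Fin l) => G ∩ Finset.univ) = id := by
      funext G; simp
    rw [hid, Finset.image_id]
  rw [himg, hcardu] at hI
  have hle : (facets Δ).card * 1 ≤ ∑ F ∈ facets Δ, (F.card - 1) := by
    rw [← smul_eq_mul]
    exact Finset.card_nsmul_le_sum _ _ _ (fun F hF => by
      have := (mem_facets'.1 hF).2.1; omega)
  omega

end Stmt10

/-- For `l ≥ 2` the maximum of `|F(Δ)|` over `Δ ∈ V₂(l)` equals `2l - 3`; moreover,
replacing any positive-dimensional facet `F = {v_1,…,v_m}` of `Δ ∈ V₂(l)` by the path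
edges `{v_i,v_{i+1}}` yields a complex `Δ' ∈ V₂(l)` with `|F(Δ)| ≤ |F(Δ')|`. -/
theorem stmt10 (l : ℕ) (hl : 2 ≤ l) :
    IsGreatest {c | ∃ Δ : Finset (Finset (Fin l)), memV2 l Δ ∧ (facets Δ).card = c}
      (2 * l - 3) ∧
    (∀ Δ : Finset (Finset (Fin l)), memV2 l Δ → ∀ F ∈ facets Δ,
      ∀ (m : ℕ) (v : Fin m → Fin l), Function.Injective v →
        F = Finset.univ.image v →
        memV2 l (replaceByPath Δ F v) ∧
          (facets Δ).card ≤ (facets (replaceByPath Δ F v)).card) := by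
  constructor
  · constructor
    · exact ⟨Stmt10.ex l, Stmt10.memV2_ex hl, Stmt10.card_facets_ex hl⟩
    · rintro c ⟨Δ, hΔ, rfl⟩
      exact Stmt10.upper hl hΔ
  · intro Δ hΔ F hF m v hv hFv
    exact Stmt10.replace_spec hl hΔ hF hv hFv
end

section
/- For every partition γ = (γ_1,...,γ_l) of an integer d' ≤ d with all γ_i ≥ 1, there exists an element of L^{d+3,d} of type γ. (In the case k = 2, every partition of every d' ≤ d occurs as a type.) -/
/-- `D^k({S_1,…,S_l}) = codim^k(⋃ᵢ Sᵢ) - Σᵢ codim^k(Sᵢ)` where `codim^k(X) = |X| - k`. -/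
def DU {α : Type*} [DecidableEq α] (k : ℕ) (S : Finset (Finset α)) : ℤ :=
  (((S.sup id).card : ℤ) - k) - ∑ X ∈ S, ((X.card : ℤ) - k)

/-- The rank function `ρ^k(S) = Σ_{X ∈ S} (|X| - k)`. -/
def rhoU {α : Type*} (k : ℕ) (S : Finset (Finset α)) : ℤ :=
  ∑ X ∈ S, ((X.card : ℤ) - k)

/-- The set `L^{d+k+1,d}` of collections `S ⊆ 2^{[d+k+1]}` with
`k+1 ≤ |Sᵢ| ≤ d+k+1` and `D^k(S') > 0` for all subcollections of size `> 1`. -/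
def LUpper (d k : ℕ) : Set (Finset (Finset (Fin (d + k + 1)))) :=
  {S | (∀ X ∈ S, k + 1 ≤ X.card ∧ X.card ≤ d + k + 1) ∧
    ∀ S' ⊆ S, 1 < S'.card → 0 < DU k S'}

/-- The order on `L^{d+k+1,d}`: `S ≤ S'` iff `S = S'`, or `ρ^k(S) < ρ^k(S')` and
every member of `S` is contained in some member of `S'`. -/
def leU {α : Type*} (k : ℕ) (S S' : Finset (Finset α)) : Prop :=
  S = S' ∨ (rhoU k S < rhoU k S' ∧ ∀ X ∈ S, ∃ Y ∈ S', X ⊆ Y)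

instance (d k : ℕ) : LE ↥(LUpper d k) := ⟨fun A B => leU k A.1 B.1⟩

namespace Stmt11Aux

/-- partial sums -/
def o (g : List ℕ) (i : ℕ) : ℕ := (g.take i).sum

/-- blocks -/
def bS (g : List ℕ) (i : ℕ) : Finset ℕ := Finset.Ico (o g i) (o g (i+1))

/-- extras -/
def eS (d : ℕ) (g : List ℕ) (i : ℕ) : Finset ℕ :=
  if i = 0 then {d, d+1} else if i = 1 then {d+1, d+2} else if i = 2 then {d, d+2}
  else {o g (i-3), o g (i-2)}

def tS (d : ℕ) (g : List ℕ) (i : ℕ) : Finset ℕ := bS g i ∪ eS d g i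

variable {g : List ℕ} {d : ℕ}

lemma o_succ (g : List ℕ) (i : ℕ) : o g (i+1) = o g i + g.getD i 0 := by
  by_cases h : i < g.length
  · rw [o, o, List.sum_take_succ g i h, List.getD_eq_getElem g 0 h]
  · push_neg at h
    rw [o, o, List.take_of_length_le h, List.take_of_length_le (le_trans h (Nat.le_succ i)),
      List.getD_eq_default g 0 h]
    omega

lemma o_mono (g : List ℕ) : Monotone (o g) :=
  monotone_nat_of_le_succ (fun i => by rw [o_succ]; omega)

lemma o_le_sum (g : List ℕ) (i : ℕ) : o g i ≤ g.sum := by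
  calc o g i ≤ o g i + (g.drop i).sum := Nat.le_add_right _ _
    _ = g.sum := by rw [o, ← List.sum_append, List.take_append_drop]

lemma o_length (g : List ℕ) : o g g.length = g.sum := by rw [o, List.take_length]

section
variable (hone : ∀ i < g.length, 1 ≤ g.getD i 0)
include hone

lemma o_strict {i j : ℕ} (hij : i < j) (hj : j ≤ g.length) : o g i < o g j := by
  have h1 : 1 ≤ g.getD i 0 := hone i (lt_of_lt_of_le hij hj)
  have h2 : o g (i+1) = o g i + g.getD i 0 := o_succ g i
  have h3 : o g (i+1) ≤ o g j := o_mono g hij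
  omega

lemma o_inj {a b : ℕ} (ha : a ≤ g.length) (hb : b ≤ g.length) (h : o g a = o g b) : a = b := by
  rcases lt_trichotomy a b with h' | h' | h'
  · exact absurd h (ne_of_lt (o_strict hone h' hb))
  · exact h'
  · exact absurd h.symm (ne_of_lt (o_strict hone h' ha))

end

lemma bS_card (g : List ℕ) (i : ℕ) : (bS g i).card = g.getD i 0 := by
  rw [bS, Nat.card_Ico, o_succ]; omega

lemma mem_bS {i x : ℕ} : x ∈ bS g i ↔ o g i ≤ x ∧ x < o g (i+1) := Finset.mem_Ico

lemma bS_lt_d (hsum : g.sum ≤ d) {i x : ℕ} (hx : x ∈ bS g i) : x < d := by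
  have h1 := mem_bS.mp hx
  have h2 := o_le_sum g (i+1)
  omega

lemma eS_card_le (d : ℕ) (g : List ℕ) (i : ℕ) : (eS d g i).card ≤ 2 := by
  rw [eS]
  split_ifs <;> exact le_trans (Finset.card_insert_le _ _) (by simp)

lemma mem_eS_of_ge3 {i : ℕ} (hi : 3 ≤ i) {x : ℕ} :
    x ∈ eS d g i ↔ x = o g (i-3) ∨ x = o g (i-2) := by
  rw [eS, if_neg (by omega), if_neg (by omega), if_neg (by omega)]
  simp [Finset.mem_insert]

lemma mem_eS_of_le2 {i : ℕ} (hi : i ≤ 2) {x : ℕ} (hx : x ∈ eS d g i) : d ≤ x := by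
  interval_cases i <;> simp [eS] at hx <;> omega

section
variable (hone : ∀ i < g.length, 1 ≤ g.getD i 0) (hsum : g.sum ≤ d)
include hone hsum

lemma bS_eS_disj {i : ℕ} (hi : i < g.length) : Disjoint (bS g i) (eS d g i) := by
  rw [Finset.disjoint_left]
  intro x hxB hxE
  rcases Nat.lt_or_ge i 3 with h3 | h3
  · have := mem_eS_of_le2 (by omega) hxE
    have := bS_lt_d hsum hxB
    omega
  · rw [mem_eS_of_ge3 h3] at hxE
    have h1 := mem_bS.mp hxB
    have h2 : o g (i-2) < o g i := o_strict hone (by omega) (by omega)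
    have h4 : o g (i-3) ≤ o g (i-2) := o_mono g (by omega)
    omega

lemma eS_card (hi : i < g.length) : (eS d g i).card = 2 := by
  rcases Nat.lt_or_ge i 3 with h3 | h3
  · rw [eS]; interval_cases i <;> simp <;> exact Finset.card_pair (by omega)
  · rw [eS, if_neg (by omega), if_neg (by omega), if_neg (by omega)]
    exact Finset.card_pair (ne_of_lt (o_strict hone (by omega) (by omega)))

lemma tS_card (hi : i < g.length) : (tS d g i).card = g.getD i 0 + 2 := by
  rw [tS, Finset.card_union_of_disjoint (bS_eS_disj hone hsum hi), bS_card,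
    eS_card hone hsum hi]

lemma bS_disj_tS {j i : ℕ} (hji : j < i) (hi : i < g.length) :
    ∀ x ∈ bS g i, x ∉ tS d g j := by
  intro x hx
  have h1 := mem_bS.mp hx
  rw [tS, Finset.mem_union]
  rintro (h | h)
  · have h2 := mem_bS.mp h
    have h3 : o g (j+1) ≤ o g i := o_mono g (by omega)
    omega
  · rcases Nat.lt_or_ge j 3 with h3 | h3
    · have := mem_eS_of_le2 (by omega) h
      have := bS_lt_d hsum hx
      omega
    · rw [mem_eS_of_ge3 h3] at h
      have h4 : o g (j-2) < o g j := o_strict hone (by omega) (by omega)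
      have h5 : o g (j-3) ≤ o g (j-2) := o_mono g (by omega)
      have h6 : o g j ≤ o g i := o_mono g (le_of_lt hji)
      omega

lemma o_mem_tS_iff {m j : ℕ} (hm : m < g.length) (hj : j < g.length) :
    o g m ∈ tS d g j ↔ (m = j ∨ (3 ≤ j ∧ (m = j - 3 ∨ m = j - 2))) := by
  constructor
  · intro h
    rw [tS, Finset.mem_union] at h
    rcases h with h | h
    · left
      have h1 := mem_bS.mp h
      by_contra hne
      rcases Nat.lt_or_ge m j with h' | h'
      · have := o_strict hone h' (le_of_lt hj); omega
      · have : o g (j+1) ≤ o g m := o_mono g (by omega)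
        omega
    · rcases Nat.lt_or_ge j 3 with h3 | h3
      · have h4 := mem_eS_of_le2 (by omega) h
        have h5 : o g m < o g g.length := o_strict hone hm (le_refl _)
        rw [o_length] at h5
        omega
      · rw [mem_eS_of_ge3 h3] at h
        right
        refine ⟨h3, ?_⟩
        rcases h with h | h
        · exact Or.inl (o_inj hone (le_of_lt hm) (by omega) h)
        · exact Or.inr (o_inj hone (le_of_lt hm) (by omega) h)
  · rintro (rfl | ⟨h3, h⟩)
    · rw [tS, Finset.mem_union]
      left
      rw [mem_bS, o_succ]
      have := hone m hm
      omega
    · rw [tS, Finset.mem_union]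
      right
      rw [mem_eS_of_ge3 h3]
      rcases h with rfl | rfl
      · exact Or.inl rfl
      · exact Or.inr rfl

lemma pair_card {j i : ℕ} (hji : j < i) (hi : i < g.length) :
    (tS d g i ∩ tS d g j).card ≤ 1 := by
  have hsub : tS d g i ∩ tS d g j ⊆ eS d g i ∩ tS d g j := by
    intro x hx
    rw [Finset.mem_inter] at hx ⊢
    refine ⟨?_, hx.2⟩
    rcases Finset.mem_union.mp hx.1 with h | h
    · exact absurd hx.2 (bS_disj_tS hone hsum hji hi x h)
    · exact h
  by_contra hcon
  push_neg at hcon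
  have h2 : 2 ≤ (eS d g i ∩ tS d g j).card :=
    le_trans hcon (Finset.card_le_card hsub)
  have heq : eS d g i ∩ tS d g j = eS d g i :=
    Finset.eq_of_subset_of_card_le Finset.inter_subset_left
      (le_trans (eS_card_le d g i) h2)
  have hEsub : eS d g i ⊆ tS d g j := by
    rw [← heq]; exact Finset.inter_subset_right
  rcases Nat.lt_or_ge i 3 with h3 | h3
  · -- i ≤ 2, j < i
    have hd2 : ∀ x ∈ tS d g j, x < d ∨ x ∈ eS d g j := by
      intro x hx
      rcases Finset.mem_union.mp hx with h | h
      · exact Or.inl (bS_lt_d hsum h)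
      · exact Or.inr h
    interval_cases i
    · omega
    · -- i = 1, j = 0 : d+2 ∈ eS 1
      have hj0 : j = 0 := by omega
      subst hj0
      have hmem : d + 2 ∈ eS d g 1 := by simp [eS]
      rcases hd2 _ (hEsub hmem) with h | h
      · omega
      · simp [eS] at h <;> omega
    · -- i = 2
      have hmem2 : d + 2 ∈ eS d g 2 := by simp [eS]
      have hmemd : d ∈ eS d g 2 := by simp [eS]
      interval_cases j
      · rcases hd2 _ (hEsub hmem2) with h | h
        · omega
        · simp [eS] at h <;> omega
      · rcases hd2 _ (hEsub hmemd) with h | h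
        · omega
        · simp [eS] at h <;> omega
  · -- i ≥ 3
    have hm3 : o g (i-3) ∈ tS d g j := hEsub (by rw [mem_eS_of_ge3 h3]; exact Or.inl rfl)
    have hm2 : o g (i-2) ∈ tS d g j := hEsub (by rw [mem_eS_of_ge3 h3]; exact Or.inr rfl)
    rw [o_mem_tS_iff hone hsum (by omega) (by omega)] at hm3 hm2
    omega

end

lemma map_range_getD : ∀ (g : List ℕ), (List.range g.length).map (fun i => g.getD i 0) = g
  | [] => rfl
  | a :: t => by
    rw [List.length_cons, List.range_succ_eq_map, List.map_cons, List.map_map]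
    have : ((fun i => (a :: t).getD i 0) ∘ Nat.succ) = (fun i => t.getD i 0) := by
      funext i; simp [List.getD_cons_succ]
    rw [List.getD_cons_zero, this, map_range_getD t]

end Stmt11Aux

/-- doc -/
theorem stmt11 (d : ℕ) (γ : Multiset ℕ) (h1 : ∀ s ∈ γ, 1 ≤ s) (h2 : γ.sum ≤ d) :
    ∃ S ∈ LUpper d 2, Multiset.map (fun X => X.card - 2) S.val = γ := by
  classical
  set g : List ℕ := γ.toList with hg
  have hone : ∀ i < g.length, 1 ≤ g.getD i 0 := by
    intro i hi
    have hmem : g.getD i 0 ∈ g := by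
      rw [List.getD_eq_getElem g 0 hi]; exact List.getElem_mem hi
    exact h1 _ (by rwa [hg, Multiset.mem_toList] at hmem)
  have hsum : g.sum ≤ d := by rw [hg, Multiset.sum_toList]; exact h2
  set l := g.length with hl
  have hT_all : ∀ i, ∀ m ∈ Stmt11Aux.tS d g i, m < d + 2 + 1 := by
    intro i m hm
    rcases Finset.mem_union.mp hm with h | h
    · have := Stmt11Aux.bS_lt_d hsum h; omega
    · rcases Nat.lt_or_ge i 3 with h3 | h3
      · rw [Stmt11Aux.eS] at h; interval_cases i <;> simp at h <;> omega
      · rw [Stmt11Aux.mem_eS_of_ge3 h3] at h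
        have h4 := Stmt11Aux.o_le_sum g (i-3)
        have h5 := Stmt11Aux.o_le_sum g (i-2)
        omega
  set T' : ℕ → Finset (Fin (d + 2 + 1)) :=
    fun i => (Stmt11Aux.tS d g i).attachFin (hT_all i) with hT'
  have hvalmem : ∀ i (x : Fin (d+2+1)), x ∈ T' i ↔ (x : ℕ) ∈ Stmt11Aux.tS d g i :=
    fun i x => Finset.mem_attachFin _
  have hcardT : ∀ i, (T' i).card = (Stmt11Aux.tS d g i).card :=
    fun i => Finset.card_attachFin _ _
  have hcardT' : ∀ i < l, (T' i).card = g.getD i 0 + 2 :=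
    fun i hi => by rw [hcardT, Stmt11Aux.tS_card hone hsum hi]
  -- pairwise intersections
  have hG1 : ∀ {j i : ℕ}, j < i → i < l → (T' i ∩ T' j).card ≤ 1 := by
    intro j i hji hi
    have h1 : (T' i ∩ T' j).card = ((T' i ∩ T' j).image (fun x : Fin (d+2+1) => (x:ℕ))).card :=
      (Finset.card_image_of_injective _ Fin.val_injective).symm
    rw [h1]
    refine le_trans (Finset.card_le_card ?_) (Stmt11Aux.pair_card hone hsum hji hi)
    intro x hx
    rcases Finset.mem_image.mp hx with ⟨y, hy, rfl⟩
    rw [Finset.mem_inter] at hy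
    exact Finset.mem_inter.mpr ⟨(hvalmem _ _).mp hy.1, (hvalmem _ _).mp hy.2⟩
  -- intersection with earlier union
  have hE_all : ∀ i, ∀ m ∈ Stmt11Aux.eS d g i, m < d + 2 + 1 :=
    fun i m hm => hT_all i m (Finset.mem_union_right _ hm)
  have hG2 : ∀ {i : ℕ}, i < l → ∀ (J : Finset ℕ), (∀ j ∈ J, j < i) →
      (T' i ∩ J.sup T').card ≤ 2 := by
    intro i hi J hJ
    have hsub : T' i ∩ J.sup T' ⊆ (Stmt11Aux.eS d g i).attachFin (hE_all i) := by
      intro x hx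
      rw [Finset.mem_inter] at hx
      obtain ⟨j, hjJ, hxj⟩ := Finset.mem_sup.mp hx.2
      have hxt : (x:ℕ) ∈ Stmt11Aux.tS d g i := (hvalmem _ _).mp hx.1
      have hxtj : (x:ℕ) ∈ Stmt11Aux.tS d g j := (hvalmem _ _).mp hxj
      rw [Finset.mem_attachFin]
      rcases Finset.mem_union.mp hxt with h | h
      · exact absurd hxtj (Stmt11Aux.bS_disj_tS hone hsum (hJ j hjJ) hi _ h)
      · exact h
    refine le_trans (Finset.card_le_card hsub) ?_
    rw [Finset.card_attachFin]
    exact Stmt11Aux.eS_card_le d g i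
  -- key counting lemma
  have key : ∀ I : Finset ℕ, I ⊆ Finset.range l → 2 ≤ I.card →
      (∑ i ∈ I, (T' i).card) + 3 ≤ (I.sup T').card + 2 * I.card := by
    intro I
    induction I using Finset.strongInductionOn with
    | _ I ih =>
      intro hIsub hI2
      have hne : I.Nonempty := Finset.card_pos.mp (by omega)
      set i := I.max' hne with hi
      have him : i ∈ I := I.max'_mem hne
      have hil : i < l := Finset.mem_range.mp (hIsub him)
      set I' := I.erase i with hI'
      have hcardI' : I'.card = I.card - 1 := Finset.card_erase_of_mem him
      have hltI' : ∀ j ∈ I', j < i := by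
        intro j hj
        have hne2 : j ≠ i := Finset.ne_of_mem_erase hj
        have hle : j ≤ i := I.le_max' j (Finset.mem_of_mem_erase hj)
        omega
      have hsupI : I.sup T' = T' i ∪ I'.sup T' := by
        conv_lhs => rw [← Finset.insert_erase him]
        rw [Finset.sup_insert, Finset.sup_eq_union]
      have hsumI : ∑ j ∈ I, (T' j).card = (T' i).card + ∑ j ∈ I', (T' j).card :=
        (Finset.add_sum_erase I _ him).symm
      have hcu : (T' i ∪ I'.sup T').card + (T' i ∩ I'.sup T').card
          = (T' i).card + (I'.sup T').card := Finset.card_union_add_card_inter _ _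
      rcases eq_or_lt_of_le (show 1 ≤ I'.card by omega) with h1 | h1
      · -- base case : I' = {j}
        obtain ⟨j, hj⟩ := Finset.card_eq_one.mp h1.symm
        have hjI' : j ∈ I' := by rw [hj]; exact Finset.mem_singleton_self j
        have hji : j < i := hltI' j hjI'
        have hsupI' : I'.sup T' = T' j := by rw [hj, Finset.sup_singleton]
        have hsumI' : ∑ x ∈ I', (T' x).card = (T' j).card := by
          rw [hj, Finset.sum_singleton]
        have hint : (T' i ∩ T' j).card ≤ 1 := hG1 hji hil
        rw [hsupI'] at hcu
        rw [hsupI, hsupI', hsumI, hsumI']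
        omega
      · -- inductive step
        have hI'sub : I' ⊆ Finset.range l := fun x hx => hIsub (Finset.mem_of_mem_erase hx)
        have hih := ih I' (Finset.erase_ssubset him) hI'sub (by omega)
        have hint := hG2 hil I' hltI'
        rw [hsupI, hsumI]
        omega
  -- the collection
  set S : Finset (Finset (Fin (d+2+1))) := (Finset.range l).image T' with hS
  have hcase : ∀ a b : ℕ, b < a → a < l → T' a = T' b → False := by
    intro a b hba hal heq
    have hc1 := hG1 hba hal
    rw [heq, Finset.inter_self] at hc1
    have hc2 := hcardT' b (by omega)
    have hc3 := hone b (by omega)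
    omega
  have hinj : ∀ x ∈ Finset.range l, ∀ y ∈ Finset.range l, T' x = T' y → x = y := by
    intro x hx y hy hxy
    by_contra hne
    rcases Nat.lt_or_ge x y with h | h
    · exact hcase y x h (Finset.mem_range.mp hy) hxy.symm
    · exact hcase x y (by omega) (Finset.mem_range.mp hx) hxy
  refine ⟨S, ⟨?_, ?_⟩, ?_⟩
  · -- size bounds
    intro X hX
    obtain ⟨i, hi, rfl⟩ := Finset.mem_image.mp hX
    have hil : i < l := Finset.mem_range.mp hi
    rw [hcardT' i hil]
    have hg1 : 1 ≤ g.getD i 0 := hone i hil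
    have hgd : g.getD i 0 ≤ d := by
      have ho1 := Stmt11Aux.o_succ g i
      have ho2 := Stmt11Aux.o_le_sum g (i+1)
      omega
    constructor <;> omega
  · -- DU positivity
    intro S' hsub hcard1
    obtain ⟨I, hIsub, rfl⟩ := Finset.subset_image_iff.mp hsub
    have hinjI : ∀ x ∈ I, ∀ y ∈ I, T' x = T' y → x = y :=
      fun x hx y hy => hinj x (hIsub hx) y (hIsub hy)
    have hcardS' : (Finset.image T' I).card = I.card :=
      Finset.card_image_of_injOn (fun x hx y hy => hinjI x hx y hy)
    rw [hcardS'] at hcard1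
    have hkey := key I hIsub (by omega)
    rw [DU]
    push_cast
    have hsupS' : (Finset.image T' I).sup id = I.sup T' := by
      rw [Finset.sup_image]; rfl
    rw [hsupS']
    have hsum1 : ∑ X ∈ Finset.image T' I, ((X.card : ℤ) - 2) =
        ∑ i ∈ I, (((T' i).card : ℤ) - 2) := Finset.sum_image hinjI
    rw [hsum1]
    have e1 : ∑ i ∈ I, (((T' i).card : ℤ) - 2) =
        (∑ i ∈ I, ((T' i).card : ℤ)) - 2 * I.card := by
      rw [Finset.sum_sub_distrib, Finset.sum_const]; push_cast; ring
    have e2 : (∑ i ∈ I, ((T' i).card : ℤ)) = ((∑ i ∈ I, (T' i).card : ℕ) : ℤ) :=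
      (Nat.cast_sum _ _).symm
    rw [e1, e2]
    omega
  · -- the type
    have hvalS : S.val = Multiset.map T' (Finset.range l).val := by
      rw [hS, Finset.image_val, Multiset.dedup_eq_self.mpr]
      exact Multiset.Nodup.map_on
        (fun x hx y hy => hinj x (Finset.mem_val.mp hx) y (Finset.mem_val.mp hy))
        (Finset.range l).nodup
    rw [hvalS, Multiset.map_map]
    have hcongr : Multiset.map ((fun X : Finset (Fin (d+2+1)) => X.card - 2) ∘ T')
        (Finset.range l).val = Multiset.map (fun i => g.getD i 0) (Finset.range l).val := by
      apply Multiset.map_congr rfl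
      intro i hi
      have hil : i < l := Finset.mem_range.mp (Finset.mem_val.mp hi)
      simp only [Function.comp_apply]
      rw [hcardT' i hil]
      omega
    rw [hcongr, Finset.range_val]
    have hrg : (Multiset.range l) = ((List.range l : List ℕ) : Multiset ℕ) := rfl
    rw [hrg, Multiset.map_coe, hl, Stmt11Aux.map_range_getD g, hg]
    exact Multiset.coe_toList γ
end

section
/- For a singleton element {T_1} of L_{d+k+1,d}, the order ideal I_{d+k+1,d}({T_1}) = { T' ∈ L_{d+k+1,d} : T' ≤ {T_1} } is order-isomorphic to L_{d+k+1−|T_1|, d−|T_1|}. -/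
/-- `D_d({T_1,…,T_l}) = codim_d(⋂ᵢ Tᵢ) - Σᵢ codim_d(Tᵢ)` where `codim_d(X) = d+1-|X|`. -/
def DL {α : Type*} [DecidableEq α] [Fintype α] (d : ℕ) (T : Finset (Finset α)) : ℤ :=
  (((d : ℤ) + 1) - (T.inf id).card) - ∑ X ∈ T, (((d : ℤ) + 1) - X.card)

/-- The rank function `ρ_d(T) = Σ_{X ∈ T} (d+1-|X|)`. -/
def rhoL {α : Type*} (d : ℕ) (T : Finset (Finset α)) : ℤ :=
  ∑ X ∈ T, (((d : ℤ) + 1) - X.card)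

/-- The set `L_{n,d}` of collections `T ⊆ 2^{[n]}` with `0 ≤ |Tᵢ| ≤ d` and
`D_d(T') > 0` for all subcollections of size `> 1`. -/
def LLower (n d : ℕ) : Set (Finset (Finset (Fin n))) :=
  {T | (∀ X ∈ T, X.card ≤ d) ∧ ∀ T' ⊆ T, 1 < T'.card → 0 < DL d T'}

/-- The order on `L_{n,d}`: `T ≤ T'` iff `T = T'`, or `ρ_d(T) < ρ_d(T')` and
every member of `T` contains some member of `T'`. -/
def leLow {α : Type*} (d : ℕ) (T T' : Finset (Finset α)) : Prop :=
  T = T' ∨ (rhoL d T < rhoL d T' ∧ ∀ X ∈ T, ∃ Y ∈ T', Y ⊆ X)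

instance (n d : ℕ) : LE ↥(LLower n d) := ⟨fun A B => leLow d A.1 B.1⟩

/-- The order ideal of `L_{n,d}` generated by a collection `T₀`. -/
def IdealSub (n d : ℕ) (T0 : Finset (Finset (Fin n))) :=
  {T // T ∈ LLower n d ∧ leLow d T T0}

instance (n d : ℕ) (T0 : Finset (Finset (Fin n))) : LE (IdealSub n d T0) :=
  ⟨fun A B => leLow d A.1 B.1⟩

namespace Stmt12Aux

variable {n n' : ℕ}

def up (g : Fin n' ↪ Fin n) (T1 : Finset (Fin n)) (Y : Finset (Fin n')) : Finset (Fin n) :=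
  Y.map g ∪ T1

noncomputable def down (g : Fin n' ↪ Fin n) (X : Finset (Fin n)) : Finset (Fin n') :=
  X.preimage g (g.injective.injOn)

variable (g : Fin n' ↪ Fin n) (T1 : Finset (Fin n))

theorem mem_down {X : Finset (Fin n)} {y : Fin n'} : y ∈ down g X ↔ g y ∈ X :=
  Finset.mem_preimage

theorem down_up (hg : ∀ y, g y ∉ T1) (Y : Finset (Fin n')) : down g (up g T1 Y) = Y := by
  ext y
  rw [mem_down]
  simp only [up, Finset.mem_union, Finset.mem_map, hg y, or_false]
  exact ⟨fun ⟨a, ha, hay⟩ => by rwa [← g.injective hay], fun hy => ⟨y, hy, rfl⟩⟩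

theorem up_injective (hg : ∀ y, g y ∉ T1) : Function.Injective (up g T1) := fun Y Z hYZ => by
  rw [← down_up g T1 hg Y, ← down_up g T1 hg Z, hYZ]

theorem card_up (hg : ∀ y, g y ∉ T1) (Y : Finset (Fin n')) :
    (up g T1 Y).card = Y.card + T1.card := by
  rw [up, Finset.card_union_of_disjoint, Finset.card_map]
  exact Finset.disjoint_left.2 fun x hx hx' => by
    obtain ⟨y, _, rfl⟩ := Finset.mem_map.1 hx; exact hg y hx'

theorem up_subset_up (hg : ∀ y, g y ∉ T1) {Y Z : Finset (Fin n')} :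
    up g T1 Y ⊆ up g T1 Z ↔ Y ⊆ Z := by
  constructor
  · intro hs y hy
    have : g y ∈ up g T1 Z := hs (Finset.mem_union_left _ (Finset.mem_map_of_mem g hy))
    rcases Finset.mem_union.1 this with h' | h'
    · obtain ⟨z, hz, hzy⟩ := Finset.mem_map.1 h'
      rwa [← g.injective hzy]
    · exact absurd h' (hg y)
  · intro hs
    exact Finset.union_subset_union_left (Finset.map_subset_map.2 hs)

theorem down_subset_down {X Z : Finset (Fin n)} (hXZ : X ⊆ Z) : down g X ⊆ down g Z :=
  fun y hy => (mem_down g).2 (hXZ ((mem_down g).1 hy))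

theorem up_down (hr : ∀ x : Fin n, x ∉ T1 → ∃ y, g y = x) {X : Finset (Fin n)} (hX : T1 ⊆ X) :
    up g T1 (down g X) = X := by
  ext x
  simp only [up, Finset.mem_union, Finset.mem_map]
  constructor
  · rintro (⟨y, hy, rfl⟩ | hx)
    · exact (mem_down g).1 hy
    · exact hX hx
  · intro hx
    by_cases hxT : x ∈ T1
    · exact Or.inr hxT
    · obtain ⟨y, rfl⟩ := hr x hxT
      exact Or.inl ⟨y, (mem_down g).2 hx, rfl⟩

theorem card_down (hg : ∀ y, g y ∉ T1) (hr : ∀ x : Fin n, x ∉ T1 → ∃ y, g y = x)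
    {X : Finset (Fin n)} (hX : T1 ⊆ X) : X.card = (down g X).card + T1.card := by
  conv_lhs => rw [← up_down g T1 hr hX]
  exact card_up g T1 hg _

theorem up_inter (A B : Finset (Fin n')) :
    up g T1 (A ∩ B) = up g T1 A ∩ up g T1 B := by
  simp only [up, Finset.map_inter]
  exact sup_inf_right _ _ _

theorem inf_image_up {S : Finset (Finset (Fin n'))} (hS : S.Nonempty) :
    (S.image (up g T1)).inf id = up g T1 (S.inf id) := by
  induction hS using Finset.Nonempty.cons_induction with
  | singleton Y => simp
  | cons Y S hY hS ih =>
      rw [Finset.cons_eq_insert, Finset.image_insert, Finset.inf_insert, Finset.inf_insert, ih,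
        id_eq, id_eq]
      exact (up_inter g T1 Y (S.inf id)).symm


theorem downC_upC (hg : ∀ y, g y ∉ T1) (S : Finset (Finset (Fin n'))) :
    (S.image (up g T1)).image (down g) = S := by
  rw [Finset.image_image]
  refine Finset.image_congr (fun Y _ => down_up g T1 hg Y) |>.trans (Finset.image_id)

theorem upC_downC (hr : ∀ x : Fin n, x ∉ T1 → ∃ y, g y = x) {T : Finset (Finset (Fin n))}
    (hT : ∀ X ∈ T, T1 ⊆ X) : (T.image (down g)).image (up g T1) = T := by
  rw [Finset.image_image]
  refine Finset.image_congr (fun X hX => up_down g T1 hr (hT X hX)) |>.trans (Finset.image_id)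

theorem rho_upC (hg : ∀ y, g y ∉ T1) {d d' : ℕ} (hd : (d : ℤ) = (d' : ℤ) + T1.card)
    (S : Finset (Finset (Fin n'))) : rhoL d (S.image (up g T1)) = rhoL d' S := by
  rw [rhoL, rhoL, Finset.sum_image (fun a _ b _ hab => up_injective g T1 hg hab)]
  refine Finset.sum_congr rfl fun Y _ => ?_
  rw [card_up g T1 hg Y, hd]
  push_cast
  ring

theorem DL_upC (hg : ∀ y, g y ∉ T1) (hr : ∀ x : Fin n, x ∉ T1 → ∃ y, g y = x)
    {d d' : ℕ} (hd : (d : ℤ) = (d' : ℤ) + T1.card)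
    {S : Finset (Finset (Fin n'))} (hS : S.Nonempty) :
    DL d (S.image (up g T1)) = DL d' S := by
  have h1 := rho_upC g T1 hg hd S
  rw [rhoL] at h1
  rw [DL, DL, h1, inf_image_up g T1 hS, card_up g T1 hg, hd]
  simp only [rhoL]
  push_cast
  ring

theorem rho_lt {m e : ℕ} {T : Finset (Finset (Fin m))} (hT : T ∈ LLower m e)
    (hne : T ≠ {(∅ : Finset (Fin m))}) : rhoL e T < (e : ℤ) + 1 := by
  rcases lt_or_ge T.card 2 with hc | hc
  · interval_cases hcard : T.card
    · rw [Finset.card_eq_zero.1 hcard, rhoL, Finset.sum_empty]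
      positivity
    · obtain ⟨Y, rfl⟩ := Finset.card_eq_one.1 hcard
      have hY : Y ≠ ∅ := fun hY => hne (by rw [hY])
      have : 1 ≤ Y.card := Finset.card_pos.2 (Finset.nonempty_iff_ne_empty.2 hY)
      rw [rhoL, Finset.sum_singleton]
      have : (1 : ℤ) ≤ Y.card := by exact_mod_cast this
      omega
  · have := hT.2 T subset_rfl hc
    rw [DL] at this
    have h0 : (0 : ℤ) ≤ ((T.inf id).card : ℤ) := Int.ofNat_nonneg _
    rw [rhoL]
    omega


theorem downC_mem (hg : ∀ y, g y ∉ T1) (hr : ∀ x : Fin n, x ∉ T1 → ∃ y, g y = x)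
    {d d' : ℕ} (hd : d = d' + T1.card) {T : Finset (Finset (Fin n))}
    (hT : T ∈ LLower n d) (hsub : ∀ X ∈ T, T1 ⊆ X) :
    T.image (down g) ∈ LLower n' d' := by
  constructor
  · intro Y hY
    obtain ⟨X, hX, rfl⟩ := Finset.mem_image.1 hY
    have h1 := card_down g T1 hg hr (hsub X hX)
    have h2 := hT.1 X hX
    omega
  · intro S' hS' hcS'
    have hSsub : S'.image (up g T1) ⊆ T := by
      intro X hX
      obtain ⟨Y, hY, rfl⟩ := Finset.mem_image.1 hX
      obtain ⟨Z, hZ, rfl⟩ := Finset.mem_image.1 (hS' hY)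
      rwa [up_down g T1 hr (hsub Z hZ)]
    have hcard : (S'.image (up g T1)).card = S'.card :=
      Finset.card_image_of_injective _ (up_injective g T1 hg)
    have := hT.2 _ hSsub (by omega)
    rwa [DL_upC g T1 hg hr (by rw [hd]; push_cast; ring)
      (Finset.card_pos.1 (by omega))] at this

theorem upC_mem (hg : ∀ y, g y ∉ T1) (hr : ∀ x : Fin n, x ∉ T1 → ∃ y, g y = x)
    {d d' : ℕ} (hd : d = d' + T1.card) {B : Finset (Finset (Fin n'))}
    (hB : B ∈ LLower n' d') : B.image (up g T1) ∈ LLower n d := by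
  constructor
  · intro X hX
    obtain ⟨Y, hY, rfl⟩ := Finset.mem_image.1 hX
    have := hB.1 Y hY
    rw [card_up g T1 hg]
    omega
  · intro S hS hcS
    have hsubS : ∀ X ∈ S, T1 ⊆ X := by
      intro X hX
      obtain ⟨Y, hY, rfl⟩ := Finset.mem_image.1 (hS hX)
      exact Finset.subset_union_right
    have hSS : (S.image (down g)).image (up g T1) = S := upC_downC g T1 hr hsubS
    have hsub' : S.image (down g) ⊆ B := by
      intro Y hY
      obtain ⟨X, hX, rfl⟩ := Finset.mem_image.1 hY
      obtain ⟨Z, hZ, rfl⟩ := Finset.mem_image.1 (hS hX)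
      rwa [down_up g T1 hg]
    have hcard : (S.image (down g)).card = S.card := by
      have h1 := Finset.card_image_le (s := S) (f := down g)
      have h2 := Finset.card_image_le (s := S.image (down g)) (f := up g T1)
      rw [hSS] at h2
      omega
    have := hB.2 _ hsub' (by omega)
    rw [← DL_upC g T1 hg hr (d := d) (d' := d') (by rw [hd]; push_cast; ring)
      (Finset.card_pos.1 (by omega)), hSS] at this
    exact this

theorem rho_downC (hg : ∀ y, g y ∉ T1) (hr : ∀ x : Fin n, x ∉ T1 → ∃ y, g y = x)
    {d d' : ℕ} (hd : d = d' + T1.card) {T : Finset (Finset (Fin n))}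
    (hsub : ∀ X ∈ T, T1 ⊆ X) : rhoL d' (T.image (down g)) = rhoL d T := by
  conv_rhs => rw [← upC_downC g T1 hr hsub]
  rw [rho_upC g T1 hg (by rw [hd]; push_cast; ring)]

theorem leLow_downC (hg : ∀ y, g y ∉ T1) (hr : ∀ x : Fin n, x ∉ T1 → ∃ y, g y = x)
    {d d' : ℕ} (hd : d = d' + T1.card) {A B : Finset (Finset (Fin n))}
    (hA : ∀ X ∈ A, T1 ⊆ X) (hB : ∀ X ∈ B, T1 ⊆ X) :
    leLow d' (A.image (down g)) (B.image (down g)) ↔ leLow d A B := by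
  have heq : A.image (down g) = B.image (down g) ↔ A = B := by
    constructor
    · intro hAB
      rw [← upC_downC g T1 hr hA, ← upC_downC g T1 hr hB, hAB]
    · intro hAB; rw [hAB]
  have hcont : (∀ X' ∈ A.image (down g), ∃ Y' ∈ B.image (down g), Y' ⊆ X') ↔
      (∀ X ∈ A, ∃ Y ∈ B, Y ⊆ X) := by
    constructor
    · intro hc X hX
      obtain ⟨Y', hY', hsub'⟩ := hc (down g X) (Finset.mem_image_of_mem _ hX)
      obtain ⟨Y, hY, rfl⟩ := Finset.mem_image.1 hY'
      refine ⟨Y, hY, ?_⟩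
      have := (up_subset_up g T1 hg).2 hsub'
      rwa [up_down g T1 hr (hB Y hY), up_down g T1 hr (hA X hX)] at this
    · intro hc X' hX'
      obtain ⟨X, hX, rfl⟩ := Finset.mem_image.1 hX'
      obtain ⟨Y, hY, hYX⟩ := hc X hX
      exact ⟨down g Y, Finset.mem_image_of_mem _ hY, down_subset_down g hYX⟩
  rw [leLow, leLow, heq, rho_downC g T1 hg hr hd hA, rho_downC g T1 hg hr hd hB, hcont]

end Stmt12Aux

open Stmt12Aux

/-- For a singleton element `{T₁}` of `L_{d+k+1,d}`, the order ideal it generates is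
order-isomorphic to `L_{d+k+1-|T₁|, d-|T₁|}`. -/
theorem stmt12 (d k : ℕ) (T1 : Finset (Fin (d + k + 1)))
    (h : ({T1} : Finset (Finset (Fin (d + k + 1)))) ∈ LLower (d + k + 1) d) :
    Nonempty (IdealSub (d + k + 1) d {T1} ≃o
      ↥(LLower (d + k + 1 - T1.card) (d - T1.card))) := by
  classical
  have htd : T1.card ≤ d := h.1 T1 (Finset.mem_singleton_self T1)
  have hd : d = (d - T1.card) + T1.card := by omega
  have hcard : (T1ᶜ : Finset (Fin (d + k + 1))).card = d + k + 1 - T1.card := by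
    rw [Finset.card_compl, Fintype.card_fin]
  let e : ↥(T1ᶜ : Finset (Fin (d + k + 1))) ≃ Fin (d + k + 1 - T1.card) :=
    Finset.equivFinOfCardEq hcard
  let g : Fin (d + k + 1 - T1.card) ↪ Fin (d + k + 1) :=
    (e.symm.toEmbedding).trans (Function.Embedding.subtype _)
  have hg : ∀ y, g y ∉ T1 := fun y => Finset.mem_compl.1 (e.symm y).2
  have hr : ∀ x : Fin (d + k + 1), x ∉ T1 → ∃ y, g y = x := fun x hx =>
    ⟨e ⟨x, Finset.mem_compl.2 hx⟩, by simp [g]⟩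
  have hsubA : ∀ (A : Finset (Finset (Fin (d + k + 1)))), leLow d A {T1} →
      ∀ X ∈ A, T1 ⊆ X := by
    intro A hA X hX
    rcases hA with hA | ⟨-, hA⟩
    · rw [hA, Finset.mem_singleton] at hX
      rw [hX]
    · obtain ⟨Y, hY, hYX⟩ := hA X hX
      rwa [Finset.mem_singleton.1 hY] at hYX
  refine ⟨⟨⟨fun A => ⟨A.1.image (down g), downC_mem g T1 hg hr hd A.2.1 (hsubA A.1 A.2.2)⟩,
    fun B => ⟨B.1.image (up g T1), upC_mem g T1 hg hr hd B.2, ?_⟩, ?_, ?_⟩, ?_⟩⟩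
  · -- leLow d (upC B) {T1}
    by_cases hB : B.1 = {(∅ : Finset (Fin (d + k + 1 - T1.card)))}
    · left
      rw [hB]
      simp [up]
    · right
      constructor
      · rw [rho_upC g T1 hg (d' := d - T1.card) (by rw [Nat.cast_sub htd]; ring)]
        have h1 := rho_lt B.2 hB
        have h2 : rhoL d ({T1} : Finset (Finset (Fin (d + k + 1)))) =
            (d : ℤ) + 1 - T1.card := by
          rw [rhoL, Finset.sum_singleton]
        rw [h2]
        rw [Nat.cast_sub htd] at h1
        linarith
      · intro X hX
        obtain ⟨Y, hY, rfl⟩ := Finset.mem_image.1 hX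
        exact ⟨T1, Finset.mem_singleton_self T1, Finset.subset_union_right⟩
  · -- left inverse
    intro A
    exact Subtype.ext (upC_downC g T1 hr (hsubA A.1 A.2.2))
  · -- right inverse
    intro B
    exact Subtype.ext (downC_upC g T1 hg B.1)
  · -- map_rel_iff
    intro A B
    exact leLow_downC g T1 hg hr hd (hsubA A.1 A.2.2) (hsubA B.1 B.2.2)
end

section
/- For T ∈ L_{d+k+1,d} with T ≠ ∅ (as a collection), the order ideal I_{d+k+1,d}(T) is order-isomorphic to the direct product Π_{T_i ∈ T} I_{d+k+1,d}({T_i}), and hence to Π_{T_i ∈ T} L_{k+codim_d(T_i), codim_d(T_i)−1}. -/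
/-!
Two distinct members `Y ≠ Y'` of a collection in `L_{n,d}` never lie in a common set of size at
most `d`, because `D_d({Y, Y'}) = |Y ∪ Y'| - d - 1`. Hence every collection refining `T` splits
into disjoint fibres, one above each `Tᵢ`, and summing the bound `ρ_d ≤ codim_d(⋂)` over the
fibres shows that on `L_{n,d}` the order is plain refinement. The fibre map `S ↦ (S_{Tᵢ})ᵢ` is then
an order isomorphism onto `Π I({Tᵢ})`: gluing fibres stays in `L_{n,d}` because coarsening a
family to the set of `Tᵢ` below it can only decrease `D_d`, via
`|⋂ Zᵢ| ≤ |⋂ Tᵢ| + Σ |Zᵢ \ Tᵢ|` for `Tᵢ ⊆ Zᵢ`. Finally, deleting `Tᵢ` from every member shifts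
all codimensions by `|Tᵢ|` and leaves `D` unchanged, identifying `I({Tᵢ})` with
`L_{n-|Tᵢ|, d-|Tᵢ|}`.
-/

open Finset

def codim {α : Type*} (d : ℕ) (X : Finset α) : ℤ := d + 1 - X.card

def Refines {α : Type*} (A B : Finset (Finset α)) : Prop := ∀ X ∈ A, ∃ Y ∈ B, Y ⊆ X

section Codim

variable {α : Type*} {d : ℕ}

lemma rhoL_eq_sum_codim (T : Finset (Finset α)) : rhoL d T = ∑ X ∈ T, codim d X := rfl

lemma DL_eq_codim_sub_rhoL [DecidableEq α] [Fintype α] (T : Finset (Finset α)) :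
    DL d T = codim d (T.inf id) - rhoL d T := rfl

lemma DL_pair [DecidableEq α] [Fintype α] {Y Y' : Finset α} (h : Y ≠ Y') :
    DL d {Y, Y'} = (Y ∪ Y').card - (d + 1) := by
  have := card_union_add_card_inter Y Y'
  rw [DL_eq_codim_sub_rhoL, rhoL_eq_sum_codim, sum_pair h, inf_insert, inf_singleton]
  simp only [codim, id, inf_eq_inter]
  omega

lemma card_inf_add_sum_card_le [DecidableEq α] [Fintype α] {ι : Type*} (I : Finset ι)
    {Y Z : ι → Finset α} (hYZ : ∀ i ∈ I, Y i ⊆ Z i) :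
    (I.inf Z).card + ∑ i ∈ I, (Y i).card ≤ (I.inf Y).card + ∑ i ∈ I, (Z i).card := by
  have hcover : I.inf Z ⊆ I.inf Y ∪ I.biUnion fun i => Z i \ Y i := by
    intro x hx
    rw [mem_inf] at hx
    by_cases hxY : ∀ i ∈ I, x ∈ Y i
    · exact mem_union_left _ (mem_inf.2 hxY)
    · push Not at hxY
      obtain ⟨i, hi, hxi⟩ := hxY
      exact mem_union_right _ (mem_biUnion.2 ⟨i, hi, mem_sdiff.2 ⟨hx i hi, hxi⟩⟩)
  have hsdiff : ∑ i ∈ I, (Z i \ Y i).card + ∑ i ∈ I, (Y i).card = ∑ i ∈ I, (Z i).card := by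
    rw [← sum_add_distrib]
    exact sum_congr rfl fun i hi => card_sdiff_add_card_eq_card (hYZ i hi)
  have := (card_le_card hcover).trans ((card_union_le _ _).trans
    (Nat.add_le_add_left card_biUnion_le _))
  omega

lemma codim_inf_sub_sum_codim_mono [DecidableEq α] [Fintype α] {ι : Type*} (I : Finset ι)
    {Y Z : ι → Finset α} (hYZ : ∀ i ∈ I, Y i ⊆ Z i) :
    codim d (I.inf Y) - ∑ i ∈ I, codim d (Y i) ≤ codim d (I.inf Z) - ∑ i ∈ I, codim d (Z i) := by
  have := card_inf_add_sum_card_le I hYZ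
  simp only [codim, sum_sub_distrib]
  zify at this
  linarith

end Codim

section LLower

variable {n d : ℕ} {A B T : Finset (Finset (Fin n))}

lemma LLower.mono (hA : A ∈ LLower n d) (h : B ⊆ A) : B ∈ LLower n d :=
  ⟨fun X hX => hA.1 X (h hX), fun T' hT' => hA.2 T' (hT'.trans h)⟩

lemma singleton_mem_LLower {Y : Finset (Fin n)} (hY : Y.card ≤ d) : {Y} ∈ LLower n d := by
  refine ⟨by simpa using hY, fun T' hT' hc => ?_⟩
  have := card_le_card hT'
  rw [card_singleton] at this
  omega

lemma LLower.eq_of_subset_of_subset (hT : T ∈ LLower n d) {Y Y' X : Finset (Fin n)}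
    (hY : Y ∈ T) (hY' : Y' ∈ T) (hX : X.card ≤ d) (h : Y ⊆ X) (h' : Y' ⊆ X) : Y = Y' := by
  by_contra hne
  have hD := hT.2 {Y, Y'} (insert_subset hY (singleton_subset_iff.2 hY'))
    (by rw [card_pair hne]; omega)
  rw [DL_pair hne] at hD
  have := card_le_card (union_subset h h')
  omega

lemma rhoL_le_codim_inf (hA : A ∈ LLower n d) (hne : A.Nonempty) :
    rhoL d A ≤ codim d (A.inf id) := by
  obtain hc | hc := (one_le_card.2 hne).eq_or_lt
  · obtain ⟨X, rfl⟩ := card_eq_one.1 hc.symm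
    simp [rhoL_eq_sum_codim]
  · have := hA.2 A subset_rfl hc
    rw [DL_eq_codim_sub_rhoL] at this
    linarith

lemma rhoL_filter_superset_le (hA : A ∈ LLower n d) {Y : Finset (Fin n)} (hY : Y.card ≤ d) :
    rhoL d (A.filter (Y ⊆ ·)) ≤ codim d Y ∧
      (rhoL d (A.filter (Y ⊆ ·)) = codim d Y → A.filter (Y ⊆ ·) = {Y}) := by
  set F := A.filter (Y ⊆ ·)
  have hYF : Y ⊆ F.inf id := Finset.le_inf fun X hX => (mem_filter.1 hX).2
  have hcodim : codim d (F.inf id) ≤ codim d Y := by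
    have := card_le_card hYF
    simp only [codim]
    omega
  rcases F.eq_empty_or_nonempty with hF | hF
  · have : (0 : ℤ) < codim d Y := by simp only [codim]; omega
    simp only [hF, rhoL_eq_sum_codim, sum_empty]
    exact ⟨this.le, fun h => absurd h this.ne⟩
  obtain hc | hc := (one_le_card.2 hF).eq_or_lt
  · obtain ⟨X, hX⟩ := card_eq_one.1 hc.symm
    simp only [hX, inf_singleton, id] at hcodim hYF ⊢
    simp only [rhoL_eq_sum_codim, sum_singleton]
    refine ⟨hcodim, fun h => ?_⟩
    rw [eq_of_subset_of_card_le hYF (by simp only [codim] at h; omega)]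
  · have := (LLower.mono hA (filter_subset _ A)).2 F subset_rfl hc
    rw [DL_eq_codim_sub_rhoL] at this
    exact ⟨by linarith, fun h => by linarith⟩

end LLower

section Refines

variable {n d : ℕ} {A B S T : Finset (Finset (Fin n))}

lemma biUnion_filter_superset {α : Type*} [DecidableEq α] {A B : Finset (Finset α)}
    (hAB : Refines A B) : B.biUnion (fun Y => A.filter (Y ⊆ ·)) = A := by
  ext X
  simp only [mem_biUnion, mem_filter]
  refine ⟨fun ⟨_, _, hX, _⟩ => hX, fun hX => ?_⟩
  obtain ⟨Y, hY, hYX⟩ := hAB X hX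
  exact ⟨Y, hY, hX, hYX⟩

lemma rhoL_eq_sum_rhoL_filter_superset (hB : B ∈ LLower n d) (hA : ∀ X ∈ A, X.card ≤ d)
    (hAB : Refines A B) : rhoL d A = ∑ Y ∈ B, rhoL d (A.filter (Y ⊆ ·)) := by
  conv_lhs => rw [← biUnion_filter_superset hAB, rhoL]
  refine sum_biUnion fun Y hY Y' hY' hne => disjoint_left.2 fun X hX hX' => hne ?_
  rw [mem_filter] at hX hX'
  exact LLower.eq_of_subset_of_subset hB hY hY' (hA X hX.1) hX.2 hX'.2

lemma rhoL_le_of_refines (hA : A ∈ LLower n d) (hB : B ∈ LLower n d) (hAB : Refines A B) :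
    rhoL d A ≤ rhoL d B ∧ (rhoL d A = rhoL d B → A = B) := by
  have hfib := fun Y hY => rhoL_filter_superset_le hA (hB.1 Y hY)
  rw [rhoL_eq_sum_rhoL_filter_superset hB hA.1 hAB, rhoL_eq_sum_codim B]
  refine ⟨sum_le_sum fun Y hY => (hfib Y hY).1, fun heq => ?_⟩
  have hall := (sum_eq_sum_iff_of_le fun Y hY => (hfib Y hY).1).1 heq
  rw [← biUnion_filter_superset hAB, biUnion_congr rfl fun Y hY => (hfib Y hY).2 (hall Y hY),
    biUnion_singleton_eq_self]

lemma leLow_iff_refines (hA : A ∈ LLower n d) (hB : B ∈ LLower n d) :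
    leLow d A B ↔ Refines A B := by
  refine ⟨?_, fun h => ?_⟩
  · rintro (rfl | ⟨-, h⟩)
    exacts [fun X hX => ⟨X, hX, subset_rfl⟩, h]
  · obtain ⟨hle, heq⟩ := rhoL_le_of_refines hA hB h
    by_cases hAB : A = B
    · exact Or.inl hAB
    · exact Or.inr ⟨hle.lt_of_ne (mt heq hAB), h⟩

lemma DL_le_DL_of_refines {I : Finset (Finset (Fin n))} (hI : I ∈ LLower n d)
    (hS : ∀ X ∈ S, X.card ≤ d) (hSI : Refines S I)
    (hfib : ∀ Y ∈ I, (S.filter (Y ⊆ ·)).Nonempty ∧ S.filter (Y ⊆ ·) ∈ LLower n d) :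
    DL d I ≤ DL d S := by
  set Z := fun Y => (S.filter (Y ⊆ ·)).inf id
  have hinf : S.inf id = I.inf Z := by
    conv_lhs => rw [← biUnion_filter_superset hSI]
    exact inf_biUnion _ _
  have hrho : rhoL d S ≤ ∑ Y ∈ I, codim d (Z Y) := by
    rw [rhoL_eq_sum_rhoL_filter_superset hI hS hSI]
    exact sum_le_sum fun Y hY => rhoL_le_codim_inf (hfib Y hY).2 (hfib Y hY).1
  have hmono := codim_inf_sub_sum_codim_mono (d := d) I (Y := id) (Z := Z)
    fun Y _ => Finset.le_inf fun X hX => (mem_filter.1 hX).2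
  rw [DL_eq_codim_sub_rhoL, DL_eq_codim_sub_rhoL, hinf, rhoL_eq_sum_codim I]
  simp only [id] at hmono ⊢
  linarith

lemma mem_LLower_of_refines (hT : T ∈ LLower n d) (hS : ∀ X ∈ S, X.card ≤ d)
    (hST : Refines S T) (hfib : ∀ Y ∈ T, S.filter (Y ⊆ ·) ∈ LLower n d) : S ∈ LLower n d := by
  refine ⟨hS, fun S' hS' hc => ?_⟩
  -- either `S'` lies in a single fibre, or `D(S') ≥ D(I) > 0` for the members `I` of `T` it meets
  set I := T.filter fun Y => (S'.filter (Y ⊆ ·)).Nonempty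
  have hS'I : Refines S' I := fun X hX => by
    obtain ⟨Y, hY, hYX⟩ := hST X (hS' hX)
    exact ⟨Y, mem_filter.2 ⟨hY, X, mem_filter.2 ⟨hX, hYX⟩⟩, hYX⟩
  obtain hI | hI := le_or_gt I.card 1
  · obtain ⟨X, hX⟩ := card_pos.1 (by omega : 0 < S'.card)
    obtain ⟨Y, hY, -⟩ := hS'I X hX
    have : S' ⊆ S.filter (Y ⊆ ·) := fun X' hX' => by
      obtain ⟨Y', hY', hY'X'⟩ := hS'I X' hX'
      exact mem_filter.2 ⟨hS' hX', card_le_one.1 hI Y' hY' Y hY ▸ hY'X'⟩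
    exact (hfib Y (filter_subset _ _ hY)).2 S' this hc
  · have hIL : I ∈ LLower n d := LLower.mono hT (filter_subset _ _)
    refine (hIL.2 I subset_rfl hI).trans_le <| DL_le_DL_of_refines hIL
      (fun X hX => hS X (hS' hX)) hS'I fun Y hY => ⟨(mem_filter.1 hY).2, ?_⟩
    exact LLower.mono (hfib Y (filter_subset _ _ hY)) (filter_subset_filter _ hS')

lemma refines_iff_forall_refines_filter (hT : T ∈ LLower n d) (hS : ∀ X ∈ S, X.card ≤ d)
    (hST : Refines S T) (hBT : Refines B T) :
    Refines S B ↔ ∀ Y ∈ T, Refines (S.filter (Y ⊆ ·)) (B.filter (Y ⊆ ·)) := by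
  constructor
  · intro h Y hY X hX
    rw [mem_filter] at hX
    obtain ⟨W, hW, hWX⟩ := h X hX.1
    obtain ⟨Y', hY', hY'W⟩ := hBT W hW
    obtain rfl := LLower.eq_of_subset_of_subset hT hY' hY (hS X hX.1) (hY'W.trans hWX) hX.2
    exact ⟨W, mem_filter.2 ⟨hW, hY'W⟩, hWX⟩
  · intro h X hX
    obtain ⟨Y, hY, hYX⟩ := hST X hX
    obtain ⟨W, hW, hWX⟩ := h Y hY X (mem_filter.2 ⟨hX, hYX⟩)
    exact ⟨W, (mem_filter.1 hW).1, hWX⟩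

end Refines

section Ideal

variable {n d : ℕ} {T : Finset (Finset (Fin n))}

lemma IdealSub.refines (S : IdealSub n d T) : Refines S.1 T := by
  rcases S.2.2 with h | ⟨-, h⟩
  · rw [h]
    exact fun X hX => ⟨X, hX, subset_rfl⟩
  · exact h

lemma LLower.le_iff {S S' : LLower n d} : S ≤ S' ↔ Refines S.1 S'.1 :=
  leLow_iff_refines S.2 S'.2

lemma IdealSub.le_iff {S S' : IdealSub n d T} : S ≤ S' ↔ Refines S.1 S'.1 :=
  leLow_iff_refines S.2.1 S'.2.1

lemma IdealSub.prop_of_refines (hT : T ∈ LLower n d) {S : Finset (Finset (Fin n))}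
    (hS : S ∈ LLower n d) (h : Refines S T) : S ∈ LLower n d ∧ leLow d S T :=
  ⟨hS, (leLow_iff_refines hS hT).2 h⟩

lemma IdealSub.subset_of_mem {Y : Finset (Fin n)} (S : IdealSub n d {Y})
    {X : Finset (Fin n)} (hX : X ∈ S.1) : Y ⊆ X := by
  obtain ⟨Y', hY', h⟩ := S.refines X hX
  rwa [mem_singleton.1 hY'] at h

lemma filter_superset_mem_IdealSub (hT : T ∈ LLower n d) (S : IdealSub n d T)
    {Y : Finset (Fin n)} (hY : Y ∈ T) :
    S.1.filter (Y ⊆ ·) ∈ LLower n d ∧ leLow d (S.1.filter (Y ⊆ ·)) {Y} :=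
  IdealSub.prop_of_refines (singleton_mem_LLower (hT.1 Y hY))
    (LLower.mono S.2.1 (filter_subset _ _))
    fun _ hX => ⟨Y, mem_singleton_self Y, (mem_filter.1 hX).2⟩

lemma filter_superset_biUnion (hT : T ∈ LLower n d) (f : (Y : T) → IdealSub n d {Y.1})
    (Y : T) : (T.attach.biUnion fun Y => (f Y).1).filter (Y.1 ⊆ ·) = (f Y).1 := by
  ext X
  simp only [mem_filter, mem_biUnion, mem_attach, true_and]
  refine ⟨fun ⟨⟨Y', hX⟩, hYX⟩ => ?_, fun hX => ⟨⟨Y, hX⟩, (f Y).subset_of_mem hX⟩⟩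
  obtain rfl : Y' = Y := Subtype.ext <| LLower.eq_of_subset_of_subset hT Y'.2 Y.2
    ((f Y').2.1.1 X hX) ((f Y').subset_of_mem hX) hYX
  exact hX

lemma biUnion_mem_IdealSub (hT : T ∈ LLower n d) (f : (Y : T) → IdealSub n d {Y.1}) :
    (T.attach.biUnion fun Y => (f Y).1) ∈ LLower n d ∧
      leLow d (T.attach.biUnion fun Y => (f Y).1) T := by
  set U := T.attach.biUnion fun Y => (f Y).1
  have hmem : ∀ X ∈ U, ∃ Y, X ∈ (f Y).1 := by simp [U]
  have hcard : ∀ X ∈ U, X.card ≤ d := fun X hX => by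
    obtain ⟨Y, hY⟩ := hmem X hX
    exact (f Y).2.1.1 X hY
  have hUT : Refines U T := fun X hX => by
    obtain ⟨Y, hY⟩ := hmem X hX
    exact ⟨Y.1, Y.2, (f Y).subset_of_mem hY⟩
  refine IdealSub.prop_of_refines hT (mem_LLower_of_refines hT hcard hUT fun Y hY => ?_) hUT
  exact filter_superset_biUnion hT f ⟨Y, hY⟩ ▸ (f ⟨Y, hY⟩).2.1

def idealProdIso (hT : T ∈ LLower n d) :
    IdealSub n d T ≃o ((Y : T) → IdealSub n d {Y.1}) where
  toFun S Y := ⟨S.1.filter (Y.1 ⊆ ·), filter_superset_mem_IdealSub hT S Y.2⟩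
  invFun f := ⟨T.attach.biUnion fun Y => (f Y).1, biUnion_mem_IdealSub hT f⟩
  left_inv S := Subtype.ext (attach_biUnion.trans (biUnion_filter_superset S.refines))
  right_inv f := funext fun Y => Subtype.ext (filter_superset_biUnion hT f Y)
  map_rel_iff' {S S'} := by
    simp only [Pi.le_def, IdealSub.le_iff, Subtype.forall]
    exact (refines_iff_forall_refines_filter hT S.2.1.1 S.refines S'.refines).symm

end Ideal

section Contraction

variable {n d : ℕ} (Y : Finset (Fin n))

def complEmb : Fin (n - Y.card) ↪o Fin n :=
  Yᶜ.orderEmbOfFin (by rw [card_compl, Fintype.card_fin])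

def contract (X : Finset (Fin n)) : Finset (Fin (n - Y.card)) := univ.filter (complEmb Y · ∈ X)

def expand (Z : Finset (Fin (n - Y.card))) : Finset (Fin n) :=
  Y ∪ Z.map (complEmb Y).toEmbedding

variable {Y}

@[simp] lemma mem_contract {X : Finset (Fin n)} {a : Fin (n - Y.card)} :
    a ∈ contract Y X ↔ complEmb Y a ∈ X := by
  simp [contract]

lemma complEmb_notMem (a : Fin (n - Y.card)) : complEmb Y a ∉ Y :=
  mem_compl.1 (orderEmbOfFin_mem _ _ a)

lemma exists_complEmb_eq {x : Fin n} (hx : x ∉ Y) : ∃ a, complEmb Y a = x := by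
  have : x ∈ Set.range (complEmb Y) := by
    rw [complEmb, range_orderEmbOfFin, coe_compl]
    exact hx
  exact this

lemma contract_expand (Z : Finset (Fin (n - Y.card))) : contract Y (expand Y Z) = Z := by
  ext a
  simp [expand, complEmb_notMem]

lemma expand_contract {X : Finset (Fin n)} (h : Y ⊆ X) : expand Y (contract Y X) = X := by
  ext x
  simp only [expand, mem_union, mem_map, mem_contract, RelEmbedding.coe_toEmbedding]
  refine ⟨by rintro (hx | ⟨a, ha, rfl⟩); exacts [h hx, ha], fun hx => ?_⟩
  by_cases hxY : x ∈ Y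
  · exact Or.inl hxY
  · obtain ⟨a, rfl⟩ := exists_complEmb_eq hxY
    exact Or.inr ⟨a, hx, rfl⟩

lemma card_expand (Z : Finset (Fin (n - Y.card))) : (expand Y Z).card = Y.card + Z.card := by
  rw [expand, card_union_of_disjoint, card_map]
  exact disjoint_right.2 fun x hx => by
    obtain ⟨a, -, rfl⟩ := mem_map.1 hx
    exact complEmb_notMem a

lemma card_contract {X : Finset (Fin n)} (h : Y ⊆ X) : (contract Y X).card + Y.card = X.card := by
  conv_rhs => rw [← expand_contract h, card_expand]
  exact add_comm _ _

lemma contract_subset_contract_iff {X X' : Finset (Fin n)} (h : Y ⊆ X') :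
    contract Y X ⊆ contract Y X' ↔ X ⊆ X' := by
  refine ⟨fun hXX' x hx => ?_, fun hXX' a ha => mem_contract.2 (hXX' (mem_contract.1 ha))⟩
  by_cases hxY : x ∈ Y
  · exact h hxY
  · obtain ⟨a, rfl⟩ := exists_complEmb_eq hxY
    exact mem_contract.1 (hXX' (mem_contract.2 hx))

lemma injOn_contract {S : Finset (Finset (Fin n))} (hS : ∀ X ∈ S, Y ⊆ X) :
    Set.InjOn (contract Y) S := fun X hX X' hX' h =>
  ((contract_subset_contract_iff (hS X' hX')).1 h.le).antisymm
    ((contract_subset_contract_iff (hS X hX)).1 h.ge)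

lemma contract_inf (S : Finset (Finset (Fin n))) :
    contract Y (S.inf id) = (S.image (contract Y)).inf id := by
  ext a
  simp [mem_inf]

lemma codim_contract (hYd : Y.card ≤ d) {X : Finset (Fin n)} (h : Y ⊆ X) :
    codim (d - Y.card) (contract Y X) = codim d X := by
  have := card_contract h
  simp only [codim]
  omega

lemma DL_image_contract (hYd : Y.card ≤ d) {S : Finset (Finset (Fin n))}
    (hS : ∀ X ∈ S, Y ⊆ X) : DL (d - Y.card) (S.image (contract Y)) = DL d S := by
  rw [DL_eq_codim_sub_rhoL, DL_eq_codim_sub_rhoL, rhoL_eq_sum_codim, rhoL_eq_sum_codim,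
    sum_image (injOn_contract hS), ← contract_inf,
    codim_contract hYd (Finset.le_inf hS : Y ⊆ S.inf id),
    sum_congr rfl fun X hX => codim_contract hYd (hS X hX)]

lemma image_contract_mem_LLower_iff (hYd : Y.card ≤ d) {S : Finset (Finset (Fin n))}
    (hS : ∀ X ∈ S, Y ⊆ X) :
    S.image (contract Y) ∈ LLower (n - Y.card) (d - Y.card) ↔ S ∈ LLower n d := by
  have hcard : ∀ S' ⊆ S, (S'.image (contract Y)).card = S'.card := fun S' hS' =>
    card_image_of_injOn (injOn_contract fun X hX => hS X (hS' hX))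
  refine and_congr ⟨fun h X hX => ?_, fun h W hW => ?_⟩ ⟨fun h S' hS' hc => ?_, fun h W hW hc => ?_⟩
  · have := card_contract (hS X hX)
    have := h _ (mem_image_of_mem _ hX)
    omega
  · obtain ⟨X, hX, rfl⟩ := mem_image.1 hW
    have := card_contract (hS X hX)
    have := h X hX
    omega
  · rw [← DL_image_contract hYd fun X hX => hS X (hS' hX)]
    exact h _ (image_subset_image hS') (hcard S' hS' ▸ hc)
  · obtain ⟨S', hS', rfl⟩ := subset_image_iff.1 hW
    rw [DL_image_contract hYd fun X hX => hS X (hS' hX)]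
    exact h S' hS' (hcard S' hS' ▸ hc)

lemma refines_image_contract_iff {S S' : Finset (Finset (Fin n))} (hS : ∀ X ∈ S, Y ⊆ X) :
    Refines (S.image (contract Y)) (S'.image (contract Y)) ↔ Refines S S' := by
  simp only [Refines, forall_mem_image, exists_mem_image]
  exact forall₂_congr fun X hX => exists_congr fun X' =>
    and_congr_right fun _ => contract_subset_contract_iff (hS X hX)

lemma IdealSub.image_contract_mem (hYd : Y.card ≤ d) (S : IdealSub n d {Y}) :
    S.1.image (contract Y) ∈ LLower (n - Y.card) (d - Y.card) :=
  (image_contract_mem_LLower_iff hYd fun _ => S.subset_of_mem).2 S.2.1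

lemma image_expand_mem_IdealSub (hYd : Y.card ≤ d) (Z : LLower (n - Y.card) (d - Y.card)) :
    Z.1.image (expand Y) ∈ LLower n d ∧ leLow d (Z.1.image (expand Y)) {Y} := by
  have hsup : ∀ X ∈ Z.1.image (expand Y), Y ⊆ X := by
    simp [expand]
  have hZ : (Z.1.image (expand Y)).image (contract Y) = Z.1 := by
    simp [image_image, Function.comp_def, contract_expand]
  refine IdealSub.prop_of_refines (singleton_mem_LLower hYd) ?_
    fun X hX => ⟨Y, mem_singleton_self Y, hsup X hX⟩
  rw [← image_contract_mem_LLower_iff hYd hsup, hZ]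
  exact Z.2

def idealSingletonIso (hYd : Y.card ≤ d) :
    IdealSub n d {Y} ≃o LLower (n - Y.card) (d - Y.card) where
  toFun S := ⟨S.1.image (contract Y), S.image_contract_mem hYd⟩
  invFun Z := ⟨Z.1.image (expand Y), image_expand_mem_IdealSub hYd Z⟩
  left_inv S := Subtype.ext <| by
    simp only [image_image]
    exact (image_congr fun X hX => expand_contract (S.subset_of_mem hX)).trans image_id'
  right_inv Z := Subtype.ext <| by
    simp [image_image, Function.comp_def, contract_expand]
  map_rel_iff' {S S'} := by
    rw [LLower.le_iff, IdealSub.le_iff]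
    exact refines_image_contract_iff fun _ => S.subset_of_mem

end Contraction

def OrderIso.piCongrRight {ι : Type*} {α β : ι → Type*} [∀ i, LE (α i)] [∀ i, LE (β i)]
    (e : ∀ i, α i ≃o β i) : (∀ i, α i) ≃o (∀ i, β i) where
  toEquiv := Equiv.piCongrRight fun i => (e i).toEquiv
  map_rel_iff' := forall_congr' fun i => (e i).map_rel_iff

theorem stmt13_general (d k : ℕ) (T : Finset (Finset (Fin (d + k + 1))))
    (hT : T ∈ LLower (d + k + 1) d) :
    Nonempty (IdealSub (d + k + 1) d T ≃o
      ((Ti : ↥T) → IdealSub (d + k + 1) d {Ti.1})) ∧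
    Nonempty (IdealSub (d + k + 1) d T ≃o
      ((Ti : ↥T) →
        ↥(LLower (d + k + 1 - (Ti.1 : Finset (Fin (d + k + 1))).card)
            (d - (Ti.1 : Finset (Fin (d + k + 1))).card)))) :=
  ⟨⟨idealProdIso hT⟩,
    ⟨(idealProdIso hT).trans (OrderIso.piCongrRight fun Y => idealSingletonIso (hT.1 Y.1 Y.2))⟩⟩

/-- For `T ∈ L_{d+k+1,d}`, `T ≠ ∅`, the order ideal generated by `T` is
order-isomorphic to the product `Π_{Tᵢ ∈ T} I({Tᵢ})`, and hence to
`Π_{Tᵢ ∈ T} L_{k+codim_d(Tᵢ), codim_d(Tᵢ)-1}`. -/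
theorem stmt13 (d k : ℕ) (T : Finset (Finset (Fin (d + k + 1))))
    (hT : T ∈ LLower (d + k + 1) d) (hne : T ≠ ∅) :
    Nonempty (IdealSub (d + k + 1) d T ≃o
      ((Ti : ↥T) → IdealSub (d + k + 1) d {Ti.1})) ∧
    Nonempty (IdealSub (d + k + 1) d T ≃o
      ((Ti : ↥T) →
        ↥(LLower (d + k + 1 - (Ti.1 : Finset (Fin (d + k + 1))).card)
            (d - (Ti.1 : Finset (Fin (d + k + 1))).card)))) :=
  stmt13_general d k T hT
end

section
/- The Möbius function of L_{n,2} satisfies μ_{n,2}(0̂, 1̂) = −(n−2)(n−1)(n²−3n+4)/8, and the characteristic polynomial of the arrangement A_{n,2} generated by n generic points in the plane is χ(A_{n,2}, t) = t² − C(n,2)·t + (n(n−2) + 3·C(n,4)). -/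
/-- `L_{n,d}` as a finite set of collections. -/
noncomputable def LLowF (n d : ℕ) : Finset (Finset (Finset (Fin n))) :=
  @Finset.filter _ (fun T => T ∈ LLower n d) (Classical.decPred _) Finset.univ

/-- The closed interval `[a,b]` inside the poset `L_{n,d}`. -/
noncomputable def intervalF (n d : ℕ) (a b : Finset (Finset (Fin n))) :
    Finset (Finset (Finset (Fin n))) :=
  @Finset.filter _ (fun c => c ∈ LLower n d ∧ leLow d a c ∧ leLow d c b)
    (Classical.decPred _) Finset.univ

/-- The rank `ρ_d` as a natural number. -/
def rhoLN {α : Type*} (d : ℕ) (T : Finset (Finset α)) : ℕ :=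
  ∑ X ∈ T, (d + 1 - X.card)

open Finset

variable {n : ℕ}

lemma DL_pair_s16 {X Y : Finset (Fin n)} (h : X ≠ Y) :
    DL 2 {X, Y} = ((X.card : ℤ) + Y.card) - 3 - ((X ∩ Y).card : ℤ) := by
  simp [DL, Finset.sum_pair h, Finset.inf_insert, Finset.inf_singleton]
  ring

lemma empty_mem : (∅ : Finset (Finset (Fin n))) ∈ LLower n 2 := by
  constructor
  · intro X hX; simp at hX
  · intro T' hT' hcard
    have := Finset.subset_empty.mp hT'
    subst this; simp at hcard

lemma singleton_mem {X : Finset (Fin n)} (h : X.card ≤ 2) :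
    ({X} : Finset (Finset (Fin n))) ∈ LLower n 2 := by
  constructor
  · intro Y hY; simp at hY; subst hY; exact h
  · intro T' hT' hcard
    rcases Finset.subset_singleton_iff.mp hT' with rfl | rfl <;> simp at hcard

lemma top_mem : ({∅} : Finset (Finset (Fin n))) ∈ LLower n 2 :=
  singleton_mem (by simp)

lemma pair_mem {X Y : Finset (Fin n)} (hX : X.card = 2) (hY : Y.card = 2)
    (hXY : X ∩ Y = ∅) (hne : X ≠ Y) : ({X, Y} : Finset (Finset (Fin n))) ∈ LLower n 2 := by
  constructor
  · intro Z hZ; simp at hZ; rcases hZ with rfl | rfl <;> omega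
  · intro T' hT' hcard
    have hcard2 : ({X, Y} : Finset (Finset (Fin n))).card = 2 := Finset.card_pair hne
    have : T' = {X, Y} := Finset.eq_of_subset_of_card_le hT' (by omega)
    subst this
    rw [DL_pair_s16 hne, hX, hY, hXY]
    simp

lemma rho_ge_card {T : Finset (Finset (Fin n))} (hT : T ∈ LLower n 2) :
    (T.card : ℤ) ≤ rhoL 2 T := by
  have : ∀ X ∈ T, (1 : ℤ) ≤ ((2 : ℕ) : ℤ) + 1 - X.card := by
    intro X hX
    have := hT.1 X hX
    have : (X.card : ℤ) ≤ 2 := by exact_mod_cast this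
    omega
  calc (T.card : ℤ) = ∑ _X ∈ T, (1 : ℤ) := by simp
    _ ≤ rhoL 2 T := Finset.sum_le_sum this

lemma card_le_two {T : Finset (Finset (Fin n))} (hT : T ∈ LLower n 2) : T.card ≤ 2 := by
  by_contra h
  push_neg at h
  obtain ⟨T', hT'sub, hT'card⟩ := Finset.exists_subset_card_eq (show 3 ≤ T.card by omega)
  have hpos := hT.2 T' hT'sub (by omega)
  have hub : ∀ X ∈ T', (1:ℤ) ≤ ((2:ℕ):ℤ) + 1 - X.card := by
    intro X hX
    have := hT.1 X (hT'sub hX)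
    have : (X.card : ℤ) ≤ 2 := by exact_mod_cast this
    omega
  have h3 : (3 : ℤ) ≤ ∑ X ∈ T', (((2:ℕ):ℤ) + 1 - X.card) := by
    calc (3:ℤ) = ∑ _X ∈ T', (1:ℤ) := by simp [hT'card]
      _ ≤ _ := Finset.sum_le_sum hub
  have hinf : (0 : ℤ) ≤ ((T'.inf id).card : ℤ) := by positivity
  unfold DL at hpos
  omega

lemma mem_iff {T : Finset (Finset (Fin n))} :
    T ∈ LLower n 2 ↔ T = ∅ ∨ T = {∅} ∨
      (∃ X : Finset (Fin n), (X.card = 1 ∨ X.card = 2) ∧ T = {X}) ∨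
      (∃ X Y : Finset (Fin n), X.card = 2 ∧ Y.card = 2 ∧ X ∩ Y = ∅ ∧ X ≠ Y ∧ T = {X, Y}) := by
  constructor
  · intro hT
    have hc2 := card_le_two hT
    interval_cases h : T.card
    · left; exact Finset.card_eq_zero.mp h
    · obtain ⟨X, rfl⟩ := Finset.card_eq_one.mp h
      have hXc := hT.1 X (by simp)
      interval_cases hX : X.card
      · right; left; rw [Finset.card_eq_zero.mp hX]
      · right; right; left; exact ⟨X, Or.inl hX, rfl⟩
      · right; right; left; exact ⟨X, Or.inr hX, rfl⟩
    · obtain ⟨X, Y, hne, rfl⟩ := Finset.card_eq_two.mp h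
      have hpos := hT.2 {X, Y} subset_rfl (by rw [Finset.card_pair hne]; omega)
      rw [DL_pair_s16 hne] at hpos
      have hXc : X.card ≤ 2 := hT.1 X (by simp)
      have hYc : Y.card ≤ 2 := hT.1 Y (by simp)
      right; right; right
      refine ⟨X, Y, by omega, by omega, ?_, hne, rfl⟩
      have : (X ∩ Y).card = 0 := by omega
      exact Finset.card_eq_zero.mp this
  · rintro (rfl | rfl | ⟨X, hX, rfl⟩ | ⟨X, Y, hX, hY, hXY, hne, rfl⟩)
    · exact empty_mem
    · exact top_mem
    · exact singleton_mem (by omega)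
    · exact pair_mem hX hY hXY hne

lemma rho_empty : rhoL 2 (∅ : Finset (Finset (Fin n))) = 0 := by simp [rhoL]

lemma rho_singleton (X : Finset (Fin n)) :
    rhoL 2 ({X} : Finset (Finset (Fin n))) = 3 - (X.card : ℤ) := by
  simp [rhoL]

lemma rho_pair {X Y : Finset (Fin n)} (h : X ≠ Y) :
    rhoL 2 ({X, Y} : Finset (Finset (Fin n))) = 6 - (X.card : ℤ) - Y.card := by
  simp [rhoL, Finset.sum_pair h]; ring

lemma botLe {c : Finset (Finset (Fin n))} (hc : c ∈ LLower n 2) :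
    leLow 2 (∅ : Finset (Finset (Fin n))) c := by
  rcases eq_or_ne c ∅ with rfl | hne
  · exact Or.inl rfl
  · refine Or.inr ⟨?_, by simp⟩
    rw [rho_empty]
    have h1 : 1 ≤ c.card := Finset.card_pos.mpr (Finset.nonempty_iff_ne_empty.mpr hne)
    have h2 : (1 : ℤ) ≤ c.card := by exact_mod_cast h1
    have h3 := rho_ge_card hc
    omega

lemma rho_lt_three {c : Finset (Finset (Fin n))} (hc : c ∈ LLower n 2)
    (hne : c ≠ ({∅} : Finset (Finset (Fin n)))) : rhoL 2 c < 3 := by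
  rcases mem_iff.mp hc with rfl | rfl | ⟨X, hX, rfl⟩ | ⟨X, Y, hX, hY, hXY, hne', rfl⟩
  · rw [rho_empty]; omega
  · exact absurd rfl hne
  · rw [rho_singleton]; rcases hX with h | h <;> rw [h] <;> norm_num
  · rw [rho_pair hne', hX, hY]; norm_num

lemma leTop {c : Finset (Finset (Fin n))} (hc : c ∈ LLower n 2) :
    leLow 2 c ({∅} : Finset (Finset (Fin n))) := by
  rcases eq_or_ne c ({∅} : Finset (Finset (Fin n))) with rfl | hne
  · exact Or.inl rfl
  · refine Or.inr ⟨?_, fun X _ => ⟨∅, by simp⟩⟩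
    have := rho_lt_three hc hne
    rw [rho_singleton]
    simpa using this

lemma mem_intervalF {b c : Finset (Finset (Fin n))} :
    c ∈ intervalF n 2 ∅ b ↔ c ∈ LLower n 2 ∧ leLow 2 c b := by
  simp only [intervalF, Finset.mem_filter, Finset.mem_univ, true_and]
  constructor
  · rintro ⟨h1, _, h3⟩; exact ⟨h1, h3⟩
  · rintro ⟨h1, h3⟩; exact ⟨h1, botLe h1, h3⟩

lemma interval_line {X : Finset (Fin n)} (hX : X.card = 2) :
    intervalF n 2 ∅ {X} = {∅, ({X} : Finset (Finset (Fin n)))} := by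
  ext c
  rw [mem_intervalF]
  simp only [Finset.mem_insert, Finset.mem_singleton]
  constructor
  · rintro ⟨hc, hle | ⟨hrho, _⟩⟩
    · right; exact hle
    · left
      rw [rho_singleton, hX] at hrho
      norm_num at hrho
      have h3 := rho_ge_card hc
      have : (c.card : ℤ) < 1 := by omega
      have : c.card = 0 := by exact_mod_cast by omega
      exact Finset.card_eq_zero.mp this
  · rintro (rfl | rfl)
    · exact ⟨empty_mem, botLe (singleton_mem (by omega))⟩
    · exact ⟨singleton_mem (by omega), Or.inl rfl⟩

noncomputable def LinesThrough (n : ℕ) (a : Fin n) : Finset (Finset (Fin n)) :=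
  (Finset.univ.powersetCard 2).filter (fun Z => a ∈ Z)

lemma interval_point (a : Fin n) :
    intervalF n 2 ∅ {({a} : Finset (Fin n))} =
      insert (∅ : Finset (Finset (Fin n)))
        (insert ({({a} : Finset (Fin n))} : Finset (Finset (Fin n)))
          ((LinesThrough n a).image (fun Z => ({Z} : Finset (Finset (Fin n)))))) := by
  ext c
  rw [mem_intervalF]
  simp only [Finset.mem_insert, Finset.mem_image, LinesThrough, Finset.mem_filter,
    Finset.mem_powersetCard, Finset.mem_univ]
  constructor
  · rintro ⟨hc, hle | ⟨hrho, hcont⟩⟩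
    · right; left; exact hle
    · rw [rho_singleton] at hrho
      simp only [Finset.card_singleton] at hrho
      norm_num at hrho
      rcases mem_iff.mp hc with rfl | rfl | ⟨X, hX, rfl⟩ | ⟨X, Y, hX, hY, hXY, hne', rfl⟩
      · left; rfl
      · exfalso
        obtain ⟨Y, hY, hYsub⟩ := hcont ∅ (by simp)
        simp only [Finset.mem_singleton] at hY
        subst hY
        have := hYsub (by simp : a ∈ ({a} : Finset (Fin n)))
        simp at this
      · rcases hX with h1 | h2
        · exfalso; rw [rho_singleton, h1] at hrho; norm_num at hrho
        · right; right
          refine ⟨X, ⟨⟨Finset.subset_univ _, h2⟩, ?_⟩, rfl⟩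
          obtain ⟨Y, hY, hYsub⟩ := hcont X (by simp)
          simp only [Finset.mem_singleton] at hY
          subst hY
          exact hYsub (by simp)
      · exfalso; rw [rho_pair hne', hX, hY] at hrho; norm_num at hrho
  · rintro (rfl | rfl | ⟨Z, ⟨⟨_, hZ2⟩, haZ⟩, rfl⟩)
    · exact ⟨empty_mem, botLe (singleton_mem (by simp))⟩
    · exact ⟨singleton_mem (by simp), Or.inl rfl⟩
    · refine ⟨singleton_mem (by omega), Or.inr ⟨?_, ?_⟩⟩
      · rw [rho_singleton, rho_singleton, hZ2]; simp
      · intro W hW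
        simp only [Finset.mem_singleton] at hW
        subst hW
        exact ⟨{a}, by simp, Finset.singleton_subset_iff.mpr haZ⟩

lemma interval_pair {X Y : Finset (Fin n)} (hX : X.card = 2) (hY : Y.card = 2)
    (hXY : X ∩ Y = ∅) (hne : X ≠ Y) :
    intervalF n 2 ∅ {X, Y} =
      {(∅ : Finset (Finset (Fin n))), {X}, {Y}, {X, Y}} := by
  ext c
  rw [mem_intervalF]
  simp only [Finset.mem_insert, Finset.mem_singleton]
  constructor
  · rintro ⟨hc, hle | ⟨hrho, hcont⟩⟩
    · right; right; right; exact hle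
    · rw [rho_pair hne, hX, hY] at hrho
      norm_num at hrho
      rcases mem_iff.mp hc with rfl | rfl | ⟨Z, hZ, rfl⟩ | ⟨Z, W, hZ, hW, hZW, hne', rfl⟩
      · left; rfl
      · exfalso
        obtain ⟨V, hV, hVsub⟩ := hcont ∅ (by simp)
        simp only [Finset.mem_insert, Finset.mem_singleton] at hV
        have : V = ∅ := Finset.subset_empty.mp hVsub
        subst this
        rcases hV with rfl | rfl
        · simp at hX
        · simp at hY
      · rcases hZ with h1 | h2
        · exfalso; rw [rho_singleton, h1] at hrho; norm_num at hrho
        · obtain ⟨V, hV, hVsub⟩ := hcont Z (by simp)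
          simp only [Finset.mem_insert, Finset.mem_singleton] at hV
          rcases hV with rfl | rfl
          · right; left
            rw [Finset.eq_of_subset_of_card_le hVsub (by omega)]
          · right; right; left
            rw [Finset.eq_of_subset_of_card_le hVsub (by omega)]
      · exfalso; rw [rho_pair hne', hZ, hW] at hrho; norm_num at hrho
  · rintro (rfl | rfl | rfl | rfl)
    · exact ⟨empty_mem, botLe (pair_mem hX hY hXY hne)⟩
    · refine ⟨singleton_mem (by omega), Or.inr ⟨?_, ?_⟩⟩
      · rw [rho_singleton, rho_pair hne, hX, hY]; norm_num
      · intro W hW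
        simp only [Finset.mem_singleton] at hW
        subst hW
        exact ⟨W, by simp, subset_rfl⟩
    · refine ⟨singleton_mem (by omega), Or.inr ⟨?_, ?_⟩⟩
      · rw [rho_singleton, rho_pair hne, hX, hY]; norm_num
      · intro W hW
        simp only [Finset.mem_singleton] at hW
        subst hW
        exact ⟨W, by simp, subset_rfl⟩
    · exact ⟨pair_mem hX hY hXY hne, Or.inl rfl⟩

lemma interval_top : intervalF n 2 ∅ ({∅} : Finset (Finset (Fin n))) = LLowF n 2 := by
  ext c
  rw [mem_intervalF]
  simp only [LLowF, Finset.mem_filter, Finset.mem_univ, true_and]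
  exact ⟨fun h => h.1, fun h => ⟨h, leTop h⟩⟩

lemma card_lines_through (a : Fin n) : (LinesThrough n a).card = n - 1 := by
  have : (LinesThrough n a).card = (({a}ᶜ : Finset (Fin n)).powersetCard 1).card := by
    refine Finset.card_bij' (fun Z _ => Z.erase a) (fun S _ => insert a S) ?hi ?hj ?left ?right
    case hi =>
      intro Z hZ
      simp only [LinesThrough, Finset.mem_filter, Finset.mem_powersetCard] at hZ
      obtain ⟨⟨_, hZ2⟩, haZ⟩ := hZ
      rw [Finset.mem_powersetCard]
      constructor
      · intro x hx
        simp only [Finset.mem_erase] at hx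
        simp [hx.1]
      · rw [Finset.card_erase_of_mem haZ, hZ2]
    case hj =>
      intro S hS
      rw [Finset.mem_powersetCard] at hS
      obtain ⟨hsub, hS1⟩ := hS
      have haS : a ∉ S := by
        intro h
        have := hsub h
        simp at this
      simp only [LinesThrough, Finset.mem_filter, Finset.mem_powersetCard]
      exact ⟨⟨Finset.subset_univ _, by rw [Finset.card_insert_of_notMem haS, hS1]⟩,
        Finset.mem_insert_self _ _⟩
    case left =>
      intro Z hZ
      simp only [LinesThrough, Finset.mem_filter] at hZ
      exact Finset.insert_erase hZ.2
    case right =>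
      intro S hS
      rw [Finset.mem_powersetCard] at hS
      have haS : a ∉ S := by
        intro h
        have := hS.1 h
        simp at this
      exact Finset.erase_insert haS
  rw [this, Finset.card_powersetCard, Finset.card_compl]
  simp [Nat.choose_one_right]

section Mu
variable (μ : Finset (Finset (Fin n)) → Finset (Finset (Fin n)) → ℤ)
  (hrefl : ∀ a ∈ LLower n 2, μ a a = 1)
  (hrec : ∀ a ∈ LLower n 2, ∀ b ∈ LLower n 2, leLow 2 a b → a ≠ b →
    ∑ c ∈ intervalF n 2 a b, μ a c = 0)

include hrefl hrec

omit hrec in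
lemma mu_empty : μ ∅ ∅ = 1 := hrefl ∅ empty_mem

lemma mu_line {X : Finset (Fin n)} (hX : X.card = 2) : μ ∅ {X} = -1 := by
  have hne : (∅ : Finset (Finset (Fin n))) ≠ {X} := Ne.symm (Finset.singleton_ne_empty X)
  have h := hrec ∅ empty_mem {X} (singleton_mem (by omega)) (botLe (singleton_mem (by omega))) hne
  rw [interval_line hX, Finset.sum_pair hne, mu_empty μ hrefl] at h
  omega

lemma mu_point (a : Fin n) : μ ∅ {({a} : Finset (Fin n))} = (n : ℤ) - 2 := by
  have hmem : ({({a} : Finset (Fin n))} : Finset (Finset (Fin n))) ∈ LLower n 2 :=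
    singleton_mem (by simp)
  have hne : (∅ : Finset (Finset (Fin n))) ≠ {({a} : Finset (Fin n))} :=
    Ne.symm (Finset.singleton_ne_empty _)
  have h := hrec ∅ empty_mem _ hmem (botLe hmem) hne
  rw [interval_point a] at h
  have h1 : (∅ : Finset (Finset (Fin n))) ∉
      insert ({({a} : Finset (Fin n))} : Finset (Finset (Fin n)))
        ((LinesThrough n a).image (fun Z => ({Z} : Finset (Finset (Fin n))))) := by
    simp only [Finset.mem_insert, Finset.mem_image, not_or]
    constructor
    · intro h'; exact hne h'
    · rintro ⟨Z, _, h'⟩; exact Finset.singleton_ne_empty Z h'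
  have h2 : ({({a} : Finset (Fin n))} : Finset (Finset (Fin n))) ∉
      (LinesThrough n a).image (fun Z => ({Z} : Finset (Finset (Fin n)))) := by
    simp only [Finset.mem_image, not_exists]
    rintro Z ⟨hZ, h'⟩
    simp only [LinesThrough, Finset.mem_filter, Finset.mem_powersetCard] at hZ
    have : Z = {a} := Finset.singleton_injective h'
    rw [this] at hZ
    simp at hZ
  rw [Finset.sum_insert h1, Finset.sum_insert h2,
    Finset.sum_image (fun x _ y _ h => Finset.singleton_injective h),
    mu_empty μ hrefl] at h
  have hsum : ∑ Z ∈ LinesThrough n a, μ ∅ {Z} = -((n : ℤ) - 1) := by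
    have : ∀ Z ∈ LinesThrough n a, μ ∅ {Z} = -1 := by
      intro Z hZ
      simp only [LinesThrough, Finset.mem_filter, Finset.mem_powersetCard] at hZ
      exact mu_line μ hrefl hrec hZ.1.2
    rw [Finset.sum_congr rfl this, Finset.sum_const, card_lines_through]
    have hn : 1 ≤ n := a.pos
    simp only [nsmul_eq_mul, mul_neg_one]
    omega
  rw [hsum] at h
  omega

lemma mu_pair {X Y : Finset (Fin n)} (hX : X.card = 2) (hY : Y.card = 2)
    (hXY : X ∩ Y = ∅) (hne : X ≠ Y) : μ ∅ {X, Y} = 1 := by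
  have hmem := pair_mem hX hY hXY hne
  have hne0 : (∅ : Finset (Finset (Fin n))) ≠ {X, Y} := by
    intro h
    have : X ∈ (∅ : Finset (Finset (Fin n))) := by rw [h]; simp
    simp at this
  have h := hrec ∅ empty_mem _ hmem (botLe hmem) hne0
  rw [interval_pair hX hY hXY hne] at h
  have d1 : ({X} : Finset (Finset (Fin n))) ≠ {Y} := by
    intro h'; exact hne (Finset.singleton_injective h')
  have d2 : ({X} : Finset (Finset (Fin n))) ≠ {X, Y} := by
    intro h'
    have : Y ∈ ({X} : Finset (Finset (Fin n))) := by rw [h']; simp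
    simp only [Finset.mem_singleton] at this
    exact hne this.symm
  have d3 : ({Y} : Finset (Finset (Fin n))) ≠ {X, Y} := by
    intro h'
    have : X ∈ ({Y} : Finset (Finset (Fin n))) := by rw [h']; simp
    simp only [Finset.mem_singleton] at this
    exact hne this
  have e1 : (∅ : Finset (Finset (Fin n))) ∉
      ({({X} : Finset (Finset (Fin n))), {Y}, {X, Y}} : Finset (Finset (Finset (Fin n)))) := by
    simp only [Finset.mem_insert, Finset.mem_singleton, not_or]
    refine ⟨?_, ?_, ?_⟩
    · exact fun h' => Finset.singleton_ne_empty X h'.symm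
    · exact fun h' => Finset.singleton_ne_empty Y h'.symm
    · exact hne0
  have e2 : ({X} : Finset (Finset (Fin n))) ∉
      ({({Y} : Finset (Finset (Fin n))), {X, Y}} : Finset (Finset (Finset (Fin n)))) := by
    simp only [Finset.mem_insert, Finset.mem_singleton, not_or]
    exact ⟨d1, d2⟩
  have e3 : ({Y} : Finset (Finset (Fin n))) ∉
      ({({X, Y} : Finset (Finset (Fin n)))} : Finset (Finset (Finset (Fin n)))) := by
    simp only [Finset.mem_singleton]
    exact d3
  rw [Finset.sum_insert e1, Finset.sum_insert e2, Finset.sum_insert e3, Finset.sum_singleton,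
    mu_empty μ hrefl, mu_line μ hrefl hrec hX, mu_line μ hrefl hrec hY] at h
  omega

omit hrefl in
lemma mu_top_eq : ∑ c ∈ LLowF n 2, μ ∅ c = 0 := by
  have h := hrec ∅ empty_mem ({∅} : Finset (Finset (Fin n))) top_mem (botLe top_mem)
    (Ne.symm (Finset.singleton_ne_empty _))
  rw [interval_top] at h
  exact h

end Mu

lemma cast_choose_two (m : ℕ) : 2 * ((m.choose 2 : ℕ) : ℤ) = (m : ℤ) * ((m : ℤ) - 1) := by
  rcases m with _ | k
  · norm_num
  · have h := Nat.descFactorial_eq_factorial_mul_choose (k+1) 2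
    simp [Nat.descFactorial_succ, Nat.factorial] at h
    have h2 : 2 * (k+1).choose 2 = k * (k+1) := by omega
    have := congrArg (fun x : ℕ => (x : ℤ)) h2
    push_cast at this ⊢
    linarith

lemma cast_choose_four (m : ℕ) :
    24 * ((m.choose 4 : ℕ) : ℤ) = (m : ℤ) * ((m : ℤ) - 1) * ((m : ℤ) - 2) * ((m : ℤ) - 3) := by
  rcases m with _ | _ | _ | _ | k
  · norm_num
  · norm_num [Nat.choose]
  · norm_num [Nat.choose]
  · norm_num [Nat.choose]
  · have h1 : 24 * (k+4).choose 4 = (k+4).descFactorial 4 := by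
      rw [Nat.descFactorial_eq_factorial_mul_choose]
      norm_num [Nat.factorial]
    have h2 : (k+4).descFactorial 4 = (k+1)*(k+2)*(k+3)*(k+4) := by
      simp [Nat.descFactorial_succ]
      ring
    have h3 : 24 * (k+4).choose 4 = (k+1)*(k+2)*(k+3)*(k+4) := by omega
    have := congrArg (fun x : ℕ => (x : ℤ)) h3
    push_cast at this ⊢
    linarith

lemma choose_identity (m : ℕ) : m.choose 2 * (m - 2).choose 2 = 6 * m.choose 4 := by
  have ha : 2 * m.choose 2 = m.descFactorial 2 := by
    rw [Nat.descFactorial_eq_factorial_mul_choose]; norm_num [Nat.factorial]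
  have hb : 2 * (m-2).choose 2 = (m-2).descFactorial 2 := by
    rw [Nat.descFactorial_eq_factorial_mul_choose]; norm_num [Nat.factorial]
  have hc : 24 * m.choose 4 = m.descFactorial 4 := by
    rw [Nat.descFactorial_eq_factorial_mul_choose]; norm_num [Nat.factorial]
  have hd2 : m.descFactorial 2 = (m - 1) * m := by
    simp [Nat.descFactorial_succ]
  have hd2' : (m-2).descFactorial 2 = (m - 3) * (m - 2) := by
    have h' : m - 2 - 1 = m - 3 := by omega
    simp [Nat.descFactorial_succ, h']
  have hd4 : m.descFactorial 4 = (m-3) * ((m-2) * ((m-1) * m)) := by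
    simp [Nat.descFactorial_succ]
  have key : 4 * (m.choose 2 * (m - 2).choose 2) = 4 * (6 * m.choose 4) := by
    calc 4 * (m.choose 2 * (m - 2).choose 2)
        = (2 * m.choose 2) * (2 * (m-2).choose 2) := by ring
      _ = ((m-1) * m) * ((m-3) * (m-2)) := by rw [ha, hb, hd2, hd2']
      _ = (m-3) * ((m-2) * ((m-1) * m)) := by ring
      _ = 24 * m.choose 4 := by rw [← hd4, ← hc]
      _ = 4 * (6 * m.choose 4) := by ring
  omega

lemma pair_eq_pair_iff {A B X Y : Finset (Fin n)} (hne : X ≠ Y) :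
    ({A, B} : Finset (Finset (Fin n))) = {X, Y} ↔ (A = X ∧ B = Y) ∨ (A = Y ∧ B = X) := by
  constructor
  · intro h
    have hA : A = X ∨ A = Y := by
      have : A ∈ ({X, Y} : Finset (Finset (Fin n))) := by rw [← h]; simp
      simpa using this
    have hB : B = X ∨ B = Y := by
      have : B ∈ ({X, Y} : Finset (Finset (Fin n))) := by rw [← h]; simp
      simpa using this
    have hXm : X = A ∨ X = B := by
      have : X ∈ ({A, B} : Finset (Finset (Fin n))) := by rw [h]; simp
      simpa using this
    have hYm : Y = A ∨ Y = B := by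
      have : Y ∈ ({A, B} : Finset (Finset (Fin n))) := by rw [h]; simp
      simpa using this
    rcases hA with rfl | rfl
    · rcases hB with h1 | h1
      · exfalso
        rcases hYm with h2 | h2
        · exact hne h2.symm
        · rw [h1] at h2; exact hne h2.symm
      · left; exact ⟨rfl, h1⟩
    · rcases hB with h1 | h1
      · right; exact ⟨rfl, h1⟩
      · exfalso
        rcases hXm with h2 | h2
        · exact hne h2
        · rw [h1] at h2; exact hne h2
  · rintro (⟨rfl, rfl⟩ | ⟨rfl, rfl⟩)
    · rfl
    · exact Finset.pair_comm A B

lemma sigma_pair_eq {A B X Y : Finset (Fin n)} :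
    (⟨A, B⟩ : (_ : Finset (Fin n)) × Finset (Fin n)) = ⟨X, Y⟩ ↔ A = X ∧ B = Y := by
  constructor
  · intro h
    obtain ⟨h1, h2⟩ := Sigma.mk.inj_iff.mp h
    exact ⟨h1, eq_of_heq h2⟩
  · rintro ⟨rfl, rfl⟩; rfl

noncomputable def Doubles (n : ℕ) : Finset (Finset (Finset (Fin n))) :=
  @Finset.filter _
    (fun T => ∃ X Y : Finset (Fin n),
      X.card = 2 ∧ Y.card = 2 ∧ X ∩ Y = ∅ ∧ X ≠ Y ∧ T = {X, Y})
    (Classical.decPred _) Finset.univ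

lemma mem_doubles {T : Finset (Finset (Fin n))} :
    T ∈ Doubles n ↔ ∃ X Y : Finset (Fin n),
      X.card = 2 ∧ Y.card = 2 ∧ X ∩ Y = ∅ ∧ X ≠ Y ∧ T = {X, Y} := by
  simp [Doubles]

lemma card_doubles : (Doubles n).card = 3 * n.choose 4 := by
  classical
  set S : Finset ((_ : Finset (Fin n)) × Finset (Fin n)) :=
    (Finset.univ.powersetCard 2).sigma (fun X => (Xᶜ).powersetCard 2) with hS
  have hmap : ∀ p ∈ S, ({p.1, p.2} : Finset (Finset (Fin n))) ∈ Doubles n := by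
    rintro ⟨X, Y⟩ hp
    rw [hS, Finset.mem_sigma, Finset.mem_powersetCard, Finset.mem_powersetCard] at hp
    obtain ⟨⟨_, hX2⟩, hYsub, hY2⟩ := hp
    have hdisj : X ∩ Y = ∅ := by
      rw [Finset.eq_empty_iff_forall_notMem]
      intro x hx
      rw [Finset.mem_inter] at hx
      have := hYsub hx.2
      rw [Finset.mem_compl] at this
      exact this hx.1
    have hne : X ≠ Y := by
      rintro rfl
      have hx : X.Nonempty := Finset.card_pos.mp (by rw [hX2]; norm_num)
      obtain ⟨x, hx⟩ := hx
      have := hYsub hx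
      rw [Finset.mem_compl] at this
      exact this hx
    exact mem_doubles.mpr ⟨X, Y, hX2, hY2, hdisj, hne, rfl⟩
  have hcard := Finset.card_eq_sum_card_fiberwise hmap
  have hfiber : ∀ T ∈ Doubles n,
      (S.filter (fun p => ({p.1, p.2} : Finset (Finset (Fin n))) = T)).card = 2 := by
    intro T hT
    obtain ⟨X, Y, hX2, hY2, hXY, hne, rfl⟩ := mem_doubles.mp hT
    have hYX : Y ∩ X = ∅ := by rw [Finset.inter_comm]; exact hXY
    have hXY' : Y ⊆ Xᶜ := by
      intro x hx
      rw [Finset.mem_compl]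
      intro hx'
      have : x ∈ X ∩ Y := Finset.mem_inter.mpr ⟨hx', hx⟩
      rw [hXY] at this
      simp at this
    have hYX' : X ⊆ Yᶜ := by
      intro x hx
      rw [Finset.mem_compl]
      intro hx'
      have : x ∈ X ∩ Y := Finset.mem_inter.mpr ⟨hx, hx'⟩
      rw [hXY] at this
      simp at this
    have : S.filter (fun p => ({p.1, p.2} : Finset (Finset (Fin n))) = {X, Y}) =
        {⟨X, Y⟩, ⟨Y, X⟩} := by
      ext ⟨A, B⟩
      rw [Finset.mem_filter]
      simp only [Finset.mem_insert, Finset.mem_singleton, sigma_pair_eq]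
      constructor
      · rintro ⟨_, hpair⟩
        rcases (pair_eq_pair_iff hne).mp hpair with ⟨rfl, rfl⟩ | ⟨rfl, rfl⟩
        · left; exact ⟨rfl, rfl⟩
        · right; exact ⟨rfl, rfl⟩
      · rintro (⟨rfl, rfl⟩ | ⟨rfl, rfl⟩)
        · refine ⟨?_, rfl⟩
          rw [hS, Finset.mem_sigma, Finset.mem_powersetCard, Finset.mem_powersetCard]
          exact ⟨⟨Finset.subset_univ _, hX2⟩, hXY', hY2⟩
        · refine ⟨?_, Finset.pair_comm _ _⟩
          rw [hS, Finset.mem_sigma, Finset.mem_powersetCard, Finset.mem_powersetCard]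
          exact ⟨⟨Finset.subset_univ _, hY2⟩, hYX', hX2⟩
    rw [this]
    rw [Finset.card_pair]
    rw [Ne, sigma_pair_eq, not_and]
    intro h; exact absurd h hne
  have hsum : ∑ T ∈ Doubles n, (S.filter
      (fun p => ({p.1, p.2} : Finset (Finset (Fin n))) = T)).card = 2 * (Doubles n).card := by
    rw [Finset.sum_congr rfl hfiber, Finset.sum_const]
    ring
  have hScard : S.card = n.choose 2 * (n - 2).choose 2 := by
    rw [hS, Finset.card_sigma]
    have : ∀ X ∈ Finset.univ.powersetCard 2, ((Xᶜ : Finset (Fin n)).powersetCard 2).card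
        = (n - 2).choose 2 := by
      intro X hX
      rw [Finset.mem_powersetCard] at hX
      rw [Finset.card_powersetCard, Finset.card_compl, hX.2]
      simp
    rw [Finset.sum_congr rfl this, Finset.sum_const, Finset.card_powersetCard]
    simp [mul_comm]
  have : 2 * (Doubles n).card = 6 * n.choose 4 := by
    rw [← hsum, ← hcard, hScard, choose_identity]
  omega

noncomputable def LinesF (n : ℕ) : Finset (Finset (Finset (Fin n))) :=
  (Finset.univ.powersetCard 2).image (fun X => ({X} : Finset (Finset (Fin n))))

noncomputable def PointsF (n : ℕ) : Finset (Finset (Finset (Fin n))) :=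
  (Finset.univ : Finset (Fin n)).image
    (fun a => ({({a} : Finset (Fin n))} : Finset (Finset (Fin n))))

lemma mem_LLowF {T : Finset (Finset (Fin n))} : T ∈ LLowF n 2 ↔ T ∈ LLower n 2 := by
  simp [LLowF]

lemma mem_linesF {T : Finset (Finset (Fin n))} :
    T ∈ LinesF n ↔ ∃ X : Finset (Fin n), X.card = 2 ∧ T = {X} := by
  simp only [LinesF, Finset.mem_image, Finset.mem_powersetCard]
  constructor
  · rintro ⟨X, ⟨_, h2⟩, rfl⟩; exact ⟨X, h2, rfl⟩
  · rintro ⟨X, h2, rfl⟩; exact ⟨X, ⟨Finset.subset_univ _, h2⟩, rfl⟩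

lemma mem_pointsF {T : Finset (Finset (Fin n))} :
    T ∈ PointsF n ↔ ∃ a : Fin n, T = {({a} : Finset (Fin n))} := by
  simp only [PointsF, Finset.mem_image, Finset.mem_univ, true_and]
  constructor
  · rintro ⟨a, ha⟩; exact ⟨a, ha.symm⟩
  · rintro ⟨a, rfl⟩; exact ⟨a, rfl⟩

lemma LLowF_eq : LLowF n 2 =
    insert (∅ : Finset (Finset (Fin n)))
      (insert ({∅} : Finset (Finset (Fin n))) (LinesF n ∪ PointsF n ∪ Doubles n)) := by
  ext T
  rw [mem_LLowF, mem_iff]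
  simp only [Finset.mem_insert, Finset.mem_union, mem_linesF, mem_pointsF, mem_doubles]
  constructor
  · rintro (rfl | rfl | ⟨X, hX, rfl⟩ | ⟨X, Y, hX, hY, hXY, hne, rfl⟩)
    · left; rfl
    · right; left; rfl
    · rcases hX with h1 | h2
      · obtain ⟨a, ha⟩ := Finset.card_eq_one.mp h1
        subst ha
        right; right; left; right
        exact ⟨a, rfl⟩
      · right; right; left; left
        exact ⟨X, h2, rfl⟩
    · right; right; right
      exact ⟨X, Y, hX, hY, hXY, hne, rfl⟩
  · rintro (rfl | rfl | (⟨X, hX2, rfl⟩ | ⟨a, rfl⟩) | ⟨X, Y, hX, hY, hXY, hne, rfl⟩)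
    · left; rfl
    · right; left; rfl
    · right; right; left; exact ⟨X, Or.inr hX2, rfl⟩
    · right; right; left; exact ⟨{a}, Or.inl (by simp), rfl⟩
    · right; right; right; exact ⟨X, Y, hX, hY, hXY, hne, rfl⟩

lemma empty_notMem_rest :
    (∅ : Finset (Finset (Fin n))) ∉
      insert ({∅} : Finset (Finset (Fin n))) (LinesF n ∪ PointsF n ∪ Doubles n) := by
  intro h
  rcases Finset.mem_insert.mp h with h' | h'
  · exact Finset.singleton_ne_empty _ h'.symm
  · rcases Finset.mem_union.mp h' with h'' | h''
    · rcases Finset.mem_union.mp h'' with h3 | h3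
      · obtain ⟨X, _, hX⟩ := mem_linesF.mp h3
        exact Finset.singleton_ne_empty X hX.symm
      · obtain ⟨a, ha⟩ := mem_pointsF.mp h3
        exact Finset.singleton_ne_empty _ ha.symm
    · obtain ⟨X, Y, _, _, _, _, hT⟩ := mem_doubles.mp h''
      have : X ∈ (∅ : Finset (Finset (Fin n))) := by rw [hT]; simp
      simp at this

lemma top_notMem_union :
    ({∅} : Finset (Finset (Fin n))) ∉ LinesF n ∪ PointsF n ∪ Doubles n := by
  intro h
  rcases Finset.mem_union.mp h with h'' | h''
  · rcases Finset.mem_union.mp h'' with h3 | h3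
    · obtain ⟨X, hX2, hX⟩ := mem_linesF.mp h3
      have := Finset.singleton_injective hX.symm
      rw [this] at hX2
      simp at hX2
    · obtain ⟨a, ha⟩ := mem_pointsF.mp h3
      have := Finset.singleton_injective ha
      exact Finset.singleton_ne_empty a this.symm
  · obtain ⟨X, Y, _, _, _, hne, hT⟩ := mem_doubles.mp h''
    have h1 : ({X, Y} : Finset (Finset (Fin n))).card = 2 := Finset.card_pair hne
    rw [← hT] at h1
    simp at h1

lemma lines_disj_points : Disjoint (LinesF n) (PointsF n) := by
  rw [Finset.disjoint_left]
  intro T hT hT'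
  simp only [LinesF, PointsF, Finset.mem_image, Finset.mem_powersetCard] at hT hT'
  obtain ⟨X, ⟨_, hX2⟩, rfl⟩ := hT
  obtain ⟨a, _, h⟩ := hT'
  have := Finset.singleton_injective h
  rw [← this] at hX2
  simp at hX2

lemma union_disj_doubles : Disjoint (LinesF n ∪ PointsF n) (Doubles n) := by
  rw [Finset.disjoint_left]
  intro T hT hT'
  obtain ⟨X, Y, _, _, _, hne, rfl⟩ := mem_doubles.mp hT'
  have h2 : ({X, Y} : Finset (Finset (Fin n))).card = 2 := Finset.card_pair hne
  rcases Finset.mem_union.mp hT with h3 | h3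
  · obtain ⟨Z, _, h⟩ := mem_linesF.mp h3
    rw [h] at h2; simp at h2
  · obtain ⟨a, h⟩ := mem_pointsF.mp h3
    rw [h] at h2; simp at h2

lemma rhoLN_empty : rhoLN 2 (∅ : Finset (Finset (Fin n))) = 0 := by simp [rhoLN]

lemma rhoLN_line {X : Finset (Fin n)} (hX : X.card = 2) :
    rhoLN 2 ({X} : Finset (Finset (Fin n))) = 1 := by simp [rhoLN, hX]

lemma rhoLN_point (a : Fin n) :
    rhoLN 2 ({({a} : Finset (Fin n))} : Finset (Finset (Fin n))) = 2 := by simp [rhoLN]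

lemma rhoLN_pair {X Y : Finset (Fin n)} (hX : X.card = 2) (hY : Y.card = 2) (hne : X ≠ Y) :
    rhoLN 2 ({X, Y} : Finset (Finset (Fin n))) = 2 := by
  simp [rhoLN, Finset.sum_pair hne, hX, hY]

lemma points_inj : Function.Injective
    (fun a : Fin n => ({({a} : Finset (Fin n))} : Finset (Finset (Fin n)))) := by
  intro a b h
  have h1 := Finset.singleton_injective h
  exact Finset.singleton_injective h1


/-- For the intersection lattice `L_{n,2}` of the arrangement `A_{n,2}` of the lines
spanned by `n` generic points in the plane (minimum `0̂ = ∅`, maximum `1̂ = {∅}`):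
`μ(0̂,1̂) = -(n-2)(n-1)(n²-3n+4)/8` and
`χ(A_{n,2},t) = t² - C(n,2)·t + (n(n-2) + 3·C(n,4))`. -/
theorem stmt16 (n : ℕ)
    (μ : Finset (Finset (Fin n)) → Finset (Finset (Fin n)) → ℤ)
    (hrefl : ∀ a ∈ LLower n 2, μ a a = 1)
    (hrec : ∀ a ∈ LLower n 2, ∀ b ∈ LLower n 2, leLow 2 a b → a ≠ b →
      ∑ c ∈ intervalF n 2 a b, μ a c = 0) :
    8 * μ ∅ {(∅ : Finset (Fin n))} =
      -(((n : ℤ) - 2) * ((n : ℤ) - 1) * ((n : ℤ) ^ 2 - 3 * n + 4)) ∧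
    ∀ t : ℤ,
      ∑ T ∈ (LLowF n 2).erase {(∅ : Finset (Fin n))},
        μ ∅ T * t ^ (2 - rhoLN 2 T) =
      t ^ 2 - (n.choose 2 : ℤ) * t + ((n : ℤ) * ((n : ℤ) - 2) + 3 * (n.choose 4 : ℤ)) := by
  have hUdisj : Disjoint (LinesF n ∪ PointsF n) (Doubles n) := union_disj_doubles
  have hLPdisj : Disjoint (LinesF n) (PointsF n) := lines_disj_points
  have hEU : (∅ : Finset (Finset (Fin n))) ∉ LinesF n ∪ PointsF n ∪ Doubles n := by
    intro h
    exact empty_notMem_rest (Finset.mem_insert_of_mem h)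
  -- sums of μ over the classes
  have hsumL : ∑ T ∈ LinesF n, μ ∅ T = -((n.choose 2 : ℕ) : ℤ) := by
    rw [LinesF, Finset.sum_image (fun x _ y _ h => Finset.singleton_injective h)]
    have : ∀ X ∈ Finset.univ.powersetCard 2, μ ∅ ({X} : Finset (Finset (Fin n))) = -1 := by
      intro X hX
      exact mu_line μ hrefl hrec (Finset.mem_powersetCard.mp hX).2
    rw [Finset.sum_congr rfl this, Finset.sum_const, Finset.card_powersetCard]
    simp
  have hsumP : ∑ T ∈ PointsF n, μ ∅ T = (n : ℤ) * ((n : ℤ) - 2) := by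
    rw [PointsF, Finset.sum_image (fun x _ y _ h => points_inj h)]
    have : ∀ a ∈ (Finset.univ : Finset (Fin n)),
        μ ∅ ({({a} : Finset (Fin n))} : Finset (Finset (Fin n))) = (n : ℤ) - 2 := by
      intro a _
      exact mu_point μ hrefl hrec a
    rw [Finset.sum_congr rfl this, Finset.sum_const, Finset.card_univ, Fintype.card_fin]
    simp [nsmul_eq_mul]
  have hsumD : ∑ T ∈ Doubles n, μ ∅ T = 3 * ((n.choose 4 : ℕ) : ℤ) := by
    have : ∀ T ∈ Doubles n, μ ∅ T = 1 := by
      intro T hT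
      obtain ⟨X, Y, hX, hY, hXY, hne, rfl⟩ := mem_doubles.mp hT
      exact mu_pair μ hrefl hrec hX hY hXY hne
    rw [Finset.sum_congr rfl this, Finset.sum_const, card_doubles]
    push_cast
    ring
  have htop := mu_top_eq μ hrec
  rw [LLowF_eq, Finset.sum_insert empty_notMem_rest, Finset.sum_insert top_notMem_union,
    Finset.sum_union hUdisj, Finset.sum_union hLPdisj, hsumL, hsumP, hsumD,
    mu_empty μ hrefl] at htop
  have hmu_top : μ ∅ {(∅ : Finset (Fin n))} =
      ((n.choose 2 : ℕ) : ℤ) - 1 - (n : ℤ) * ((n : ℤ) - 2) - 3 * ((n.choose 4 : ℕ) : ℤ) := by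
    linarith
  constructor
  · rw [hmu_top]
    linear_combination (4 : ℤ) * cast_choose_two n - cast_choose_four n
  · intro t
    have herase : (LLowF n 2).erase {(∅ : Finset (Fin n))} =
        insert (∅ : Finset (Finset (Fin n))) (LinesF n ∪ PointsF n ∪ Doubles n) := by
      rw [LLowF_eq, Finset.erase_insert_of_ne (Ne.symm (Finset.singleton_ne_empty _)),
        Finset.erase_insert top_notMem_union]
    rw [herase, Finset.sum_insert hEU, Finset.sum_union hUdisj, Finset.sum_union hLPdisj]
    have hL : ∑ T ∈ LinesF n, μ ∅ T * t ^ (2 - rhoLN 2 T) = -((n.choose 2 : ℕ) : ℤ) * t := by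
      rw [LinesF, Finset.sum_image (fun x _ y _ h => Finset.singleton_injective h)]
      have : ∀ X ∈ Finset.univ.powersetCard 2,
          μ ∅ ({X} : Finset (Finset (Fin n))) * t ^ (2 - rhoLN 2 ({X} : Finset (Finset (Fin n))))
            = -t := by
        intro X hX
        have h2 := (Finset.mem_powersetCard.mp hX).2
        rw [mu_line μ hrefl hrec h2, rhoLN_line h2]
        ring
      rw [Finset.sum_congr rfl this, Finset.sum_const, Finset.card_powersetCard]
      simp [nsmul_eq_mul]
    have hP : ∑ T ∈ PointsF n, μ ∅ T * t ^ (2 - rhoLN 2 T) = (n : ℤ) * ((n : ℤ) - 2) := by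
      rw [PointsF, Finset.sum_image (fun x _ y _ h => points_inj h)]
      have : ∀ a ∈ (Finset.univ : Finset (Fin n)),
          μ ∅ ({({a} : Finset (Fin n))} : Finset (Finset (Fin n))) *
            t ^ (2 - rhoLN 2 ({({a} : Finset (Fin n))} : Finset (Finset (Fin n))))
          = (n : ℤ) - 2 := by
        intro a _
        rw [mu_point μ hrefl hrec a, rhoLN_point a]
        ring
      rw [Finset.sum_congr rfl this, Finset.sum_const, Finset.card_univ, Fintype.card_fin]
      simp [nsmul_eq_mul]
    have hD : ∑ T ∈ Doubles n, μ ∅ T * t ^ (2 - rhoLN 2 T) = 3 * ((n.choose 4 : ℕ) : ℤ) := by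
      have : ∀ T ∈ Doubles n, μ ∅ T * t ^ (2 - rhoLN 2 T) = 1 := by
        intro T hT
        obtain ⟨X, Y, hX, hY, hXY, hne, rfl⟩ := mem_doubles.mp hT
        rw [mu_pair μ hrefl hrec hX hY hXY hne, rhoLN_pair hX hY hne]
        ring
      rw [Finset.sum_congr rfl this, Finset.sum_const, card_doubles]
      push_cast
      ring
    rw [hL, hP, hD, mu_empty μ hrefl, rhoLN_empty]
    ring
end

section
/- For a partition γ = (γ_1, γ_2) with γ_1 > γ_2 ≥ 1 and γ_1 + γ_2 ≤ d, the number λ_{n,d}((γ_1,γ_2)) of elements of L_{n,d} of type (γ_1,γ_2) equals Σ_{j'=1}^{d+1−γ_1−γ_2} C(d+1+j', γ_1+j') · C(d+1−γ_1, γ_2+j') · C(n, d+1+j'); when γ_1 = γ_2 the same sum is divided by 2. -/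
/-
For distinct `A`, `B` one has `D_d({A, B}) = |A ∪ B| - (d + 1)`, so an element of type `(γ₁, γ₂)`
is a pair of sets of sizes `d + 1 - γ₁` and `d + 1 - γ₂` whose union has `d + 1 + j` elements,
`1 ≤ j ≤ d + 1 - γ₁ - γ₂`. The ordered such pairs with a prescribed union `U` are counted by
choosing `A ⊆ U` (`C(d + 1 + j, γ₁ + j)` ways) and then `A ∩ B ⊆ A` (`C(d + 1 - γ₁, γ₂ + j)` ways),
and `U` can be chosen in `C(n, d + 1 + j)` ways. An unordered pair of type `(γ₁, γ₂)` has exactly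
one ordering of this kind when `γ₁ ≠ γ₂`, and two when `γ₁ = γ₂`.
-/

open Finset

section PairCounting

variable {α : Type*} [DecidableEq α] [Fintype α]

theorem card_pairs_union_eq (U : Finset α) {a b : ℕ} (h : #U ≤ a + b) :
    #{p : Finset α × Finset α | p.1 ∪ p.2 = U ∧ #p.1 = a ∧ #p.2 = b} =
      (#U).choose a * a.choose (a + b - #U) := by
  have hbij : #{p : Finset α × Finset α | p.1 ∪ p.2 = U ∧ #p.1 = a ∧ #p.2 = b} =
      #((U.powersetCard a).sigma fun A => A.powersetCard (a + b - #U)) := by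
    refine card_nbij' (fun p => ⟨p.1, p.1 ∩ p.2⟩) (fun q => (q.1, (U \ q.1) ∪ q.2))
      ?_ ?_ ?_ ?_
    · rintro ⟨A, B⟩ hp
      simp only [coe_filter, mem_univ, true_and, Set.mem_ofPred_eq] at hp
      obtain ⟨rfl, rfl, rfl⟩ := hp
      have := card_inter_add_card_union A B
      simp only [coe_sigma, Set.mem_sigma_iff, mem_coe, mem_powersetCard]
      exact ⟨⟨subset_union_left, trivial⟩, inter_subset_left, by omega⟩
    · rintro ⟨A, S⟩ hq
      simp only [coe_sigma, Set.mem_sigma_iff, mem_coe, mem_powersetCard] at hq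
      obtain ⟨⟨hAU, rfl⟩, hSA, hS⟩ := hq
      have hdisj : Disjoint (U \ A) S := disjoint_of_subset_right hSA sdiff_disjoint
      have := card_le_card hAU
      simp only [coe_filter, mem_univ, true_and, Set.mem_ofPred_eq]
      constructor
      · rw [← union_assoc, union_sdiff_of_subset hAU, union_eq_left.mpr (hSA.trans hAU)]
      · rw [card_union_of_disjoint hdisj, card_sdiff_of_subset hAU, hS]
        omega
    · rintro ⟨A, B⟩ hp
      simp only [coe_filter, mem_univ, true_and, Set.mem_ofPred_eq] at hp
      obtain ⟨rfl, -⟩ := hp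
      refine Prod.ext rfl ?_
      ext x
      simp only [mem_union, mem_sdiff, mem_inter]
      tauto
    · rintro ⟨A, S⟩ hq
      simp only [coe_sigma, Set.mem_sigma_iff, mem_coe, mem_powersetCard] at hq
      have hSA := hq.2.1
      simp only [Sigma.mk.injEq, heq_eq_eq, true_and]
      ext x
      simp only [mem_union, mem_sdiff, mem_inter]
      have := @hSA x
      tauto
  rw [hbij, card_sigma, sum_const_nat fun A hA => by
    rw [card_powersetCard, (mem_powersetCard.mp hA).2], card_powersetCard]

theorem card_pairs_card_union_eq (a b m : ℕ) (h : m ≤ a + b) :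
    #{p : Finset α × Finset α | #p.1 = a ∧ #p.2 = b ∧ #(p.1 ∪ p.2) = m} =
      (Fintype.card α).choose m * m.choose a * a.choose (a + b - m) := by
  rw [card_eq_sum_card_fiberwise (f := fun p => p.1 ∪ p.2) (t := powersetCard m univ)
      fun p hp => by simp_all, sum_const_nat (m := m.choose a * a.choose (a + b - m))
      fun U hU => ?_, card_powersetCard, card_univ, mul_assoc]
  rw [mem_powersetCard_univ] at hU
  rw [filter_filter, ← hU, ← card_pairs_union_eq U (hU ▸ h)]
  congr 1
  ext p
  simp only [mem_filter, mem_univ, true_and]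
  constructor
  · tauto
  · rintro ⟨hpU, ha, hb⟩
    exact ⟨⟨ha, hb, hpU ▸ rfl⟩, hpU⟩

end PairCounting

theorem Multiset.pair_eq_pair_iff {β : Type*} {x y z w : β} :
    ({x, y} : Multiset β) = {z, w} ↔ x = z ∧ y = w ∨ x = w ∧ y = z := by
  change (([x, y] : List β) : Multiset β) = [z, w] ↔ _
  rw [Multiset.coe_eq_coe, List.pair_perm]
  simp only [List.cons.injEq, and_true]
  tauto

theorem Finset.pair_eq_pair_iff {β : Type*} [DecidableEq β] {x y z w : β} :
    ({x, y} : Finset β) = {z, w} ↔ x = z ∧ y = w ∨ x = w ∧ y = z := by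
  rw [← coe_inj, coe_pair, coe_pair, Set.pair_eq_pair_iff]

theorem Finset.map_val_pair {β γ : Type*} [DecidableEq β] {x y : β} (h : x ≠ y) (f : β → γ) :
    ({x, y} : Finset β).val.map f = {f x, f y} := by
  rw [insert_val_of_notMem (by simpa using h)]
  rfl

section UnorderedPairs

variable {β : Type*} [DecidableEq β]

theorem injOn_pair_of_disjoint {P Q : β → Prop} (hPQ : ∀ x, P x → ¬Q x) :
    Set.InjOn (fun p : β × β => ({p.1, p.2} : Finset β)) {p | P p.1 ∧ Q p.2} := by
  rintro ⟨x, y⟩ ⟨hx, hy⟩ ⟨z, w⟩ ⟨hz, hw⟩ h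
  rcases Finset.pair_eq_pair_iff.mp h with ⟨rfl, rfl⟩ | ⟨rfl, rfl⟩
  · rfl
  · exact absurd hy (hPQ _ hz)

theorem two_mul_card_image_pair (s : Finset (β × β)) (hdiag : ∀ p ∈ s, p.1 ≠ p.2)
    (hswap : ∀ p ∈ s, p.swap ∈ s) :
    2 * #(s.image fun p => ({p.1, p.2} : Finset β)) = #s := by
  rw [card_eq_sum_card_fiberwise (f := fun p : β × β => ({p.1, p.2} : Finset β))
      fun p hp => mem_image_of_mem _ hp,
    sum_const_nat (m := 2) fun T hT => ?_, mul_comm]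
  obtain ⟨⟨x, y⟩, hxy, rfl⟩ := mem_image.mp hT
  have hfiber : {p ∈ s | ({p.1, p.2} : Finset β) = {x, y}} = {(x, y), (y, x)} := by
    ext ⟨u, v⟩
    simp only [mem_filter, mem_insert, mem_singleton, Prod.mk.injEq, Finset.pair_eq_pair_iff]
    constructor
    · exact fun h => h.2
    · rintro (⟨rfl, rfl⟩ | ⟨rfl, rfl⟩)
      · exact ⟨hxy, Or.inl ⟨rfl, rfl⟩⟩
      · exact ⟨hswap _ hxy, Or.inr ⟨rfl, rfl⟩⟩
  have hne : x ≠ y := hdiag _ hxy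
  rw [hfiber, card_pair (by simp [hne])]

end UnorderedPairs

section TwoMemberCollections

variable {α : Type*} [DecidableEq α] [Fintype α]

theorem DL_pair_s18 {A B : Finset α} (hAB : A ≠ B) (d : ℕ) :
    DL d {A, B} = #(A ∪ B) - ((d : ℤ) + 1) := by
  have := card_inter_add_card_union A B
  rw [DL, sum_pair hAB, inf_insert, inf_singleton, inf_eq_inter]
  simp only [id]
  omega

theorem mem_LLower_pair_iff {n d : ℕ} {A B : Finset (Fin n)} (hAB : A ≠ B) :
    {A, B} ∈ LLower n d ↔ #A ≤ d ∧ #B ≤ d ∧ d + 1 < #(A ∪ B) := by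
  have hcard : #({A, B} : Finset (Finset (Fin n))) = 2 := card_pair hAB
  have hsub : ∀ T' ⊆ ({A, B} : Finset (Finset (Fin n))), 1 < #T' → T' = {A, B} :=
    fun T' hT' h => eq_of_subset_of_card_le hT' (by omega)
  simp only [LLower, Set.mem_ofPred_eq, mem_insert, mem_singleton, forall_eq_or_imp, forall_eq]
  constructor
  · rintro ⟨⟨hA, hB⟩, hD⟩
    have := DL_pair_s18 hAB d ▸ hD _ subset_rfl (by omega)
    exact ⟨hA, hB, by omega⟩
  · rintro ⟨hA, hB, hU⟩
    refine ⟨⟨hA, hB⟩, fun T' hT' h => ?_⟩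
    rw [hsub T' hT' h, DL_pair_s18 hAB]
    omega

end TwoMemberCollections

section PairsOfType

-- Sizes are written as `#A + γ = d + 1` to avoid truncated subtraction; by `DL_pair`, the last
-- condition says `D_d({A, B}) > 0`.
def pairsOfType (α : Type*) [DecidableEq α] [Fintype α] (d γ1 γ2 : ℕ) :
    Finset (Finset α × Finset α) :=
  {p | #p.1 + γ1 = d + 1 ∧ #p.2 + γ2 = d + 1 ∧ d + 1 < #(p.1 ∪ p.2)}

variable {α : Type*} [DecidableEq α] [Fintype α]

theorem mem_pairsOfType {d γ1 γ2 : ℕ} {p : Finset α × Finset α} :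
    p ∈ pairsOfType α d γ1 γ2 ↔ #p.1 + γ1 = d + 1 ∧ #p.2 + γ2 = d + 1 ∧ d + 1 < #(p.1 ∪ p.2) := by
  simp only [pairsOfType, mem_filter, mem_univ, true_and]

theorem fst_ne_snd_of_mem_pairsOfType {d γ1 γ2 : ℕ} {p : Finset α × Finset α}
    (hp : p ∈ pairsOfType α d γ1 γ2) : p.1 ≠ p.2 := by
  intro h
  rw [mem_pairsOfType, h, union_self] at hp
  omega

theorem swap_mem_pairsOfType {d γ1 γ2 : ℕ} {p : Finset α × Finset α}
    (hp : p ∈ pairsOfType α d γ1 γ2) : p.swap ∈ pairsOfType α d γ2 γ1 := by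
  rw [mem_pairsOfType] at hp ⊢
  exact ⟨hp.2.1, hp.1, union_comm p.1 p.2 ▸ hp.2.2⟩

theorem card_pairsOfType (d γ1 γ2 : ℕ) :
    #(pairsOfType α d γ1 γ2) = ∑ j ∈ Icc 1 (d + 1 - γ1 - γ2),
      (d + 1 + j).choose (γ1 + j) * (d + 1 - γ1).choose (γ2 + j) *
        (Fintype.card α).choose (d + 1 + j) := by
  rw [pairsOfType, card_eq_sum_card_fiberwise (f := fun p => #(p.1 ∪ p.2) - (d + 1))
    (t := Icc 1 (d + 1 - γ1 - γ2)) fun p hp => ?_]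
  · refine sum_congr rfl fun j hj => ?_
    rw [mem_Icc] at hj
    have hfiber : ∀ p : Finset α × Finset α,
        ((#p.1 + γ1 = d + 1 ∧ #p.2 + γ2 = d + 1 ∧ d + 1 < #(p.1 ∪ p.2)) ∧
          #(p.1 ∪ p.2) - (d + 1) = j) ↔
        (#p.1 = d + 1 - γ1 ∧ #p.2 = d + 1 - γ2 ∧ #(p.1 ∪ p.2) = d + 1 + j) := by
      intro p
      omega
    rw [filter_filter]
    simp_rw [hfiber]
    rw [card_pairs_card_union_eq _ _ _ (by omega),
      Nat.choose_symm_of_eq_add (n := d + 1 + j) (b := γ1 + j) (by omega),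
      Nat.choose_symm_of_eq_add (n := d + 1 - γ1) (b := γ2 + j) (by omega)]
    ring
  · simp only [coe_filter, mem_univ, true_and, Set.mem_ofPred_eq] at hp
    have := card_union_le p.1 p.2
    simp only [coe_Icc, Set.mem_Icc]
    omega

end PairsOfType

theorem setOf_type_eq_image_pairsOfType {n d γ1 γ2 : ℕ} (hγ1 : 1 ≤ γ1) (hγ2 : 1 ≤ γ2) :
    {T | T ∈ LLower n d ∧ T.card = 2 ∧
        Multiset.map (fun X => d + 1 - X.card) T.val = ({γ1, γ2} : Multiset ℕ)} =
      ↑((pairsOfType (Fin n) d γ1 γ2).image fun p => ({p.1, p.2} : Finset (Finset (Fin n)))) := by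
  ext T
  simp only [Set.mem_ofPred_eq, coe_image, Set.mem_image, mem_coe]
  constructor
  · rintro ⟨hL, hcard, htype⟩
    obtain ⟨A, B, hAB, rfl⟩ := card_eq_two.mp hcard
    rw [mem_LLower_pair_iff hAB] at hL
    rw [Finset.map_val_pair hAB, Multiset.pair_eq_pair_iff] at htype
    have hmem : (A, B) ∈ pairsOfType (Fin n) d γ1 γ2 ∨ (A, B) ∈ pairsOfType (Fin n) d γ2 γ1 := by
      simp only [mem_pairsOfType]
      omega
    rcases hmem with hmem | hmem
    · exact ⟨(A, B), hmem, rfl⟩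
    · exact ⟨(B, A), swap_mem_pairsOfType hmem, pair_comm B A⟩
  · rintro ⟨⟨A, B⟩, hp, rfl⟩
    have hAB : A ≠ B := fst_ne_snd_of_mem_pairsOfType hp
    simp only [mem_pairsOfType] at hp
    refine ⟨(mem_LLower_pair_iff hAB).mpr ⟨by omega, by omega, hp.2.2⟩, card_pair hAB, ?_⟩
    rw [Finset.map_val_pair hAB, Multiset.pair_eq_pair_iff]
    omega

theorem stmt18_general (n d γ1 γ2 : ℕ) (h2 : 1 ≤ γ2) :
    (γ2 < γ1 →
      {T | T ∈ LLower n d ∧ T.card = 2 ∧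
          Multiset.map (fun X => d + 1 - X.card) T.val = ({γ1, γ2} : Multiset ℕ)}.ncard =
        ∑ j ∈ Finset.Icc 1 (d + 1 - γ1 - γ2),
          (d + 1 + j).choose (γ1 + j) * (d + 1 - γ1).choose (γ2 + j) *
            n.choose (d + 1 + j)) ∧
    (γ1 = γ2 →
      2 * {T | T ∈ LLower n d ∧ T.card = 2 ∧
          Multiset.map (fun X => d + 1 - X.card) T.val = ({γ1, γ2} : Multiset ℕ)}.ncard =
        ∑ j ∈ Finset.Icc 1 (d + 1 - γ1 - γ2),
          (d + 1 + j).choose (γ1 + j) * (d + 1 - γ1).choose (γ2 + j) *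
            n.choose (d + 1 + j)) := by
  have hcount := card_pairsOfType (α := Fin n) d γ1 γ2
  rw [Fintype.card_fin] at hcount
  rw [← hcount]
  refine ⟨fun hlt => ?_, fun heq => ?_⟩
  · rw [setOf_type_eq_image_pairsOfType (by omega) h2, Set.ncard_coe_finset, card_image_of_injOn]
    exact (injOn_pair_of_disjoint (P := fun X => #X + γ1 = d + 1) (Q := fun X => #X + γ2 = d + 1)
      fun X hA hB => by omega).mono fun p hp => (mem_pairsOfType.mp hp).imp_right And.left
  · subst heq
    rw [setOf_type_eq_image_pairsOfType h2 h2, Set.ncard_coe_finset]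
    exact two_mul_card_image_pair _ (fun p => fst_ne_snd_of_mem_pairsOfType)
      fun p => swap_mem_pairsOfType

/-- For a partition `γ = (γ₁,γ₂)` with `γ₁ ≥ γ₂ ≥ 1` and `γ₁ + γ₂ ≤ d`, the number
`λ_{n,d}((γ₁,γ₂))` of two-member elements of `L_{n,d}` of type `(γ₁,γ₂)` equals
`Σ_{j'=1}^{d+1-γ₁-γ₂} C(d+1+j',γ₁+j')·C(d+1-γ₁,γ₂+j')·C(n,d+1+j')` if `γ₁ > γ₂`,
and half of that sum if `γ₁ = γ₂`. -/
theorem stmt18 (n d γ1 γ2 : ℕ) (h2 : 1 ≤ γ2) (h12 : γ2 ≤ γ1) (hsum : γ1 + γ2 ≤ d) :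
    (γ2 < γ1 →
      {T | T ∈ LLower n d ∧ T.card = 2 ∧
          Multiset.map (fun X => d + 1 - X.card) T.val = ({γ1, γ2} : Multiset ℕ)}.ncard =
        ∑ j ∈ Finset.Icc 1 (d + 1 - γ1 - γ2),
          (d + 1 + j).choose (γ1 + j) * (d + 1 - γ1).choose (γ2 + j) *
            n.choose (d + 1 + j)) ∧
    (γ1 = γ2 →
      2 * {T | T ∈ LLower n d ∧ T.card = 2 ∧
          Multiset.map (fun X => d + 1 - X.card) T.val = ({γ1, γ2} : Multiset ℕ)}.ncard =
        ∑ j ∈ Finset.Icc 1 (d + 1 - γ1 - γ2),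
          (d + 1 + j).choose (γ1 + j) * (d + 1 - γ1).choose (γ2 + j) *
            n.choose (d + 1 + j)) :=
  stmt18_general n d γ1 γ2 h2
end

section
/- For a partition γ = (γ_1,...,γ_l) of a positive integer, λ_{n,d}(γ) = (1/Π_s m_s(γ)!) · Σ_j c(j,d;γ) · C(n,j), where c(j,d;γ) is the number of ordered tuples (T_1,...,T_l) of distinct subsets of [j] with codim_d(T_i) = γ_i for each i, D_d(T') > 0 for every subcollection T' of size > 1, and ⋃_i T_i = [j]. In particular c(j,d;γ) does not depend on n. -/
open Finset Function


private lemma key_aux {l : ℕ} {γ : Fin l → ℕ} {S : Finset ℕ} {B : ℕ → Type*} {C : Type*}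
    (hγS : ∀ i, γ i ∈ S) (F : (s : ↥S) → ({i : Fin l // γ i = (s : ℕ)} → B (s : ℕ)))
    (G : (s : ℕ) → B s → C) (k : Fin l) (s : ↥S) (hk : γ k = (s : ℕ)) :
    G _ (F s ⟨k, hk⟩) = G _ (F ⟨γ k, hγS k⟩ ⟨k, rfl⟩) := by
  obtain ⟨s, hs⟩ := s
  dsimp at hk ⊢
  subst hk
  rfl

lemma count_orderings {α : Type*} [DecidableEq α] [Fintype α] {d l : ℕ} (γ : Fin l → ℕ)
    (T : Finset (Finset α))
    (h : Multiset.map (fun X : Finset α => d + 1 - X.card) T.val = (↑(List.ofFn γ) : Multiset ℕ)) :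
    Nat.card {v : Fin l → Finset α // Injective v ∧ (∀ i, d + 1 - (v i).card = γ i) ∧
        Finset.univ.image v = T} =
      ∏ s ∈ (↑(List.ofFn γ) : Multiset ℕ).toFinset,
        (Multiset.count s (↑(List.ofFn γ) : Multiset ℕ)).factorial := by
  classical
  set f : Finset α → ℕ := fun X => d + 1 - X.card with hf
  set ms : Multiset ℕ := (↑(List.ofFn γ) : Multiset ℕ) with hms
  have hmsu : ms = Multiset.map γ Finset.univ.val := by rw [hms, List.ofFn_eq_map]; rfl
  set S := ms.toFinset with hS
  have hγS : ∀ i, γ i ∈ S := by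
    intro i; rw [hS, Multiset.mem_toFinset, hmsu]
    exact Multiset.mem_map_of_mem _ (Finset.mem_univ i)
  have hTS : ∀ X ∈ T, f X ∈ S := by
    intro X hX; rw [hS, Multiset.mem_toFinset, ← h]
    exact Multiset.mem_map_of_mem _ hX
  have hTcard : T.card = l := by
    have := congrArg Multiset.card h
    simpa [hms] using this
  let E : {v : Fin l → Finset α // Injective v ∧ (∀ i, f (v i) = γ i) ∧ Finset.univ.image v = T}
      ≃ ∀ s : S, ({i : Fin l // γ i = (s : ℕ)} ↪ {X : Finset α // X ∈ T ∧ f X = (s : ℕ)}) :=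
  { toFun := fun v s =>
      ⟨fun j => ⟨v.1 j.1, by
          have : v.1 j.1 ∈ Finset.univ.image v.1 :=
            Finset.mem_image_of_mem _ (Finset.mem_univ _)
          rwa [v.2.2.2] at this, by
          rw [v.2.2.1 j.1, j.2]⟩,
        by
          intro j j' hjj'
          have : v.1 j.1 = v.1 j'.1 := congrArg Subtype.val hjj'
          exact Subtype.ext (v.2.1 this)⟩
    invFun := fun F =>
      ⟨fun i => (F ⟨γ i, hγS i⟩ ⟨i, rfl⟩).1, by
        have key : ∀ (k : Fin l) (s : S) (hk : γ k = (s : ℕ)),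
            (F s ⟨k, hk⟩).1 = (F ⟨γ k, hγS k⟩ ⟨k, rfl⟩).1 :=
          key_aux (B := fun s => {X : Finset α // X ∈ T ∧ f X = s}) (C := Finset α)
            hγS (fun s => ⇑(F s)) (fun _ X => X.1)
        refine ⟨?_, fun i => (F ⟨γ i, hγS i⟩ ⟨i, rfl⟩).2.2, ?_⟩
        · intro i i' hii'
          simp only at hii'
          have h1 : f ((F ⟨γ i, hγS i⟩ ⟨i, rfl⟩).1) = γ i := (F ⟨γ i, hγS i⟩ ⟨i, rfl⟩).2.2
          have h2 : f ((F ⟨γ i', hγS i'⟩ ⟨i', rfl⟩).1) = γ i' := (F ⟨γ i', hγS i'⟩ ⟨i', rfl⟩).2.2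
          have hgg : γ i = γ i' := by rw [← h1, ← h2, hii']
          have hkey := key i' ⟨γ i, hγS i⟩ hgg.symm
          have : (F ⟨γ i, hγS i⟩) ⟨i', hgg.symm⟩ = (F ⟨γ i, hγS i⟩) ⟨i, rfl⟩ := by
            apply Subtype.ext
            rw [hkey, ← hii']
          have := (F ⟨γ i, hγS i⟩).injective this
          exact (congrArg Subtype.val this).symm
        · apply Finset.eq_of_subset_of_card_le
          · intro X hX
            simp only [Finset.mem_image] at hX
            obtain ⟨i, _, rfl⟩ := hX
            exact (F ⟨γ i, hγS i⟩ ⟨i, rfl⟩).2.1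
          · rw [hTcard]
            have hinj : Injective (fun i => (F ⟨γ i, hγS i⟩ ⟨i, rfl⟩).1) := by
              intro i i' hii'
              simp only at hii'
              have h1 : f ((F ⟨γ i, hγS i⟩ ⟨i, rfl⟩).1) = γ i := (F ⟨γ i, hγS i⟩ ⟨i, rfl⟩).2.2
              have h2 : f ((F ⟨γ i', hγS i'⟩ ⟨i', rfl⟩).1) = γ i' := (F ⟨γ i', hγS i'⟩ ⟨i', rfl⟩).2.2
              have hgg : γ i = γ i' := by rw [← h1, ← h2, hii']
              have hkey := key i' ⟨γ i, hγS i⟩ hgg.symm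
              have : (F ⟨γ i, hγS i⟩) ⟨i', hgg.symm⟩ = (F ⟨γ i, hγS i⟩) ⟨i, rfl⟩ := by
                apply Subtype.ext
                rw [hkey, ← hii']
              have := (F ⟨γ i, hγS i⟩).injective this
              exact (congrArg Subtype.val this).symm
            exact le_of_eq (by simpa using (Finset.card_image_of_injective Finset.univ hinj).symm)⟩
    left_inv := fun v => Subtype.ext (funext fun i => rfl)
    right_inv := by
      intro F
      have key : ∀ (k : Fin l) (s : S) (hk : γ k = (s : ℕ)),
          (F s ⟨k, hk⟩).1 = (F ⟨γ k, hγS k⟩ ⟨k, rfl⟩).1 :=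
        key_aux (B := fun s => {X : Finset α // X ∈ T ∧ f X = s}) (C := Finset α)
            hγS (fun s => ⇑(F s)) (fun _ X => X.1)
      funext s
      apply Function.Embedding.ext
      intro j
      apply Subtype.ext
      exact (key j.1 s j.2).symm }
  have cardA : ∀ s : ℕ, Fintype.card {i : Fin l // γ i = s} = Multiset.count s ms := by
    intro s
    rw [Fintype.card_subtype, hmsu, Multiset.count_map]
    simp [Finset.card, Finset.filter, eq_comm]
  have cardB : ∀ s : ℕ, Fintype.card {X : Finset α // X ∈ T ∧ f X = s} = Multiset.count s ms := by
    intro s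
    rw [Fintype.card_subtype, ← h, Multiset.count_map]
    have : Finset.univ.filter (fun X => X ∈ T ∧ f X = s) = T.filter (fun X => s = f X) := by
      ext X; simp [eq_comm]
    rw [this]
    simp [Finset.card, Finset.filter]
  rw [Nat.card_eq_fintype_card, Fintype.card_congr E, Fintype.card_pi]
  rw [← Finset.prod_coe_sort S]
  apply Finset.prod_congr rfl
  intro s _
  rw [Fintype.card_embedding_eq, cardA, cardB, Nat.descFactorial_self]



lemma map_sup_comm {ι' β α : Type*} [DecidableEq α] [DecidableEq β] (ι : β ↪ α)
    (s : Finset ι') (v : ι' → Finset β) :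
    s.sup (fun i => (v i).map ι) = (s.sup v).map ι := by
  ext a
  simp only [Finset.mem_sup, Finset.mem_map]
  tauto

lemma inf_image_map {α β : Type*} [DecidableEq α] [DecidableEq β] [Fintype α] [Fintype β]
    (ι : β ↪ α) (T : Finset (Finset β)) (hT : T.Nonempty) :
    (T.image (fun X => X.map ι)).inf id = (T.inf id).map ι := by
  induction hT using Finset.Nonempty.cons_induction with
  | singleton X => simp
  | cons X T hX hT ih =>
      rw [Finset.cons_eq_insert, Finset.image_insert, Finset.inf_insert, Finset.inf_insert, ih]
      simp only [id]
      rw [Finset.inf_eq_inter, Finset.inf_eq_inter, Finset.map_inter]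

lemma DL_image_map {α β : Type*} [DecidableEq α] [DecidableEq β] [Fintype α] [Fintype β]
    (d : ℕ) (ι : β ↪ α) (T : Finset (Finset β)) (hT : T.Nonempty) :
    DL d (T.image (fun X => X.map ι)) = DL d T := by
  unfold DL
  rw [inf_image_map ι T hT, Finset.card_map]
  congr 1
  rw [Finset.sum_image (fun X _ Y _ hXY => Finset.map_injective ι hXY)]
  simp [Finset.card_map]

lemma fiber_card {n d l : ℕ} (γ : Fin l → ℕ) {j : ℕ} (ι : Fin j ↪ Fin n) :
    Nat.card {v : Fin l → Finset (Fin n) // Injective v ∧ (∀ i, (v i).card + γ i = d + 1) ∧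
      (∀ T' ⊆ Finset.univ.image v, 1 < T'.card → 0 < DL d T') ∧
      Finset.univ.sup v = Finset.univ.map ι}
    = Nat.card {v : Fin l → Finset (Fin j) // Injective v ∧ (∀ i, (v i).card + γ i = d + 1) ∧
      (∀ T' ⊆ Finset.univ.image v, 1 < T'.card → 0 < DL d T') ∧
      Finset.univ.sup v = Finset.univ} := by
  classical
  symm
  refine Nat.card_congr (Equiv.ofBijective
    (fun v => ⟨fun i => (v.1 i).map ι, ?_, ?_, ?_, ?_⟩) ⟨?_, ?_⟩)
  · intro i i' hii'
    exact v.2.1 (Finset.map_injective ι hii')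
  · intro i
    simp only [Finset.card_map]
    exact v.2.2.1 i
  · intro T' hT' hcard
    rcases Finset.subset_image_iff.1 hT' with ⟨t, -, rfl⟩
    have heq : t.image (fun i => (v.1 i).map ι) = (t.image v.1).image (fun X => X.map ι) := by
      rw [Finset.image_image]; rfl
    rw [heq] at hcard ⊢
    have hcard2 : 1 < (t.image v.1).card := by
      rwa [Finset.card_image_of_injective _ (Finset.map_injective ι)] at hcard
    have hne : (t.image v.1).Nonempty := Finset.card_pos.1 (by omega)
    rw [DL_image_map d ι _ hne]
    exact v.2.2.2.1 _ (Finset.image_subset_image (Finset.subset_univ t)) hcard2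
  · rw [map_sup_comm, v.2.2.2.2]
  · intro v w hvw
    apply Subtype.ext
    funext i
    have := congrFun (congrArg Subtype.val hvw) i
    exact Finset.map_injective ι this
  · intro w
    have hsub : ∀ i, w.1 i ⊆ Finset.univ.map ι := by
      intro i
      have h1 : w.1 i ⊆ Finset.univ.sup w.1 := Finset.le_sup (Finset.mem_univ i)
      rwa [w.2.2.2.2] at h1
    set u : Fin l → Finset (Fin j) := fun i => (w.1 i).preimage ι (ι.injective.injOn) with hu
    have hmap : ∀ i, (u i).map ι = w.1 i := by
      intro i
      ext a
      simp only [hu, Finset.mem_map, Finset.mem_preimage]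
      constructor
      · rintro ⟨b, hb, rfl⟩; exact hb
      · intro ha
        have := hsub i ha
        rcases Finset.mem_map.1 this with ⟨b, -, rfl⟩
        exact ⟨b, ha, rfl⟩
    have huinj : Injective u := by
      intro i i' hii'
      apply w.2.1
      rw [← hmap i, ← hmap i', hii']
    refine ⟨⟨u, huinj, ?_, ?_, ?_⟩, ?_⟩
    · intro i
      have : (u i).card = (w.1 i).card := by rw [← hmap i, Finset.card_map]
      rw [this]
      exact w.2.2.1 i
    · intro T'' hT'' hcard
      have hsubim : T''.image (fun X => X.map ι) ⊆ Finset.univ.image w.1 := by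
        intro Y hY
        rcases Finset.mem_image.1 hY with ⟨X, hX, rfl⟩
        rcases Finset.mem_image.1 (hT'' hX) with ⟨i, -, rfl⟩
        rw [hmap i]
        exact Finset.mem_image_of_mem _ (Finset.mem_univ i)
      have hne : T''.Nonempty := Finset.card_pos.1 (by omega)
      rw [← DL_image_map d ι _ hne]
      refine w.2.2.2.1 _ hsubim ?_
      rwa [Finset.card_image_of_injective _ (Finset.map_injective ι)]
    · apply Finset.map_injective ι
      rw [← map_sup_comm]
      have : (fun i => (u i).map ι) = w.1 := funext hmap
      rw [this, w.2.2.2.2]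
    · apply Subtype.ext
      funext i
      exact hmap i

private lemma card_filter_univ {α : Type*} [Fintype α] (p : α → Prop) [DecidablePred p] :
    (Finset.univ.filter p).card = Nat.card {x // p x} := by
  rw [Nat.card_eq_fintype_card]
  exact (Fintype.card_subtype p).symm

/-- `λ_{n,d}(γ) = (1/Π_s m_s(γ)!) Σ_j c(j,d;γ)·C(n,j)`, stated without division:
`λ_{n,d}(γ)·Π_s m_s(γ)!` equals the sum, where `c(j,d;γ)` is the number of ordered
tuples `(T_1,…,T_l)` of distinct subsets of `[j]` with `codim_d(T_i) = γ_i`,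
`D_d(T') > 0` for every subcollection of size `> 1`, and `⋃ᵢ Tᵢ = [j]`; in particular
`c(j,d;γ)` does not depend on `n`. -/
theorem stmt19 (n d l : ℕ) (hl : 0 < l) (γ : Fin l → ℕ) (hpos : ∀ i, 1 ≤ γ i)
    (hdec : ∀ i j : Fin l, i ≤ j → γ j ≤ γ i) :
    {T | T ∈ LLower n d ∧
        Multiset.map (fun X => d + 1 - X.card) T.val =
          (↑(List.ofFn γ) : Multiset ℕ)}.ncard *
      (∏ s ∈ (↑(List.ofFn γ) : Multiset ℕ).toFinset,
        Nat.factorial (Multiset.count s (↑(List.ofFn γ) : Multiset ℕ))) =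
    ∑ j ∈ Finset.range (n + 1),
      {v : Fin l → Finset (Fin j) |
        Function.Injective v ∧ (∀ i, (v i).card + γ i = d + 1) ∧
        (∀ T' ⊆ Finset.univ.image v, 1 < T'.card → 0 < DL d T') ∧
        Finset.univ.sup v = Finset.univ}.ncard * n.choose j := by
  classical
  set ms : Multiset ℕ := (↑(List.ofFn γ) : Multiset ℕ) with hms
  have hmsu : ms = Multiset.map γ Finset.univ.val := by rw [hms, List.ofFn_eq_map]; rfl
  set P : (Fin l → Finset (Fin n)) → Prop := fun v =>
    Injective v ∧ (∀ i, (v i).card + γ i = d + 1) ∧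
    ∀ T' ⊆ Finset.univ.image v, 1 < T'.card → 0 < DL d T' with hP
  set Cfin : Finset (Fin l → Finset (Fin n)) := Finset.univ.filter P with hC
  set Afin : Finset (Finset (Finset (Fin n))) :=
    Finset.univ.filter (fun T => T ∈ LLower n d ∧
      Multiset.map (fun X => d + 1 - X.card) T.val = ms) with hA
  -- R j
  set R : ℕ → ℕ := fun j => Nat.card {v : Fin l → Finset (Fin j) //
      Injective v ∧ (∀ i, (v i).card + γ i = d + 1) ∧
      (∀ T' ⊆ Finset.univ.image v, 1 < T'.card → 0 < DL d T') ∧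
      Finset.univ.sup v = Finset.univ} with hR
  -- LHS ncard as finset card
  have hLHS : {T | T ∈ LLower n d ∧
      Multiset.map (fun X => d + 1 - X.card) T.val = ms}.ncard = Afin.card := by
    rw [← Set.ncard_coe_finset Afin]
    congr 1
    ext T
    simp [hA]
  -- Step A
  have hmaps : ∀ v ∈ Cfin, Finset.univ.image v ∈ Afin := by
    intro v hv
    rw [hC, Finset.mem_filter] at hv
    obtain ⟨-, hinj, hcod, hDL⟩ := hv
    rw [hA, Finset.mem_filter]
    refine ⟨Finset.mem_univ _, ⟨?_, ?_⟩, ?_⟩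
    · intro X hX
      rcases Finset.mem_image.1 hX with ⟨i, -, rfl⟩
      have := hcod i
      have := hpos i
      omega
    · exact hDL
    · have hval : (Finset.univ.image v).val = Multiset.map v Finset.univ.val := by
        rw [Finset.image_val, Multiset.dedup_eq_self.2]
        exact Finset.univ.nodup.map hinj
      rw [hval, Multiset.map_map, hmsu]
      apply Multiset.map_congr rfl
      intro i _
      have := hcod i
      have := hpos i
      simp only [comp_apply]
      omega
  have hinner : ∀ T ∈ Afin, (Cfin.filter fun v => Finset.univ.image v = T).card =
      ∏ s ∈ ms.toFinset, (Multiset.count s ms).factorial := by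
    intro T hT
    rw [hA, Finset.mem_filter] at hT
    obtain ⟨-, hTL, htype⟩ := hT
    have hfil : Cfin.filter (fun v => Finset.univ.image v = T) =
        Finset.univ.filter (fun v : Fin l → Finset (Fin n) =>
          Injective v ∧ (∀ i, d + 1 - (v i).card = γ i) ∧ Finset.univ.image v = T) := by
      ext v
      simp only [hC, hP, Finset.mem_filter, Finset.mem_univ, true_and]
      constructor
      · rintro ⟨⟨hinj, hcod, hDL⟩, himg⟩
        refine ⟨hinj, fun i => ?_, himg⟩
        have := hcod i; omega
      · rintro ⟨hinj, hcod, himg⟩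
        refine ⟨⟨hinj, fun i => ?_, ?_⟩, himg⟩
        · have h1 := hcod i
          have h2 : v i ∈ T := himg ▸ Finset.mem_image_of_mem _ (Finset.mem_univ i)
          have h3 := hTL.1 _ h2
          have := hpos i
          omega
        · rw [himg]; exact hTL.2
    rw [hfil, card_filter_univ]
    exact count_orderings γ T htype
  have stepA : Cfin.card = Afin.card * ∏ s ∈ ms.toFinset, (Multiset.count s ms).factorial := by
    rw [Finset.card_eq_sum_card_fiberwise hmaps, Finset.sum_congr rfl hinner,
      Finset.sum_const, smul_eq_mul]
  -- Step B
  have hfib : ∀ S ∈ (Finset.univ : Finset (Fin n)).powerset,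
      (Cfin.filter fun v => Finset.univ.sup v = S).card = R S.card := by
    intro S _
    obtain ⟨ι, hι⟩ : ∃ ι : Fin S.card ↪ Fin n, Finset.univ.map ι = S := by
      refine ⟨(S.equivFin.symm.toEmbedding).trans (Function.Embedding.subtype _), ?_⟩
      rw [← Finset.map_map, Finset.map_univ_equiv, Finset.univ_eq_attach, Finset.attach_map_val]
    have key := fiber_card (n := n) (d := d) γ ι
    have h1 : Cfin.filter (fun v => Finset.univ.sup v = S) =
        Finset.univ.filter (fun v : Fin l → Finset (Fin n) =>
          Injective v ∧ (∀ i, (v i).card + γ i = d + 1) ∧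
          (∀ T' ⊆ Finset.univ.image v, 1 < T'.card → 0 < DL d T') ∧
          Finset.univ.sup v = Finset.univ.map ι) := by
      ext v
      simp only [hC, hP, Finset.mem_filter, Finset.mem_univ, true_and, hι, and_assoc]
    rw [h1, card_filter_univ]
    exact key
  have stepB : Cfin.card = ∑ j ∈ Finset.range (n + 1), n.choose j • R j := by
    rw [Finset.card_eq_sum_card_fiberwise
      (fun v _ => Finset.mem_powerset.2 (Finset.subset_univ (Finset.univ.sup v)))]
    rw [Finset.sum_congr rfl hfib]
    have := Finset.sum_powerset_apply_card (f := R) (x := (Finset.univ : Finset (Fin n)))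
    simpa using this
  have hRHS : ∀ j : ℕ, {v : Fin l → Finset (Fin j) |
      Injective v ∧ (∀ i, (v i).card + γ i = d + 1) ∧
      (∀ T' ⊆ Finset.univ.image v, 1 < T'.card → 0 < DL d T') ∧
      Finset.univ.sup v = Finset.univ}.ncard = R j :=
    fun j => (Nat.card_coe_set_eq _).symm
  rw [hLHS, ← stepA, stepB]
  apply Finset.sum_congr rfl
  intro j _
  rw [hRHS j, smul_eq_mul, Nat.mul_comm]
end
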